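/- arXiv:1308.1346 — 10 statements merged into one kernel-verified Lean document; each statement's English description precedes it below -/
import Mathlib

section
/- Let k be a finite field whose cardinality is not 2, 3 or 5, and let n = 2. Let R be a complete Noetherian local commutative ring with residue field k, and let S be an Artinian local commutative ring with residue field k. Then for every group homomorphism ρ : SL_2(R) → GL_2(S) lifting the natural representation (i.e. π_S(ρ(A)(i,j)) = π_R(A(i,j)) for all A ∈ SL_2(R) and all i,j), there exist a local ring homomorphism f : R → S with π_S ∘ f = π_R and a matrix X ∈ GL_2(S) with X ≡ I mod m_S such that ρ(A) = X · f(A) · X⁻¹ for all A ∈ SL_2(R), where f(A) denotes f applied entrywise. -/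
/-!
Pick a unit `a` of `R` whose residue `x` satisfies `x⁴ ≠ 1`; it exists because `#k - 1` does
not divide `4`. The image of `diag(a, a⁻¹)` reduces to `diag(x, x⁻¹)`, which has distinct
eigenvalues, so lifting the idempotent `diag(1, 0)` through the nilpotent ideal `m_S`
diagonalises it by a matrix `X ≡ 1`. After conjugating by `X` the whole torus acts diagonally,
and since conjugation by `diag(a, a⁻¹)` scales the two off-diagonal entries by different
weights, the images of the upper unipotents are `(1, q(r); 0, 1)` with `q` additive. The Weyl
element is then antidiagonal, say `(0, w; w', 0)`, and the Steinberg relation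
`u(c) l(-c⁻¹) u(c) = diag(c, c⁻¹) · weyl` shows that `f = w⁻¹ q` is multiplicative on units.
Every element of `R` is a sum of two units (`#k > 2`), so `f` is a ring homomorphism, and after
a last conjugation by `diag(1, w⁻¹)` the representation agrees with `f` on the elementary
matrices, which generate `SL₂` of a local ring.
-/

open Matrix IsLocalRing
open scoped MatrixGroups

local notation "M₂" => Matrix (Fin 2) (Fin 2)

section LocalRing

variable {A k : Type*} [CommRing A] [IsLocalRing A] [Field k] {π : A →+* k}

theorem isLocalHom_of_ker_eq_maximalIdeal (hker : RingHom.ker π = maximalIdeal A) :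
    IsLocalHom π :=
  ⟨fun _ ha => by_contra fun h => ha.ne_zero (RingHom.mem_ker.1 (hker ▸ h))⟩

theorem isUnit_of_map_ne_zero (hker : RingHom.ker π = maximalIdeal A) {a : A} (ha : π a ≠ 0) :
    IsUnit a :=
  have := isLocalHom_of_ker_eq_maximalIdeal hker
  isUnit_of_map_unit π a ha.isUnit

theorem exists_units_add_eq [Fintype k] (hk : 2 < Fintype.card k) (hπ : Function.Surjective π)
    (hker : RingHom.ker π = maximalIdeal A) (r : A) : ∃ u v : Aˣ, (u : A) + v = r := by
  classical
  obtain ⟨y, -, hy⟩ := Finset.exists_mem_notMem_of_card_lt_card (s := {0, π r})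
    (t := Finset.univ) (Finset.card_le_two.trans_lt hk)
  obtain ⟨s, rfl⟩ := hπ y
  simp only [Finset.mem_insert, Finset.mem_singleton, not_or] at hy
  obtain ⟨u, rfl⟩ := isUnit_of_map_ne_zero hker hy.1
  obtain ⟨v, hv⟩ := isUnit_of_map_ne_zero hker (a := r - u) (by
    rw [map_sub, sub_ne_zero]; exact Ne.symm hy.2)
  exact ⟨u, v, by rw [hv, add_sub_cancel]⟩

end LocalRing

theorem FiniteField.exists_pow_four_ne_one {K : Type*} [Field K] [Fintype K]
    (h2 : Fintype.card K ≠ 2) (h3 : Fintype.card K ≠ 3) (h5 : Fintype.card K ≠ 5) :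
    ∃ x : Kˣ, x ^ 4 ≠ 1 := by
  by_contra! h
  have hdvd := (FiniteField.forall_pow_eq_one_iff K 4).1 h
  have hle := Nat.le_of_dvd (by norm_num) hdvd
  have hlt : 1 < Fintype.card K := Fintype.one_lt_card
  have hle' : Fintype.card K ≤ 5 := by omega
  interval_cases Fintype.card K <;> simp_all

theorem sq_ne_sq_of_pow_four_ne_one {K : Type*} [CommRing K] {x y : K} (hxy : x * y = 1)
    (hx : x ^ 4 ≠ 1) : x ^ 2 ≠ y ^ 2 :=
  fun h => hx (by linear_combination x ^ 2 * h + (x * y + 1) * hxy)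

theorem eq_one_of_map_add_of_map_mul_eq {R M : Type*} [Ring R] [Monoid M] {χ : R → M}
    (hχ_add : ∀ r s, χ (r + s) = χ r * χ s) (hχ_zero : χ 0 = 1) {c : R}
    (hc : IsUnit (c - 1)) (hχ_c : ∀ r, χ (c * r) = χ r) (r : R) : χ r = 1 := by
  have key (s : R) : χ ((c - 1) * s) = 1 := by
    have hs : IsUnit (χ s) := ⟨⟨χ s, χ (-s), by rw [← hχ_add, add_neg_cancel, hχ_zero],
      by rw [← hχ_add, neg_add_cancel, hχ_zero]⟩, rfl⟩
    rw [← hs.mul_left_inj, ← hχ_add, sub_mul, one_mul, sub_add_cancel, hχ_c, one_mul]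
  obtain ⟨u, hu⟩ := hc
  simpa [← hu] using key (↑u⁻¹ * r)

theorem AddMonoidHom.map_mul_of_map_units_mul {R S : Type*} [Ring R]
    [NonUnitalNonAssocSemiring S] (g : R →+ S) (hR : ∀ r : R, ∃ u v : Rˣ, (u : R) + v = r)
    (hg : ∀ u v : Rˣ, g (u * v) = g u * g v) (r s : R) : g (r * s) = g r * g s := by
  have hunit (u : Rˣ) (s : R) : g (u * s) = g u * g s := by
    obtain ⟨v, w, rfl⟩ := hR s
    rw [mul_add, map_add, map_add, hg, hg, mul_add]
  obtain ⟨u, v, rfl⟩ := hR r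
  rw [add_mul, map_add, map_add, hunit, hunit, add_mul]

theorem Matrix.apply_eq_zero_of_diagonal_mul_eq {n S : Type*} [Fintype n] [DecidableEq n]
    [CommRing S] {M : Matrix n n S} {d e : n → S} (h : diagonal d * M = M * diagonal e)
    {i j : n} (hij : IsUnit (d i - e j)) : M i j = 0 := by
  have hij' := congr_fun₂ h i j
  simp only [diagonal_mul, mul_diagonal] at hij'
  exact hij.mul_right_eq_zero.1 (by rw [sub_mul, hij', mul_comm, sub_self])

section Artinian

variable {S k : Type*} [CommRing S] [IsLocalRing S] [Field k] {π : S →+* k}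
  {n : Type*} [Fintype n] [DecidableEq n]

theorem Matrix.isUnit_of_mapMatrix_eq_one (hker : RingHom.ker π = maximalIdeal S)
    {X : Matrix n n S} (hX : π.mapMatrix X = 1) : IsUnit X :=
  (isUnit_iff_isUnit_det X).2 <| isUnit_of_map_ne_zero hker <| by simp [RingHom.map_det, hX]

theorem Matrix.isNilpotent_of_mapMatrix_eq_zero [IsArtinianRing S]
    (hker : RingHom.ker π = maximalIdeal S) {M : Matrix n n S} (hM : π.mapMatrix M = 0) :
    IsNilpotent M := by
  have hJ : M ∈ (⊥ : Ideal (Matrix n n S)).jacobson := by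
    rw [← Ideal.matrix_bot n]
    refine Ideal.matrix_jacobson_le _ ((Ideal.mem_matrix _ _ _).2 fun i j => ?_)
    rw [jacobson_eq_maximalIdeal ⊥ bot_ne_top, ← hker, RingHom.mem_ker]
    exact congr_fun₂ hM i j
  obtain ⟨N, hN⟩ := IsArtinianRing.isNilpotent_jacobson_bot (R := Matrix n n S)
  exact ⟨N, by simpa [hN] using Ideal.pow_mem_pow hJ N⟩

theorem Matrix.exists_isIdempotentElem_commute_of_mapMatrix [IsArtinianRing S]
    (hker : RingHom.ker π = maximalIdeal S) {T e₀ : Matrix n n S} (hcomm : Commute e₀ T)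
    (he₀ : IsIdempotentElem (π.mapMatrix e₀)) :
    ∃ e, IsIdempotentElem e ∧ Commute e T ∧ π.mapMatrix e = π.mapMatrix e₀ := by
  let C := Subring.centralizer {T}
  have he₀C : e₀ ∈ C := Subring.mem_centralizer_iff.2 fun _ hT => (hT ▸ hcomm).eq.symm
  obtain ⟨e, he, hfe⟩ := exists_isIdempotentElem_eq_of_ker_isNilpotent
    (π.mapMatrix.comp C.subtype)
    (fun x hx => (IsNilpotent.map_iff C.subtype_injective).1
      (isNilpotent_of_mapMatrix_eq_zero hker hx))
    _ ⟨⟨e₀, he₀C⟩, rfl⟩ he₀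
  exact ⟨e, he.map C.subtype, (Subring.mem_centralizer_iff.1 e.2 T rfl).symm, hfe⟩

theorem Matrix.exists_conj_eq_of_isIdempotentElem (hker : RingHom.ker π = maximalIdeal S)
    {e E : Matrix n n S} (he : IsIdempotentElem e) (hE : IsIdempotentElem E)
    (h : π.mapMatrix e = π.mapMatrix E) :
    ∃ X : GL n S, π.mapMatrix (X : Matrix n n S) = 1 ∧
      ((X⁻¹ : GL n S) : Matrix n n S) * e * X = E := by
  let X := e * E + (1 - e) * (1 - E)
  have hπX : π.mapMatrix X = 1 := by
    have hπE := hE.map π.mapMatrix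
    simp only [X, map_add, map_mul, map_sub, map_one, h, hπE.eq, hπE.one_sub.eq, add_sub_cancel]
  refine ⟨(isUnit_of_mapMatrix_eq_one hker hπX).unit, hπX, ?_⟩
  rw [mul_assoc, Units.inv_mul_eq_iff_eq_mul, IsUnit.unit_spec, mul_add, add_mul, ← mul_assoc,
    ← mul_assoc, he.eq, he.mul_one_sub_self, zero_mul, add_zero, mul_assoc, mul_assoc, hE.eq,
    hE.one_sub_mul_self, mul_zero, add_zero]

theorem Matrix.exists_conj_isDiag_of_mapMatrix_eq_diagonal [IsArtinianRing S]
    (hker : RingHom.ker π = maximalIdeal S) {T : M₂ S} {d : Fin 2 → k}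
    (hT : π.mapMatrix T = diagonal d) (hd : d 0 ≠ d 1) :
    ∃ X : GL (Fin 2) S, π.mapMatrix (X : M₂ S) = 1 ∧
      (((X⁻¹ : GL (Fin 2) S) : M₂ S) * T * X).IsDiag := by
  have hTπ (i j : Fin 2) : π (T i j) = diagonal d i j := congr_fun₂ hT i j
  obtain ⟨u, hu⟩ : IsUnit (T 0 0 - T 1 1) :=
    isUnit_of_map_ne_zero hker (by simpa [hTπ, sub_eq_zero] using hd)
  let e₀ := (↑u⁻¹ : S) • (T - T 1 1 • 1)
  have hcomm : Commute e₀ T :=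
    ((Commute.refl T).sub_left ((Commute.one_left T).smul_left _)).smul_left _
  let E : M₂ S := diagonal ![1, 0]
  have hE : IsIdempotentElem E := by simp [E, IsIdempotentElem, diagonal_mul_diagonal]
  have hπe₀ : π.mapMatrix e₀ = π.mapMatrix E := by
    have hπu : π u = d 0 - d 1 := by simp [hu, hTπ]
    ext i j; fin_cases i <;> fin_cases j <;> simp [e₀, E, hTπ, hπu, sub_ne_zero.2 hd]
  obtain ⟨e, he, heT, hπe⟩ :=
    exists_isIdempotentElem_commute_of_mapMatrix hker hcomm (hπe₀ ▸ hE.map π.mapMatrix)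
  obtain ⟨X, hπX, hXe⟩ := exists_conj_eq_of_isIdempotentElem hker he hE (hπe.trans hπe₀)
  refine ⟨X, hπX, fun i j hij =>
    apply_eq_zero_of_diagonal_mul_eq (d := ![1, 0]) (e := ![1, 0]) ?_ ?_⟩
  · change E * _ = _ * E
    rw [← hXe]
    simp only [mul_assoc, Units.mul_inv_cancel_left]
    rw [← mul_assoc T, ← heT.eq, mul_assoc]
  · fin_cases i <;> fin_cases j <;> simp_all

end Artinian

namespace SL2

variable {R : Type*} [CommRing R]

def upper (r : R) : SL(2, R) := ⟨!![1, r; 0, 1], by simp [det_fin_two_of]⟩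

def lower (r : R) : SL(2, R) := ⟨!![1, 0; r, 1], by simp [det_fin_two_of]⟩

def weyl : SL(2, R) := ⟨!![0, 1; -1, 0], by simp [det_fin_two_of]⟩

def torus : Rˣ →* SL(2, R) where
  toFun u := ⟨!![(u : R), 0; 0, ↑u⁻¹], by simp [det_fin_two_of]⟩
  map_one' := by ext i j; fin_cases i <;> fin_cases j <;> rfl
  map_mul' u v := by
    refine Subtype.ext (?_ : !![_, _; _, _] = !![_, _; _, _] * !![_, _; _, _])
    simp [mul_comm]

@[simp] lemma coe_upper (r : R) : (upper r : M₂ R) = !![1, r; 0, 1] := rfl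
@[simp] lemma coe_lower (r : R) : (lower r : M₂ R) = !![1, 0; r, 1] := rfl
@[simp] lemma coe_weyl : ((weyl : SL(2, R)) : M₂ R) = !![0, 1; -1, 0] := rfl
@[simp] lemma coe_torus (u : Rˣ) : (torus u : M₂ R) = !![(u : R), 0; 0, ↑u⁻¹] := rfl

lemma upper_add (r s : R) : upper (r + s) = upper r * upper s := by
  ext i j; fin_cases i <;> fin_cases j <;> simp [add_comm]

lemma upper_zero : upper (0 : R) = 1 := by
  ext i j; fin_cases i <;> fin_cases j <;> rfl

lemma torus_mul_upper (u : Rˣ) (r : R) :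
    torus u * upper r = upper ((u : R) ^ 2 * r) * torus u := by
  ext i j; fin_cases i <;> fin_cases j <;> simp
  linear_combination -(↑u * r) * u.mul_inv

lemma weyl_mul_torus (u : Rˣ) : weyl * torus u = torus u⁻¹ * weyl := by
  ext i j; fin_cases i <;> fin_cases j <;> simp

lemma lower_mul_weyl (r : R) : lower r * weyl = weyl * upper (-r) := by
  ext i j; fin_cases i <;> fin_cases j <;> simp

lemma upper_mul_lower_mul_upper (u : Rˣ) :
    upper (u : R) * lower (-(↑u⁻¹ : R)) * upper (u : R) = torus u * weyl := by
  ext i j; fin_cases i <;> fin_cases j <;> simp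

variable (R) in
def elementaryGens : Set SL(2, R) := Set.range upper ∪ Set.range lower

lemma upper_mem_closure (r : R) : upper r ∈ Subgroup.closure (elementaryGens R) :=
  Subgroup.subset_closure (.inl ⟨r, rfl⟩)

lemma lower_mem_closure (r : R) : lower r ∈ Subgroup.closure (elementaryGens R) :=
  Subgroup.subset_closure (.inr ⟨r, rfl⟩)

lemma weyl_mem_closure : weyl ∈ Subgroup.closure (elementaryGens R) := by
  have h := upper_mul_lower_mul_upper (1 : Rˣ)
  rw [map_one, one_mul, inv_one] at h
  rw [← h]
  exact mul_mem (mul_mem (upper_mem_closure _) (lower_mem_closure _)) (upper_mem_closure _)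

lemma torus_mem_closure (u : Rˣ) : torus u ∈ Subgroup.closure (elementaryGens R) := by
  rw [← mul_inv_cancel_right (torus u) weyl, ← upper_mul_lower_mul_upper]
  exact mul_mem (mul_mem (mul_mem (upper_mem_closure _) (lower_mem_closure _))
    (upper_mem_closure _)) (inv_mem weyl_mem_closure)

lemma eq_lower_mul_torus_mul_upper (A : SL(2, R)) (u : Rˣ) (hu : (u : R) = A 0 0) :
    A = lower (A 1 0 * ↑u⁻¹) * torus u * upper (↑u⁻¹ * A 0 1) := by
  have hdet : A 0 0 * A 1 1 - A 0 1 * A 1 0 = 1 := by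
    rw [← det_fin_two]; exact A.det_coe
  rw [← hu] at hdet
  ext i j
  fin_cases i <;> fin_cases j <;> simp
  · exact hu.symm
  · linear_combination ↑u⁻¹ * hdet - A 1 1 * u.inv_mul

lemma mem_closure_of_isUnit (A : SL(2, R)) (h : IsUnit (A 0 0)) :
    A ∈ Subgroup.closure (elementaryGens R) := by
  obtain ⟨u, hu⟩ := h
  rw [eq_lower_mul_torus_mul_upper A u hu]
  exact mul_mem (mul_mem (lower_mem_closure _) (torus_mem_closure u)) (upper_mem_closure _)

theorem closure_elementaryGens [IsLocalRing R] : Subgroup.closure (elementaryGens R) = ⊤ := by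
  refine eq_top_iff.2 fun A _ => ?_
  by_cases h : IsUnit (A 0 0)
  · exact mem_closure_of_isUnit A h
  have hdet : A 0 0 * A 1 1 - A 0 1 * A 1 0 = 1 := by
    rw [← det_fin_two]; exact A.det_coe
  have h10 : IsUnit (A 1 0) := by
    by_contra h10
    refine (maximalIdeal.isMaximal R).ne_top (Ideal.eq_top_of_isUnit_mem _ ?_ isUnit_one)
    rw [← hdet]
    exact sub_mem (Ideal.mul_mem_right _ _ h) (Ideal.mul_mem_left _ _ h10)
  have hB : IsUnit (((upper 1 * A : SL(2, R)) : M₂ R) 0 0) := by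
    have : ((upper 1 * A : SL(2, R)) : M₂ R) 0 0 = A 0 0 + A 1 0 := by
      simp [mul_apply, Fin.sum_univ_two]
    rw [this]
    by_contra hs
    exact (by simpa using (maximalIdeal R).sub_mem hs h : A 1 0 ∈ maximalIdeal R) h10
  rw [← inv_mul_cancel_left (upper 1) A]
  exact mul_mem (inv_mem (upper_mem_closure 1)) (mem_closure_of_isUnit _ hB)

end SL2

open SL2

theorem eq_upper_of_diagonal_mul_eq {R S : Type*} [CommRing R] [CommRing S] {U : R → M₂ S}
    (hU_add : ∀ r s, U (r + s) = U r * U s) (hU_zero : U 0 = 1) (hU_one : IsUnit (U 1 0 1))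
    {c : R} (hc : IsUnit (c - 1)) {d : Fin 2 → S} (hd₀ : IsUnit (d 0)) (hd₁ : IsUnit (d 1))
    (hd : IsUnit (d 0 ^ 2 - d 1 ^ 2)) (hconj : ∀ r, diagonal d * U r = U (c * r) * diagonal d)
    (r : R) : U r = !![1, U r 0 1; 0, 1] := by
  have hU_apply (r s : R) (i j : Fin 2) :
      U (r + s) i j = U r i 0 * U s 0 j + U r i 1 * U s 1 j := by
    rw [hU_add, mul_apply, Fin.sum_univ_two]
  have hconj_apply (r : R) (i j : Fin 2) : d i * U r i j = U (c * r) i j * d j := by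
    simpa [diagonal_mul, mul_diagonal] using congr_fun₂ (hconj r) i j
  have hsym (r s : R) : U r 0 1 * U s 1 0 = U s 0 1 * U r 1 0 := by
    linear_combination (hU_apply r s 0 0).symm.trans (add_comm r s ▸ hU_apply s r 0 0)
  -- the two off-diagonal entries have the inverse weights `d 0 / d 1` and `d 1 / d 0`
  have h₁ : U 1 1 0 = 0 := by
    refine hU_one.mul_right_eq_zero.1 (hd.mul_right_eq_zero.1 ?_)
    linear_combination (d 0 * U 1 1 0) * hconj_apply 1 0 1 + (d 0 * d 1) * hsym (c * 1) 1
      - (d 1 * U 1 0 1) * hconj_apply 1 1 0 - (d 1 * d 1) * hsym 1 1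
  have h₁₀ (r : R) : U r 1 0 = 0 :=
    hU_one.mul_right_eq_zero.1 (by simpa [h₁] using (hsym r 1).symm)
  have hdiag (i : Fin 2) (hdi : IsUnit (d i)) (r : R) : U r i i = 1 := by
    refine eq_one_of_map_add_of_map_mul_eq (χ := fun r => U r i i) (fun r s => ?_)
      (by simp [hU_zero]) hc (fun r => ?_) r
    · fin_cases i <;> simp [hU_apply, h₁₀]
    · exact (hdi.mul_right_inj.1 (by rw [hconj_apply, mul_comm])).symm
  ext i j
  fin_cases i <;> fin_cases j <;> simp [hdiag 0 hd₀, hdiag 1 hd₁, h₁₀]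

theorem eq_lower_of_mul_antidiagonal {S : Type*} [CommRing S] {L : M₂ S} {w w' : Sˣ} {x : S}
    (h : L * !![0, (w : S); (w' : S), 0] = !![0, (w : S); (w' : S), 0] * !![1, x; 0, 1]) :
    L = !![1, 0; w' * x * ↑w⁻¹, 1] := by
  have hW : !![0, (w : S); (w' : S), 0] * !![0, (↑w'⁻¹ : S); (↑w⁻¹ : S), 0] = 1 := by
    ext i j; fin_cases i <;> fin_cases j <;> simp
  calc L = L * !![0, (w : S); (w' : S), 0] * !![0, (↑w'⁻¹ : S); (↑w⁻¹ : S), 0] := by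
        rw [mul_assoc, hW, mul_one]
    _ = _ := by rw [h]; ext i j; fin_cases i <;> fin_cases j <;> simp

section NormalForm

variable {R S : Type*} [CommRing R] [CommRing S] {Φ : SL(2, R) →* M₂ S} {q : R → S}
  {w w' : Sˣ}

theorem add_of_map_upper_eq (hU : ∀ r, Φ (upper r) = !![1, q r; 0, 1]) (r s : R) :
    q (r + s) = q r + q s := by
  simpa [hU, mul_fin_two, add_comm] using congr_fun₂ (congrArg Φ (upper_add r s)) 0 1

theorem map_lower_eq (hU : ∀ r, Φ (upper r) = !![1, q r; 0, 1])
    (hW : Φ weyl = !![0, (w : S); (w' : S), 0]) (r : R) :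
    Φ (lower r) = !![1, 0; w' * q (-r) * ↑w⁻¹, 1] :=
  eq_lower_of_mul_antidiagonal (by rw [← hW, ← hU, ← map_mul, ← map_mul, lower_mul_weyl])

theorem steinberg_of_map_eq (hT : ∀ u, (Φ (torus u)).IsDiag)
    (hU : ∀ r, Φ (upper r) = !![1, q r; 0, 1]) (hW : Φ weyl = !![0, (w : S); (w' : S), 0])
    (u : Rˣ) : q u = Φ (torus u) 0 0 * w ∧ 1 + q u * (w' * q ↑u⁻¹ * ↑w⁻¹) = 0 := by
  have h := congrArg Φ (upper_mul_lower_mul_upper u)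
  rw [map_mul, map_mul, map_mul, hU, map_lower_eq hU hW, (hT u).diagonal_diag.symm,
    diagonal_fin_two, hW, neg_neg] at h
  have h00 := congr_fun₂ h 0 0
  have h01 := congr_fun₂ h 0 1
  simp at h00 h01
  exact ⟨by linear_combination h01 - q u * h00, by linear_combination h00⟩

theorem exists_ringHom_of_map_eq (hR : ∀ r : R, ∃ u v : Rˣ, (u : R) + v = r)
    (hT : ∀ u, (Φ (torus u)).IsDiag) (hU : ∀ r, Φ (upper r) = !![1, q r; 0, 1])
    (hW : Φ weyl = !![0, (w : S); (w' : S), 0]) :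
    ∃ f : R →+* S, ∀ r, f r = ↑w⁻¹ * q r := by
  have hf_units (u : Rˣ) : (↑w⁻¹ : S) * q u = Φ (torus u) 0 0 := by
    rw [(steinberg_of_map_eq hT hU hW u).1, mul_comm, mul_assoc, w.mul_inv, mul_one]
  have hτ_mul (u v : Rˣ) : Φ (torus (u * v)) 0 0 = Φ (torus u) 0 0 * Φ (torus v) 0 0 := by
    rw [map_mul, map_mul, ← (hT u).diagonal_diag, ← (hT v).diagonal_diag]
    simp
  let fₐ : R →+ S :=
    (AddMonoidHom.mulLeft (↑w⁻¹ : S)).comp (AddMonoidHom.mk' q (add_of_map_upper_eq hU))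
  refine ⟨{ fₐ with
    map_one' := by simpa [fₐ, map_one] using hf_units 1
    map_mul' := fₐ.map_mul_of_map_units_mul hR fun u v => ?_ }, fun r => rfl⟩
  simp only [fₐ, AddMonoidHom.comp_apply, AddMonoidHom.mk'_apply, AddMonoidHom.coe_mulLeft]
  rw [← Units.val_mul, hf_units, hf_units, hf_units, hτ_mul]

theorem exists_ringHom_eq_conj_map [IsLocalRing R] (hR : ∀ r : R, ∃ u v : Rˣ, (u : R) + v = r)
    (hT : ∀ u, (Φ (torus u)).IsDiag) (hU : ∀ r, Φ (upper r) = !![1, q r; 0, 1])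
    (hW : Φ weyl = !![0, (w : S); (w' : S), 0]) :
    ∃ (f : R →+* S) (Y : GL (Fin 2) S), (Y : M₂ S) = !![1, 0; 0, (↑w⁻¹ : S)] ∧
      (∀ r, f r = ↑w⁻¹ * q r) ∧
      ∀ A : SL(2, R), Φ A = Y * (A : M₂ R).map f * ((Y⁻¹ : GL (Fin 2) S) : M₂ S) := by
  obtain ⟨f, hf⟩ := exists_ringHom_of_map_eq hR hT hU hW
  have hq_neg (r : R) : q (-r) = -q r :=
    map_neg (AddMonoidHom.mk' q (add_of_map_upper_eq hU)) r
  have hw' : (w' : S) = -↑w⁻¹ := by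
    have hq_one : q 1 = w := by simpa using (steinberg_of_map_eq hT hU hW 1).1
    have h := (steinberg_of_map_eq hT hU hW 1).2
    simp only [Units.val_one, inv_one, hq_one] at h
    linear_combination ↑w⁻¹ * h - (w' : S) * (1 + ↑w * ↑w⁻¹) * w.mul_inv
  let Y : GL (Fin 2) S :=
    ⟨!![1, 0; 0, (↑w⁻¹ : S)], !![1, 0; 0, (w : S)], by simp [one_fin_two],
      by simp [one_fin_two]⟩
  let Ψ : SL(2, R) →* M₂ S :=
    { toFun A := Y * (A : M₂ R).map f * ((Y⁻¹ : GL (Fin 2) S) : M₂ S)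
      map_one' := by simp
      map_mul' A B := by simp [Matrix.map_mul, mul_assoc] }
  have hΦΨ : Φ = Ψ := by
    refine MonoidHom.eq_of_eqOn_dense closure_elementaryGens ?_
    rintro _ (⟨r, rfl⟩ | ⟨r, rfl⟩) <;> ext i j <;>
      simp only [Ψ, Y, MonoidHom.coe_mk, OneHom.coe_mk, Units.inv_mk, mul_apply, Fin.sum_univ_two,
        map_apply, coe_upper, coe_lower, hU, map_lower_eq hU hW]
    · fin_cases i <;> fin_cases j <;> simp
      rw [hf]; linear_combination (-q r) * w.inv_mul
    · fin_cases i <;> fin_cases j <;> simp [hw', hq_neg]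
      rw [hf]; ring
  exact ⟨f, Y, rfl, hf, fun A => DFunLike.congr_fun hΦΨ A⟩

end NormalForm

section Lift

variable {k R S : Type*} [Field k] [CommRing R] [CommRing S] {πR : R →+* k} {πS : S →+* k}

def IsLift {n : Type*} [Fintype n] [DecidableEq n] (πR : R →+* k) (πS : S →+* k)
    (Φ : SpecialLinearGroup n R →* Matrix n n S) : Prop :=
  ∀ A i j, πS (Φ A i j) = πR (A i j)

theorem IsLift.conj {n : Type*} [Fintype n] [DecidableEq n]
    {ρ : SpecialLinearGroup n R →* GL n S} (hρ : IsLift πR πS ((Units.coeHom _).comp ρ))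
    {X : GL n S} (hX : πS.mapMatrix (X : Matrix n n S) = 1) :
    IsLift πR πS ((Units.coeHom _).comp ((MulAut.conj X⁻¹).toMonoidHom.comp ρ)) := by
  have hX' : πS.mapMatrix ((X⁻¹ : GL n S) : Matrix n n S) = 1 := by
    simpa only [map_mul, hX, one_mul, map_one] using congrArg πS.mapMatrix X.mul_inv
  intro A i j
  have h : πS.mapMatrix (((X⁻¹ : GL n S) : Matrix n n S) * (ρ A : Matrix n n S) *
      (X : Matrix n n S)) = πS.mapMatrix (ρ A : Matrix n n S) := by
    rw [map_mul, map_mul, hX, hX', one_mul, mul_one]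
  rw [← hρ A i j]
  exact congr_fun₂ h i j

variable [IsLocalRing S] {Φ : SL(2, R) →* M₂ S}

theorem IsLift.isDiag_map_torus (hkerS : RingHom.ker πS = maximalIdeal S) (hΦ : IsLift πR πS Φ)
    {a : Rˣ} (ha : πR a ≠ πR ↑a⁻¹) (hD : (Φ (torus a)).IsDiag) (u : Rˣ) :
    (Φ (torus u)).IsDiag := by
  intro i j hij
  refine apply_eq_zero_of_diagonal_mul_eq (d := (Φ (torus a)).diag) (e := (Φ (torus a)).diag)
    ?_ ?_
  · rw [hD.diagonal_diag, ← map_mul, ← map_mul, ← map_mul, mul_comm, map_mul]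
  · have h01 : IsUnit (Φ (torus a) 0 0 - Φ (torus a) 1 1) :=
      isUnit_of_map_ne_zero hkerS (by simpa [hΦ _ _ _, sub_eq_zero] using ha)
    fin_cases i <;> fin_cases j
    · exact absurd rfl hij
    · exact h01
    · simpa using h01.neg
    · exact absurd rfl hij

theorem IsLift.map_weyl_eq (hkerS : RingHom.ker πS = maximalIdeal S) (hΦ : IsLift πR πS Φ)
    {a : Rˣ} (ha : πR a ≠ πR ↑a⁻¹) (hD : (Φ (torus a)).IsDiag) :
    Φ weyl = !![0, Φ weyl 0 1; Φ weyl 1 0, 0] := by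
  have hconj :
      diagonal (Φ (torus a⁻¹)).diag * Φ weyl = Φ weyl * diagonal (Φ (torus a)).diag := by
    rw [hD.diagonal_diag, (hΦ.isDiag_map_torus hkerS ha hD a⁻¹).diagonal_diag, ← map_mul,
      ← map_mul, weyl_mul_torus]
  have h00 := apply_eq_zero_of_diagonal_mul_eq hconj (i := 0) (j := 0)
    (isUnit_of_map_ne_zero hkerS (by simpa [hΦ _ _ _, sub_eq_zero] using ha.symm))
  have h11 := apply_eq_zero_of_diagonal_mul_eq hconj (i := 1) (j := 1)
    (isUnit_of_map_ne_zero hkerS (by simpa [hΦ _ _ _, sub_eq_zero] using ha))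
  rw [eta_fin_two (Φ weyl), h00, h11]
  simp

theorem IsLift.map_upper_eq [IsLocalRing R] (hkerR : RingHom.ker πR = maximalIdeal R)
    (hkerS : RingHom.ker πS = maximalIdeal S) (hΦ : IsLift πR πS Φ) {a : Rˣ}
    (ha₁ : πR a ^ 2 ≠ 1) (ha₂ : πR a ^ 2 ≠ πR ↑a⁻¹ ^ 2) (hD : (Φ (torus a)).IsDiag)
    (r : R) :
    Φ (upper r) = !![1, Φ (upper r) 0 1; 0, 1] :=
  have hx : πR a ≠ 0 := (a.isUnit.map πR).ne_zero
  eq_upper_of_diagonal_mul_eq (U := fun r => Φ (upper r)) (fun r s => by rw [upper_add, map_mul])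
    (by rw [upper_zero, map_one]) (isUnit_of_map_ne_zero hkerS (by simp [hΦ _ _ _]))
    (c := (a : R) ^ 2) (isUnit_of_map_ne_zero hkerR (by simpa [sub_eq_zero] using ha₁))
    (d := (Φ (torus a)).diag) (isUnit_of_map_ne_zero hkerS (by simp [hΦ _ _ _, hx]))
    (isUnit_of_map_ne_zero hkerS (by simp [hΦ _ _ _, hx]))
    (isUnit_of_map_ne_zero hkerS (by simpa [hΦ _ _ _, sub_eq_zero] using ha₂))
    (fun r => by rw [hD.diagonal_diag, ← map_mul, ← map_mul, torus_mul_upper]) r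

theorem IsLift.exists_ringHom_conj [IsLocalRing R] (hkerR : RingHom.ker πR = maximalIdeal R)
    (hkerS : RingHom.ker πS = maximalIdeal S) (hR : ∀ r : R, ∃ u v : Rˣ, (u : R) + v = r)
    (hΦ : IsLift πR πS Φ) {a : Rˣ} (ha : πR a ^ 4 ≠ 1) (hD : (Φ (torus a)).IsDiag) :
    ∃ (f : R →+* S) (Y : GL (Fin 2) S), πS.comp f = πR ∧ πS.mapMatrix (Y : M₂ S) = 1 ∧
      ∀ A : SL(2, R), Φ A = Y * (A : M₂ R).map f * ((Y⁻¹ : GL (Fin 2) S) : M₂ S) := by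
  have ha₂ := sq_ne_sq_of_pow_four_ne_one (by rw [← map_mul, a.mul_inv, map_one]) ha
  have ha₀ : πR a ≠ πR ↑a⁻¹ := fun h => ha₂ (by rw [h])
  have ha₁ : πR a ^ 2 ≠ 1 := fun h => ha (by linear_combination (πR a ^ 2 + 1) * h)
  obtain ⟨w, hw⟩ := isUnit_of_map_ne_zero hkerS (a := Φ weyl 0 1) (by simp [hΦ _ _ _])
  obtain ⟨w', hw'⟩ := isUnit_of_map_ne_zero hkerS (a := Φ weyl 1 0) (by simp [hΦ _ _ _])
  have hW := hΦ.map_weyl_eq hkerS ha₀ hD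
  rw [← hw, ← hw'] at hW
  obtain ⟨f, Y, hY, hf, hΦf⟩ := exists_ringHom_eq_conj_map hR
    (hΦ.isDiag_map_torus hkerS ha₀ hD) (hΦ.map_upper_eq hkerR hkerS ha₁ ha₂ hD) hW
  have hπw : πS ↑w⁻¹ = 1 := by simp [hw, hΦ _ _ _]
  refine ⟨f, Y, RingHom.ext fun r => ?_, ?_, hΦf⟩
  · simp [hf, hπw, hΦ _ _ _]
  · rw [hY]; ext i j; fin_cases i <;> fin_cases j <;> simp [hπw]

end Lift

theorem sln_universal_lift_dim_two_general
    {k : Type*} [Field k] [Fintype k]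
    {R : Type*} [CommRing R] [IsLocalRing R]
    {S : Type*} [CommRing S] [IsLocalRing S] [IsArtinianRing S]
    (hk2 : Fintype.card k ≠ 2) (hk3 : Fintype.card k ≠ 3) (hk5 : Fintype.card k ≠ 5)
    (πR : R →+* k) (hπR : Function.Surjective πR)
    (hkerR : RingHom.ker πR = maximalIdeal R)
    (πS : S →+* k)
    (hkerS : RingHom.ker πS = maximalIdeal S)
    (ρ : SpecialLinearGroup (Fin 2) R →* GL (Fin 2) S)
    (hlift : ∀ (A : SpecialLinearGroup (Fin 2) R) (i j : Fin 2),
      πS ((ρ A : Matrix (Fin 2) (Fin 2) S) i j) = πR ((A : Matrix (Fin 2) (Fin 2) R) i j)) :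
    ∃ (f : R →+* S) (X : GL (Fin 2) S),
      IsLocalHom f ∧
      (∀ r : R, πS (f r) = πR r) ∧
      (∀ i j, (X : Matrix (Fin 2) (Fin 2) S) i j - (1 : Matrix (Fin 2) (Fin 2) S) i j ∈
        maximalIdeal S) ∧
      (∀ A : SpecialLinearGroup (Fin 2) R,
        (ρ A : Matrix (Fin 2) (Fin 2) S) =
          (X : Matrix (Fin 2) (Fin 2) S) * (A : Matrix (Fin 2) (Fin 2) R).map f *
            ((X⁻¹ : GL (Fin 2) S) : Matrix (Fin 2) (Fin 2) S)) := by
  have hπR_local := isLocalHom_of_ker_eq_maximalIdeal hkerR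
  obtain ⟨x, hx⟩ := FiniteField.exists_pow_four_ne_one hk2 hk3 hk5
  obtain ⟨a, rfl⟩ := IsLocalRing.surjective_units_map_of_local_ringHom πR hπR hπR_local x
  have ha : πR a ^ 4 ≠ 1 := by simpa [Units.ext_iff] using hx
  have hainv : πR a * πR ↑a⁻¹ = 1 := by rw [← map_mul, a.mul_inv, map_one]
  obtain ⟨X, hX, hXD⟩ := exists_conj_isDiag_of_mapMatrix_eq_diagonal hkerS
    (T := ρ (torus a)) (d := ![πR a, πR ↑a⁻¹])
    (by ext i j; fin_cases i <;> fin_cases j <;> simp [hlift])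
    (fun h => sq_ne_sq_of_pow_four_ne_one hainv ha (congrArg (· ^ 2) h))
  have hR := exists_units_add_eq (by have := Fintype.one_lt_card (α := k); omega) hπR hkerR
  obtain ⟨f, Y, hf, hY, hΦf⟩ :=
    ((show IsLift πR πS ((Units.coeHom _).comp ρ) from hlift).conj hX).exists_ringHom_conj
      hkerR hkerS hR ha (by simpa using hXD)
  have : IsLocalHom (πS.comp f) := hf ▸ hπR_local
  have hXY : πS.mapMatrix ((X * Y : GL (Fin 2) S) : M₂ S) = 1 := by
    rw [Units.val_mul, map_mul, hX, hY, one_mul]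
  refine ⟨f, X * Y, isLocalHom_of_comp f πS, fun r => congr($hf r), fun i j => ?_, fun A => ?_⟩
  · rw [← hkerS, RingHom.mem_ker, map_sub, sub_eq_zero]
    simpa [one_apply, apply_ite] using congr_fun₂ hXY i j
  · have h := hΦf A
    simp only [MonoidHom.comp_apply, MulEquiv.coe_toMonoidHom, MulAut.conj_apply, inv_inv,
      Units.coeHom_apply, Units.val_mul] at h
    rw [mul_assoc, Units.inv_mul_eq_iff_eq_mul, ← Units.eq_mul_inv_iff_mul_eq] at h
    rw [h, _root_.mul_inv_rev, Units.val_mul, Units.val_mul]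
    simp only [mul_assoc]

/-- For `n = 2`, `#k ∉ {2,3,5}`, `R` complete Noetherian local with residue field `k`,
`S` Artinian local with residue field `k`, every lift `ρ : SL_n(R) → GL_n(S)` of the
natural representation is conjugate (by a matrix `≡ I mod m_S`) to one induced by a
local ring homomorphism `f : R → S` compatible with the reductions. -/
theorem sln_universal_lift_dim_two
    {k : Type*} [Field k] [Fintype k]
    {R : Type*} [CommRing R] [IsLocalRing R] [IsNoetherianRing R]
    [IsAdicComplete (maximalIdeal R) R]
    {S : Type*} [CommRing S] [IsLocalRing S] [IsArtinianRing S]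
    (hk2 : Fintype.card k ≠ 2) (hk3 : Fintype.card k ≠ 3) (hk5 : Fintype.card k ≠ 5)
    (πR : R →+* k) (hπR : Function.Surjective πR)
    (hkerR : RingHom.ker πR = maximalIdeal R)
    (πS : S →+* k) (hπS : Function.Surjective πS)
    (hkerS : RingHom.ker πS = maximalIdeal S)
    (ρ : SpecialLinearGroup (Fin 2) R →* GL (Fin 2) S)
    (hlift : ∀ (A : SpecialLinearGroup (Fin 2) R) (i j : Fin 2),
      πS ((ρ A : Matrix (Fin 2) (Fin 2) S) i j) = πR ((A : Matrix (Fin 2) (Fin 2) R) i j)) :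
    ∃ (f : R →+* S) (X : GL (Fin 2) S),
      IsLocalHom f ∧
      (∀ r : R, πS (f r) = πR r) ∧
      (∀ i j, (X : Matrix (Fin 2) (Fin 2) S) i j - (1 : Matrix (Fin 2) (Fin 2) S) i j ∈
        maximalIdeal S) ∧
      (∀ A : SpecialLinearGroup (Fin 2) R,
        (ρ A : Matrix (Fin 2) (Fin 2) S) =
          (X : Matrix (Fin 2) (Fin 2) S) * (A : Matrix (Fin 2) (Fin 2) R).map f *
            ((X⁻¹ : GL (Fin 2) S) : Matrix (Fin 2) (Fin 2) S)) :=
  sln_universal_lift_dim_two_general hk2 hk3 hk5 πR hπR hkerR πS hkerS ρ hlift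
end

section
/- Let k be a finite field, n ≥ 2, let R be a complete Noetherian local commutative ring with residue field k, and let S be a complete Noetherian local commutative ring with residue field k. Suppose f, g : R → S are local ring homomorphisms with π_S ∘ f = π_R and π_S ∘ g = π_R, and suppose there exists X ∈ GL_n(S) with X ≡ I mod m_S such that f(A) = X · g(A) · X⁻¹ for all A ∈ SL_n(R) (f, g applied entrywise). Then f = g. -/
open Matrix IsLocalRing

/-!
Conjugating `diag(u, u⁻¹, 1, …, 1) ∈ SL_n(R)` and comparing the `(0, 0)` entries of
`f(A) X = X g(A)` gives `f u * X₀₀ = X₀₀ * g u`; since `X₀₀ ≡ 1 mod m_S` is a unit, `f` and `g`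
agree on units. In a local ring every element is a unit or `1` minus a unit, so `f = g`.
-/

theorem RingHom.eq_of_forall_units_eq {R S : Type*} [CommRing R] [IsLocalRing R] [Ring S]
    {f g : R →+* S} (h : ∀ u : Rˣ, f u = g u) : f = g := by
  ext r
  rcases isUnit_or_isUnit_one_sub_self r with ⟨u, rfl⟩ | ⟨u, hu⟩
  · exact h u
  · have h1 := h u
    rwa [hu, map_sub, map_sub, map_one, map_one, sub_right_inj] at h1

namespace Matrix

variable {n R : Type*} [Fintype n] [DecidableEq n]

theorem eq_of_diagonal_mul_eq_mul_diagonal [CommRing R] {d d' : n → R} {X : Matrix n n R}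
    (h : diagonal d * X = X * diagonal d') {i : n} (hX : IsUnit (X i i)) : d i = d' i := by
  have hii := congrFun₂ h i i
  rw [diagonal_mul, mul_diagonal, mul_comm] at hii
  exact hX.mul_left_cancel hii

namespace SpecialLinearGroup

/-- `diag(u, u⁻¹, 1, …, 1)`, with `u` at position `i` and `u⁻¹` at position `j`. -/
def diagonalUnitInv [CommRing R] (i j : n) (u : Rˣ) : SpecialLinearGroup n R :=
  ⟨diagonal fun l => ((Pi.mulSingle i u * Pi.mulSingle j u⁻¹ : n → Rˣ) l : R), by
    simp only [det_diagonal, ← Units.coe_prod, Pi.mul_apply, Finset.prod_mul_distrib,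
      Finset.prod_pi_mulSingle', Finset.mem_univ, if_true, mul_inv_cancel, Units.val_one]⟩

theorem diagonalUnitInv_eq_diagonal [CommRing R] (i j : n) (u : Rˣ) :
    (diagonalUnitInv i j u : Matrix n n R) =
      diagonal fun l => ((Pi.mulSingle i u * Pi.mulSingle j u⁻¹ : n → Rˣ) l : R) :=
  rfl

end SpecialLinearGroup

end Matrix

theorem sln_induced_lift_injective_general
    {R : Type*} [CommRing R] [IsLocalRing R]
    {S : Type*} [CommRing S] [IsLocalRing S]
    (n : ℕ) (hn : 2 ≤ n)
    (f g : R →+* S)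
    (X : GL (Fin n) S)
    (hX : ∀ i j, (X : Matrix (Fin n) (Fin n) S) i j - (1 : Matrix (Fin n) (Fin n) S) i j ∈
      maximalIdeal S)
    (hconj : ∀ A : SpecialLinearGroup (Fin n) R,
      (A : Matrix (Fin n) (Fin n) R).map f =
        (X : Matrix (Fin n) (Fin n) S) * (A : Matrix (Fin n) (Fin n) R).map g *
          ((X⁻¹ : GL (Fin n) S) : Matrix (Fin n) (Fin n) S)) :
    f = g := by
  let i : Fin n := ⟨0, by omega⟩
  let j : Fin n := ⟨1, by omega⟩
  have hij : i ≠ j := by simp [i, j, Fin.ext_iff]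
  have hXi : IsUnit ((X : Matrix (Fin n) (Fin n) S) i i) :=
    Ideal.isUnit_of_sub_one_mem_jacobson_bot _
      (maximalIdeal_le_jacobson ⊥ (by simpa using hX i i))
  refine RingHom.eq_of_forall_units_eq fun u => ?_
  have hcomm := congrArg (· * (X : Matrix (Fin n) (Fin n) S))
    (hconj (SpecialLinearGroup.diagonalUnitInv i j u))
  simp only [mul_assoc, Units.inv_mul, mul_one, SpecialLinearGroup.diagonalUnitInv_eq_diagonal,
    diagonal_map (map_zero f), diagonal_map (map_zero g)] at hcomm
  simpa [hij] using eq_of_diagonal_mul_eq_mul_diagonal hcomm hXi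

/-- If two local ring homomorphisms `f g : R → S` compatible with the
reductions induce strictly equivalent lifts of the natural representation of `SL_n(R)`
(i.e. `f(A) = X · g(A) · X⁻¹` for all `A ∈ SL_n(R)` with `X ≡ I mod m_S`), then `f = g`. -/
theorem sln_induced_lift_injective
    {k : Type*} [Field k] [Fintype k]
    {R : Type*} [CommRing R] [IsLocalRing R] [IsNoetherianRing R]
    [IsAdicComplete (maximalIdeal R) R]
    {S : Type*} [CommRing S] [IsLocalRing S] [IsNoetherianRing S]
    [IsAdicComplete (maximalIdeal S) S]
    (n : ℕ) (hn : 2 ≤ n)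
    (πR : R →+* k) (hπR : Function.Surjective πR)
    (hkerR : RingHom.ker πR = maximalIdeal R)
    (πS : S →+* k) (hπS : Function.Surjective πS)
    (hkerS : RingHom.ker πS = maximalIdeal S)
    (f g : R →+* S) (hf : IsLocalHom f) (hg : IsLocalHom g)
    (hfπ : ∀ r : R, πS (f r) = πR r) (hgπ : ∀ r : R, πS (g r) = πR r)
    (X : GL (Fin n) S)
    (hX : ∀ i j, (X : Matrix (Fin n) (Fin n) S) i j - (1 : Matrix (Fin n) (Fin n) S) i j ∈
      maximalIdeal S)
    (hconj : ∀ A : SpecialLinearGroup (Fin n) R,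
      (A : Matrix (Fin n) (Fin n) R).map f =
        (X : Matrix (Fin n) (Fin n) S) * (A : Matrix (Fin n) (Fin n) R).map g *
          ((X⁻¹ : GL (Fin n) S) : Matrix (Fin n) (Fin n) S)) :
    f = g :=
  sln_induced_lift_injective_general n hn f g X hX hconj
end

section
/- Let R be a commutative local ring, n ≥ 2, and let 𝔞 be an ideal of R. Let U_𝔞 := {M ∈ SL_n(R) : M ≡ I mod 𝔞 entrywise} and let V_𝔞 be the subgroup of GL_n(R) generated by all transvections t_ab^r with a ≠ b and r ∈ 𝔞. Then U_{𝔞²} ⊆ V_𝔞 ⊆ U_𝔞. In particular, taking 𝔞 = R, the group SL_n(R) is generated by the elementary transvections t_ab^r with a ≠ b and r ∈ R. -/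
/-!
`V_𝔞 ⊆ U_𝔞` because `U_𝔞` is the kernel of the reduction `SL_n(R) → SL_n(R/𝔞)`, which kills every
generator of `V_𝔞`.

For `U_{𝔞²} ⊆ V_𝔞` run Gaussian elimination with transvections whose parameters lie in `𝔞²`.
Over a local ring every column of an invertible matrix has a unit entry, and one transvection
moves a unit onto the diagonal. The pivot `u ≡ 1 mod 𝔞²` is then shifted to another diagonal
position by `diag(u⁻¹, u)`, and clearing its row and column leaves a matrix that agrees with the
identity at one more index. The diagonal matrices `diag(u, u⁻¹)` with `u ≡ 1 mod 𝔞²` lie in `V_𝔞`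
by Whitehead's identity `diag(1 + sr, w) = t_qp(-rw) t_pq(s) t_qp(r) t_pq(-ws)`, where
`w = (1 + sr)⁻¹`, since `1 + ∑ sᵢ rᵢ` factors as a product of units `1 + sᵢ' rᵢ` when `𝔞` lies in
the maximal ideal.
Taking `𝔞 = R` gives the generation statement.
-/

open Matrix IsLocalRing

namespace Matrix.SpecialLinearGroup

variable {ι R : Type*} [Fintype ι] [DecidableEq ι] [CommRing R]

def congruenceSubgroup (J : Ideal R) : Subgroup (SpecialLinearGroup ι R) :=
  (map (Ideal.Quotient.mk J)).ker

theorem mem_congruenceSubgroup_iff {J : Ideal R} {M : SpecialLinearGroup ι R} :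
    M ∈ congruenceSubgroup J ↔ ∀ i j, M i j - (1 : Matrix ι ι R) i j ∈ J := by
  rw [congruenceSubgroup, MonoidHom.mem_ker, ← map_one (map (Ideal.Quotient.mk J)),
    SpecialLinearGroup.ext_iff]
  simp only [map_apply_coe, RingHom.mapMatrix_apply, Matrix.map_apply, coe_one,
    Ideal.Quotient.eq]

def transvectionSubgroup (J : Ideal R) : Subgroup (SpecialLinearGroup ι R) :=
  Subgroup.closure {T | ∃ (a b : ι) (r : R), a ≠ b ∧ r ∈ J ∧
    (T : Matrix ι ι R) = Matrix.transvection a b r}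

theorem transvection_mem_transvectionSubgroup {J : Ideal R} {a b : ι} (hab : a ≠ b) {r : R}
    (hr : r ∈ J) : transvection hab r ∈ transvectionSubgroup J :=
  Subgroup.subset_closure ⟨a, b, r, hab, hr, rfl⟩

theorem transvectionSubgroup_mono {J J' : Ideal R} (h : J ≤ J') :
    transvectionSubgroup (ι := ι) J ≤ transvectionSubgroup J' :=
  Subgroup.closure_mono fun _ ⟨a, b, r, hab, hr, hT⟩ ↦ ⟨a, b, r, hab, h hr, hT⟩

theorem transvectionSubgroup_le_congruenceSubgroup (J : Ideal R) :
    transvectionSubgroup (ι := ι) J ≤ congruenceSubgroup J := by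
  rw [transvectionSubgroup, Subgroup.closure_le]
  rintro T ⟨a, b, r, -, hr, hT⟩
  rw [SetLike.mem_coe, mem_congruenceSubgroup_iff]
  intro i j
  simp only [hT, Matrix.transvection, add_apply, add_sub_cancel_left, single_apply]
  split_ifs
  exacts [hr, J.zero_mem]

def unitDiag (p q : ι) : Rˣ →* SpecialLinearGroup ι R where
  toFun u := (⟨diagonal (Pi.mulSingle p (u : R) * Pi.mulSingle q ↑u⁻¹), by
    simp [det_diagonal, Finset.prod_mul_distrib, Finset.prod_pi_mulSingle']⟩ :
      SpecialLinearGroup ι R)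
  map_one' := by ext; simp
  map_mul' u v := Subtype.ext <| by
    change diagonal _ = diagonal _ * diagonal _
    rw [diagonal_mul_diagonal, mul_inv, Units.val_mul, Units.val_mul, Pi.mulSingle_mul,
      Pi.mulSingle_mul]
    congr 1
    ext i
    simp only [Pi.mul_apply]
    ring

theorem coe_unitDiag (p q : ι) (u : Rˣ) :
    (unitDiag p q u : Matrix ι ι R) = diagonal (Pi.mulSingle p (u : R) * Pi.mulSingle q ↑u⁻¹) := rfl

theorem unitDiag_mem_congruenceSubgroup {J : Ideal R} (p q : ι) {u : Rˣ} (hu : (u : R) - 1 ∈ J) :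
    unitDiag p q u ∈ congruenceSubgroup J := by
  have hu' : ((u⁻¹ : Rˣ) : R) - 1 ∈ J := by
    rw [show ((u⁻¹ : Rˣ) : R) - 1 = -(↑u⁻¹ * (u - 1)) by simp [mul_sub]]
    exact J.neg_mem (J.mul_mem_left _ hu)
  rw [mem_congruenceSubgroup_iff]
  intro i j
  rw [coe_unitDiag, diagonal_apply, one_apply]
  split_ifs with hij
  · subst hij
    rcases eq_or_ne i p with rfl | hp <;> rcases eq_or_ne i q with rfl | hq
    all_goals simp_all
  · simp

theorem unitDiag_mem_transvectionSubgroup_of_eq_one_add_mul {I : Ideal R} {p q : ι} (hpq : p ≠ q)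
    {s r : R} (hs : s ∈ I) (hr : r ∈ I) {u : Rˣ} (hu : (u : R) = 1 + s * r) :
    unitDiag p q u ∈ transvectionSubgroup I := by
  have hw : (1 + s * r) * ↑u⁻¹ = 1 := hu ▸ u.mul_inv
  have hfactor : unitDiag p q u = transvection hpq.symm (-(r * ↑u⁻¹)) * transvection hpq s *
      transvection hpq.symm r * transvection hpq (-(↑u⁻¹ * s)) := by
    ext i j
    simp only [coe_mul, coe_unitDiag, transvection_coe, Matrix.add_mul, Matrix.mul_add,
      Matrix.one_mul, Matrix.mul_one, single_mul_single_same,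
      single_mul_single_of_ne _ _ _ _ hpq, single_mul_single_of_ne _ _ _ _ hpq.symm]
    by_cases hi : i = p ∨ i = q <;> by_cases hj : j = p ∨ j = q
    · rcases hi with rfl | rfl <;> rcases hj with rfl | rfl <;> simp [hpq, hpq.symm, hu]
      · linear_combination s * hw
      · linear_combination r * hw
      · linear_combination (1 - r * ↑u⁻¹ * s) * hw
    · push Not at hj
      rcases hi with rfl | rfl <;> simp [hj.1.symm, hj.2.symm]
    · push Not at hi
      rcases hj with rfl | rfl <;> simp [hi.1, hi.2, hi.1.symm, hi.2.symm]
    · push Not at hi hj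
      simp [diagonal_apply, one_apply, hi.1, hi.2, hi.1.symm, hi.2.symm, hj.1.symm, hj.2.symm]
  rw [hfactor]
  exact mul_mem (mul_mem (mul_mem
    (transvection_mem_transvectionSubgroup _ (I.neg_mem (I.mul_mem_right _ hr)))
    (transvection_mem_transvectionSubgroup _ hs)) (transvection_mem_transvectionSubgroup _ hr))
    (transvection_mem_transvectionSubgroup _ (I.neg_mem (I.mul_mem_left _ hs)))

theorem unitDiag_mem_transvectionSubgroup_of_le_jacobson {I : Ideal R}
    (hI : I ≤ (⊥ : Ideal R).jacobson) {p q : ι} (hpq : p ≠ q) {u : Rˣ} (hu : (u : R) - 1 ∈ I ^ 2) :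
    unitDiag p q u ∈ transvectionSubgroup I := by
  suffices H : ∀ x ∈ I * I, ∀ (a : R) (u : Rˣ), (u : R) = 1 + a * x →
      unitDiag p q u ∈ transvectionSubgroup I from
    H _ (pow_two I ▸ hu) 1 u (by ring)
  intro x hx
  induction hx using Submodule.mul_induction_on' with
  | mem_mul_mem s hs r hr =>
    intro a u hu
    exact unitDiag_mem_transvectionSubgroup_of_eq_one_add_mul hpq (I.mul_mem_left a hs) hr
      (by rw [hu, mul_assoc])
  | add y hy z hz ihy ihz =>
    intro a u hu
    -- `1 + a * (y + z) = v * (1 + v⁻¹ * a * z)` with `v = 1 + a * y`, a unit since `y ∈ I`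
    obtain ⟨v, hv⟩ : IsUnit (1 + a * y) := by
      simpa [add_comm, mul_comm] using Ideal.mem_jacobson_bot.1 (hI (Ideal.mul_le_left hy)) a
    rw [← mul_inv_cancel_left v u, map_mul]
    refine mul_mem (ihy a v hv) (ihz (↑v⁻¹ * a) _ ?_)
    rw [Units.val_mul]
    linear_combination (↑v⁻¹ : R) * hu - (↑v⁻¹ : R) * hv + v.inv_mul

theorem unitDiag_mem_transvectionSubgroup [IsLocalRing R] {I : Ideal R} {p q : ι} (hpq : p ≠ q)
    {u : Rˣ} (hu : (u : R) - 1 ∈ I ^ 2) : unitDiag p q u ∈ transvectionSubgroup I := by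
  rcases eq_or_ne I ⊤ with rfl | hI
  · exact unitDiag_mem_transvectionSubgroup_of_eq_one_add_mul hpq Submodule.mem_top
      Submodule.mem_top (by ring : (u : R) = 1 + (u - 1) * 1)
  · exact unitDiag_mem_transvectionSubgroup_of_le_jacobson
      ((le_maximalIdeal hI).trans (maximalIdeal_le_jacobson ⊥)) hpq hu

theorem exists_rowOp_mem_transvectionSubgroup (J : Ideal R) (k : ι) (c : ι → R)
    {s : Finset ι} (hks : k ∉ s) (hc : ∀ i ∈ s, c i ∈ J) :
    ∃ E : SpecialLinearGroup ι R, E ∈ transvectionSubgroup J ∧ ∀ (A : Matrix ι ι R) i j,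
      ((E : Matrix ι ι R) * A) i j = A i j + if i ∈ s then c i * A k j else 0 := by
  induction s using Finset.induction_on with
  | empty => exact ⟨1, one_mem _, by simp⟩
  | insert a s ha ih =>
    have hak : a ≠ k := fun h ↦ hks (h ▸ Finset.mem_insert_self a s)
    have hks' : k ∉ s := fun h ↦ hks (Finset.mem_insert_of_mem h)
    obtain ⟨E, hE, hEA⟩ := ih hks' fun i hi ↦ hc i (Finset.mem_insert_of_mem hi)
    refine ⟨transvection hak (c a) * E, mul_mem (transvection_mem_transvectionSubgroup hak
      (hc a (Finset.mem_insert_self a s))) hE, fun A i j ↦ ?_⟩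
    rw [coe_mul, Matrix.mul_assoc]
    change (Matrix.transvection a k (c a) * ((E : Matrix ι ι R) * A)) i j = _
    rcases eq_or_ne i a with rfl | hia
    · rw [transvection_mul_apply_same, hEA, hEA]
      simp [ha, hks']
    · rw [transvection_mul_apply_of_ne _ _ _ _ hia, hEA]
      simp [hia]

theorem exists_colOp_mem_transvectionSubgroup (J : Ideal R) (k : ι) (c : ι → R)
    {s : Finset ι} (hks : k ∉ s) (hc : ∀ j ∈ s, c j ∈ J) :
    ∃ F : SpecialLinearGroup ι R, F ∈ transvectionSubgroup J ∧ ∀ (A : Matrix ι ι R) i j,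
      (A * (F : Matrix ι ι R)) i j = A i j + if j ∈ s then c j * A i k else 0 := by
  induction s using Finset.induction_on with
  | empty => exact ⟨1, one_mem _, by simp⟩
  | insert a s ha ih =>
    have hka : k ≠ a := fun h ↦ hks (h ▸ Finset.mem_insert_self a s)
    have hks' : k ∉ s := fun h ↦ hks (Finset.mem_insert_of_mem h)
    obtain ⟨F, hF, hAF⟩ := ih hks' fun j hj ↦ hc j (Finset.mem_insert_of_mem hj)
    refine ⟨F * transvection hka (c a), mul_mem hF (transvection_mem_transvectionSubgroup hka
      (hc a (Finset.mem_insert_self a s))), fun A i j ↦ ?_⟩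
    rw [coe_mul, ← Matrix.mul_assoc]
    change ((A * (F : Matrix ι ι R)) * Matrix.transvection k a (c a)) i j = _
    rcases eq_or_ne j a with rfl | hja
    · rw [mul_transvection_apply_same, hAF, hAF]
      simp [ha, hks']
    · rw [mul_transvection_apply_of_ne _ _ _ _ hja, hAF]
      simp [hja]

theorem exists_mul_mul_apply_eq_schur (J : Ideal R) {A : Matrix ι ι R} {k : ι} (hk : A k k = 1)
    (hcol : ∀ i ≠ k, A i k ∈ J) (hrow : ∀ j ≠ k, A k j ∈ J) :
    ∃ E ∈ transvectionSubgroup (ι := ι) J, ∃ F ∈ transvectionSubgroup (ι := ι) J, ∀ i j,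
      ((E : Matrix ι ι R) * A * F) i j =
        if i = k ∨ j = k then (1 : Matrix ι ι R) i j else A i j - A i k * A k j := by
  obtain ⟨E, hE, hEA⟩ := exists_rowOp_mem_transvectionSubgroup J k (fun i ↦ -A i k)
    (Finset.notMem_erase k Finset.univ) fun i hi ↦ J.neg_mem (hcol i (Finset.ne_of_mem_erase hi))
  obtain ⟨F, hF, hAF⟩ := exists_colOp_mem_transvectionSubgroup J k (fun j ↦ -A k j)
    (Finset.notMem_erase k Finset.univ) fun j hj ↦ J.neg_mem (hrow j (Finset.ne_of_mem_erase hj))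
  refine ⟨E, hE, F, hF, fun i j ↦ ?_⟩
  rw [hAF, hEA, hEA]
  by_cases hi : i = k <;> by_cases hj : j = k <;> simp [one_apply, hi, hj, hk, eq_comm (a := k)]
  ring

def EqOneOutside (s : Finset ι) (M : SpecialLinearGroup ι R) : Prop :=
  ∀ i j, i ∉ s ∨ j ∉ s → M i j = (1 : Matrix ι ι R) i j

theorem EqOneOutside.eq_one {s : Finset ι} {M : SpecialLinearGroup ι R} (hM : EqOneOutside s M)
    (hs : s.card ≤ 1) : M = 1 := by
  rw [Finset.card_le_one] at hs
  have hdiag : (M : Matrix ι ι R) = diagonal fun i ↦ M i i := by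
    ext i j
    rw [diagonal_apply]
    split_ifs with hij
    · rw [hij]
    · by_cases hi : i ∈ s
      · rw [hM i j (Or.inr fun hj ↦ hij (hs i hi j hj)), one_apply_ne hij]
      · rw [hM i j (Or.inl hi), one_apply_ne hij]
  have hprod : ∏ i, M i i = 1 := by rw [← det_diagonal, ← hdiag, M.det_coe]
  have hone : ∀ i, M i i = 1 := by
    intro i
    by_cases hi : i ∈ s
    · refine (Finset.prod_eq_single (f := fun j ↦ M j j) i (fun j _ hji ↦ ?_)
      (absurd (Finset.mem_univ i))).symm.trans hprod
      rw [hM j j (Or.inl fun hj ↦ hji (hs j hj i hi)), one_apply_eq]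
    · rw [hM i i (Or.inl hi), one_apply_eq]
  ext i j
  rw [hdiag]
  simp [diagonal_apply, one_apply, hone]

theorem exists_isUnit_apply_of_isUnit_det [IsLocalRing R] {A : Matrix ι ι R} (hA : IsUnit A.det)
    (k : ι) : ∃ i, IsUnit (A i k) := by
  by_contra! h
  have hsum : ∑ i, A.adjugate k i * A i k = A.det := by
    simpa [mul_apply] using congr_fun₂ (adjugate_mul A) k k
  refine (mem_maximalIdeal _).1 ?_ hA
  rw [← hsum]
  exact Ideal.sum_mem _ fun i _ ↦ Ideal.mul_mem_left _ _ ((mem_maximalIdeal _).2 (h i))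

theorem EqOneOutside.exists_mul_isUnit_apply_self [IsLocalRing R] {J : Ideal R} {s : Finset ι}
    {M : SpecialLinearGroup ι R} (hMs : EqOneOutside s M) (hM : M ∈ congruenceSubgroup J)
    (k : ι) : ∃ E ∈ transvectionSubgroup J, IsUnit ((E * M) k k) ∧ EqOneOutside s (E * M) := by
  by_cases hkk : IsUnit (M k k)
  · exact ⟨1, one_mem _, by simpa using hkk, by simpa using hMs⟩
  have hks : k ∈ s := by
    by_contra hks
    exact hkk (by simp [hMs k k (Or.inl hks)])
  obtain ⟨i₀, hi₀⟩ := exists_isUnit_apply_of_isUnit_det (by simp : IsUnit (M : Matrix ι ι R).det) k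
  have hi₀k : i₀ ≠ k := fun h ↦ hkk (h ▸ hi₀)
  have hi₀s : i₀ ∈ s := by
    by_contra hi₀s
    rw [hMs i₀ k (Or.inl hi₀s), one_apply_ne hi₀k] at hi₀
    exact not_isUnit_zero hi₀
  -- adding `c` times row `i₀` to row `k` turns the pivot into `1`
  set c := (1 - M k k) * ↑hi₀.unit⁻¹
  have hc : c ∈ J := by
    refine J.mul_mem_right _ ?_
    simpa using J.neg_mem (mem_congruenceSubgroup_iff.1 hM k k)
  have hmul : ∀ j, (transvection hi₀k.symm c * M) k j = M k j + c * M i₀ j := fun j ↦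
    transvection_mul_apply_same k i₀ j c (M : Matrix ι ι R)
  refine ⟨transvection hi₀k.symm c, transvection_mem_transvectionSubgroup _ hc, ?_, ?_⟩
  · rw [hmul, show M k k + c * M i₀ k = 1 by linear_combination (1 - M k k) * hi₀.val_inv_mul]
    exact isUnit_one
  · intro i j hij
    rcases eq_or_ne i k with rfl | hik
    · have hj : j ∉ s := hij.resolve_left (not_not.2 hks)
      rw [hmul, hMs i j hij, hMs i₀ j (Or.inr hj), one_apply_ne (ne_of_mem_of_not_mem hi₀s hj),
        mul_zero, add_zero]
    · exact (transvection_mul_apply_of_ne k i₀ i j hik c (M : Matrix ι ι R)).trans (hMs i j hij)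

theorem EqOneOutside.exists_mul_apply_self_eq_one [IsLocalRing R] {I : Ideal R} {s : Finset ι}
    {M : SpecialLinearGroup ι R} (hMs : EqOneOutside s M) (hM : M ∈ congruenceSubgroup (I ^ 2))
    {k q : ι} (hk : k ∈ s) (hq : q ∈ s) (hkq : k ≠ q) :
    ∃ E ∈ transvectionSubgroup I, E * M ∈ congruenceSubgroup (I ^ 2) ∧ (E * M) k k = 1 ∧
      EqOneOutside s (E * M) := by
  obtain ⟨E, hE, hunit, hEs⟩ := hMs.exists_mul_isUnit_apply_self hM k
  have hEM : E * M ∈ congruenceSubgroup (I ^ 2) :=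
    mul_mem (transvectionSubgroup_le_congruenceSubgroup _ hE) hM
  set u := hunit.unit
  have hu : (u : R) - 1 ∈ I ^ 2 := by simpa [u] using mem_congruenceSubgroup_iff.1 hEM k k
  have hD : ∀ i j, (unitDiag q k u * (E * M)) i j =
      (Pi.mulSingle q (u : R) * Pi.mulSingle k ((u⁻¹ : Rˣ) : R) : ι → R) i * (E * M) i j := by
    intro i j
    rw [coe_mul, coe_unitDiag, diagonal_mul]
  refine ⟨unitDiag q k u * E, mul_mem (unitDiag_mem_transvectionSubgroup hkq.symm hu)
    (transvectionSubgroup_mono (Ideal.pow_le_self two_ne_zero) hE), ?_, ?_, ?_⟩ <;>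
    rw [mul_assoc]
  · exact mul_mem (unitDiag_mem_congruenceSubgroup q k hu) hEM
  · simp [hD, hkq, u]
  · intro i j hij
    rw [hD, hEs i j hij]
    rcases eq_or_ne i j with rfl | hne
    · have hi : i ∉ s := hij.elim id id
      simp [Pi.mulSingle_eq_of_ne (ne_of_mem_of_not_mem hq hi).symm,
        Pi.mulSingle_eq_of_ne (ne_of_mem_of_not_mem hk hi).symm]
    · simp [one_apply_ne hne]

theorem EqOneOutside.exists_mul_mul_eqOneOutside_erase [IsLocalRing R] {I : Ideal R}
    {s : Finset ι} {M : SpecialLinearGroup ι R} (hMs : EqOneOutside s M)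
    (hM : M ∈ congruenceSubgroup (I ^ 2)) {k q : ι} (hk : k ∈ s) (hq : q ∈ s) (hkq : k ≠ q) :
    ∃ E ∈ transvectionSubgroup I, ∃ F ∈ transvectionSubgroup I,
      E * M * F ∈ congruenceSubgroup (I ^ 2) ∧ EqOneOutside (s.erase k) (E * M * F) := by
  obtain ⟨D, hD, hDM, hkk, hDs⟩ := hMs.exists_mul_apply_self_eq_one hM hk hq hkq
  have hJ := mem_congruenceSubgroup_iff.1 hDM
  obtain ⟨E, hE, F, hF, hEF⟩ := exists_mul_mul_apply_eq_schur (I ^ 2) hkk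
    (fun i hi ↦ by simpa [one_apply_ne hi] using hJ i k)
    (fun j hj ↦ by simpa [one_apply_ne hj.symm] using hJ k j)
  have hle := transvectionSubgroup_mono (ι := ι) (Ideal.pow_le_self two_ne_zero : I ^ 2 ≤ I)
  have hΓ := transvectionSubgroup_le_congruenceSubgroup (ι := ι) (I ^ 2)
  refine ⟨E * D, mul_mem (hle hE) hD, F, hle hF, ?_, fun i j hij ↦ ?_⟩ <;> rw [mul_assoc E]
  · exact mul_mem (mul_mem (hΓ hE) hDM) (hΓ hF)
  rw [coe_mul, coe_mul, hEF]
  split_ifs with h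
  · rfl
  push Not at h
  simp only [Finset.mem_erase, h.1, h.2, ne_eq, not_false_eq_true, true_and] at hij
  rcases hij with hi | hj
  · rw [hDs i k (Or.inl hi), one_apply_ne h.1, zero_mul, sub_zero, hDs i j (Or.inl hi)]
  · rw [hDs k j (Or.inr hj), one_apply_ne h.2.symm, mul_zero, sub_zero, hDs i j (Or.inr hj)]

theorem EqOneOutside.mem_transvectionSubgroup [IsLocalRing R] {I : Ideal R} {s : Finset ι}
    {M : SpecialLinearGroup ι R} (hMs : EqOneOutside s M) (hM : M ∈ congruenceSubgroup (I ^ 2)) :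
    M ∈ transvectionSubgroup I := by
  induction s using Finset.strongInduction generalizing M with
  | H s ih =>
  rcases le_or_gt s.card 1 with hs | hs
  · rw [hMs.eq_one hs]
    exact one_mem _
  obtain ⟨k, hk, q, hq, hkq⟩ := Finset.one_lt_card.1 hs
  obtain ⟨E, hE, F, hF, hEMF, hs'⟩ := hMs.exists_mul_mul_eqOneOutside_erase hM hk hq hkq
  rw [show M = E⁻¹ * (E * M * F) * F⁻¹ by group]
  exact mul_mem (mul_mem (inv_mem hE) (ih _ (Finset.erase_ssubset hk) hs' hEMF)) (inv_mem hF)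

theorem congruenceSubgroup_sq_le_transvectionSubgroup [IsLocalRing R] (I : Ideal R) :
    congruenceSubgroup (ι := ι) (I ^ 2) ≤ transvectionSubgroup I := fun _ hM ↦
  EqOneOutside.mem_transvectionSubgroup (s := Finset.univ) (fun _ _ h ↦ by simp at h) hM

theorem transvectionSubgroup_top [IsLocalRing R] :
    transvectionSubgroup (ι := ι) (⊤ : Ideal R) = ⊤ :=
  eq_top_iff.2 fun M _ ↦ congruenceSubgroup_sq_le_transvectionSubgroup ⊤ <|
    mem_congruenceSubgroup_iff.2 fun _ _ ↦ by rw [Ideal.top_pow]; exact Submodule.mem_top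

end Matrix.SpecialLinearGroup

theorem sln_transvection_generation_general
    {R : Type*} [CommRing R] [IsLocalRing R] (n : ℕ) (𝔞 : Ideal R) :
    (∀ M : SpecialLinearGroup (Fin n) R,
      (∀ i j, (M : Matrix (Fin n) (Fin n) R) i j - (1 : Matrix (Fin n) (Fin n) R) i j ∈ 𝔞 ^ 2) →
      M ∈ Subgroup.closure {T : SpecialLinearGroup (Fin n) R |
        ∃ (a b : Fin n) (r : R), a ≠ b ∧ r ∈ 𝔞 ∧
          (T : Matrix (Fin n) (Fin n) R) = Matrix.transvection a b r}) ∧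
    (∀ M ∈ Subgroup.closure {T : SpecialLinearGroup (Fin n) R |
        ∃ (a b : Fin n) (r : R), a ≠ b ∧ r ∈ 𝔞 ∧
          (T : Matrix (Fin n) (Fin n) R) = Matrix.transvection a b r},
      ∀ i j, (M : Matrix (Fin n) (Fin n) R) i j - (1 : Matrix (Fin n) (Fin n) R) i j ∈ 𝔞) ∧
    Subgroup.closure {T : SpecialLinearGroup (Fin n) R |
        ∃ (a b : Fin n) (r : R), a ≠ b ∧
          (T : Matrix (Fin n) (Fin n) R) = Matrix.transvection a b r} = ⊤ := by
  open SpecialLinearGroup in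
  exact ⟨fun M hM ↦ congruenceSubgroup_sq_le_transvectionSubgroup 𝔞
      (mem_congruenceSubgroup_iff.2 hM),
    fun M hM ↦ mem_congruenceSubgroup_iff.1 (transvectionSubgroup_le_congruenceSubgroup 𝔞 hM),
    by simpa [transvectionSubgroup] using transvectionSubgroup_top (ι := Fin n) (R := R)⟩

/-- For a commutative local ring `R`, `n ≥ 2` and an ideal `𝔞` of `R`,
with `U_𝔞 = {M ∈ SL_n(R) : M ≡ I mod 𝔞}` and `V_𝔞` the subgroup generated by the
transvections `t_ab^r`, `r ∈ 𝔞`, one has `U_{𝔞²} ⊆ V_𝔞 ⊆ U_𝔞`. In particular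
(`𝔞 = R`), `SL_n(R)` is generated by the elementary transvections. -/
theorem sln_transvection_generation
    {R : Type*} [CommRing R] [IsLocalRing R] (n : ℕ) (hn : 2 ≤ n) (𝔞 : Ideal R) :
    (∀ M : SpecialLinearGroup (Fin n) R,
      (∀ i j, (M : Matrix (Fin n) (Fin n) R) i j - (1 : Matrix (Fin n) (Fin n) R) i j ∈ 𝔞 ^ 2) →
      M ∈ Subgroup.closure {T : SpecialLinearGroup (Fin n) R |
        ∃ (a b : Fin n) (r : R), a ≠ b ∧ r ∈ 𝔞 ∧
          (T : Matrix (Fin n) (Fin n) R) = Matrix.transvection a b r}) ∧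
    (∀ M ∈ Subgroup.closure {T : SpecialLinearGroup (Fin n) R |
        ∃ (a b : Fin n) (r : R), a ≠ b ∧ r ∈ 𝔞 ∧
          (T : Matrix (Fin n) (Fin n) R) = Matrix.transvection a b r},
      ∀ i j, (M : Matrix (Fin n) (Fin n) R) i j - (1 : Matrix (Fin n) (Fin n) R) i j ∈ 𝔞) ∧
    Subgroup.closure {T : SpecialLinearGroup (Fin n) R |
        ∃ (a b : Fin n) (r : R), a ≠ b ∧
          (T : Matrix (Fin n) (Fin n) R) = Matrix.transvection a b r} = ⊤ :=
  sln_transvection_generation_general n 𝔞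
end

section
/- Let R be a commutative local ring with residue field k and let n ≥ 2. If n ≥ 3, or if n = 2 and k has more than 3 elements (k ≠ F₂ and k ≠ F₃), then the commutator subgroup of SL_n(R) is equal to SL_n(R). -/
/-!
Over a local ring, Gaussian elimination needs no row swaps or scalings: a column of an invertible
matrix always has a unit entry, one transvection (two if that unit is the pivot itself) turns the
pivot into `1`, and the pivot's row and column are then cleared by transvections. Hence `SL_n(R)`
is generated by the elementary transvections `e_ij(c)`, and it suffices that each of them is a
commutator. With a third index `k`, `e_ij(ab) = ⁅e_ik(a), e_kj(b)⁆`. Without one, conjugate by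
`D = diag(u, u⁻¹)` in the positions `i, j`: `⁅D, e_ij(b)⁆ = e_ij((u² - 1) b)`, and a residue field
with more than three elements contains a class `u ≠ 0, ±1`, whose lifts make both `u` and `u² - 1`
units.
-/

open Matrix IsLocalRing
open scoped commutatorElement

namespace Matrix

variable {ι R : Type*} [Fintype ι] [DecidableEq ι] [CommRing R]

def EqOneOn (s : Finset ι) (A : Matrix ι ι R) : Prop :=
  ∀ i j, i ∈ s ∨ j ∈ s → A i j = (1 : Matrix ι ι R) i j

lemma one_add_sum_single_col_mul_apply (p : ι) (t : Finset ι) (c : ι → R) (M : Matrix ι ι R)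
    (a b : ι) :
    ((1 + ∑ i ∈ t, single i p (c i)) * M) a b = M a b + if a ∈ t then c a * M p b else 0 := by
  rw [add_mul, one_mul, add_apply, Finset.sum_mul, sum_apply]
  congr 1
  split_ifs with ha
  · rw [Finset.sum_eq_single_of_mem a ha fun i _ hia => single_mul_apply_of_ne _ _ _ _ _ hia.symm _,
      single_mul_apply_same]
  · exact Finset.sum_eq_zero fun i hi =>
      single_mul_apply_of_ne _ _ _ _ _ (ne_of_mem_of_not_mem hi ha).symm _

lemma mul_one_add_sum_single_row_apply (p : ι) (t : Finset ι) (c : ι → R) (M : Matrix ι ι R)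
    (a b : ι) :
    (M * (1 + ∑ j ∈ t, single p j (c j))) a b = M a b + if b ∈ t then M a p * c b else 0 := by
  rw [mul_add, mul_one, add_apply, Finset.mul_sum, sum_apply]
  congr 1
  split_ifs with hb
  · rw [Finset.sum_eq_single_of_mem b hb fun j _ hjb => mul_single_apply_of_ne _ _ _ _ _ hjb.symm _,
      mul_single_apply_same]
  · exact Finset.sum_eq_zero fun j hj =>
      mul_single_apply_of_ne _ _ _ _ _ (ne_of_mem_of_not_mem hj hb).symm _

namespace EqOneOn

variable {s : Finset ι} {A : Matrix ι ι R}

lemma transvection_mul (hA : EqOneOn s A) {i j : ι} (hi : i ∉ s) (hj : j ∉ s) (c : R) :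
    EqOneOn s (transvection i j c * A) := by
  intro a b hab
  rcases eq_or_ne a i with rfl | hai
  · have hb := hab.resolve_left hi
    rw [transvection_mul_apply_same, hA _ _ (Or.inr hb), hA j b (Or.inr hb),
      one_apply_ne (ne_of_mem_of_not_mem hb hj).symm, mul_zero, add_zero]
  · rw [transvection_mul_apply_of_ne _ _ _ _ hai]
    exact hA a b hab

lemma eq_one (hA : EqOneOn s A) (hs : ∀ i ∉ s, ∀ j ∉ s, i = j) (hdet : A.det = 1) : A = 1 := by
  ext i j
  by_cases hij : i ∈ s ∨ j ∈ s
  · exact hA i j hij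
  obtain ⟨hi, hj⟩ := not_or.1 hij
  obtain rfl := hs i hi j hj
  have hA' : ∀ k l, k ≠ i ∨ l ≠ i → A k l = (1 : Matrix ι ι R) k l := by
    intro k l hkl
    refine hA k l (by_contra fun h => ?_)
    obtain ⟨hk, hl⟩ := not_or.1 h
    exact hkl.elim (· (hs k hk i hi)) (· (hs l hl i hi))
  have hdiag : A = diagonal fun k => A k k := by
    ext k l
    rcases eq_or_ne k l with rfl | hkl
    · rw [diagonal_apply_eq]
    · rw [diagonal_apply_ne _ hkl, hA' k l (not_and_or.1 fun h => hkl (h.1.trans h.2.symm)),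
        one_apply_ne hkl]
  have hprod : ∏ k, A k k = A i i :=
    Finset.prod_eq_single (f := fun k => A k k) i
      (fun k _ hk => by rw [hA' k k (Or.inl hk), one_apply_eq]) (by simp)
  calc A i i = ∏ k, A k k := hprod.symm
    _ = 1 := by rw [← det_diagonal, ← hdiag, hdet]
    _ = (1 : Matrix ι ι R) i i := (one_apply_eq i).symm

lemma insert_of_apply_eq_one (hA : EqOneOn s A) {p : ι} (hp : A p p = 1) :
    EqOneOn (insert p s)
      ((1 + ∑ i ∈ Finset.univ.erase p, single i p (-A i p)) * A *
        (1 + ∑ j ∈ Finset.univ.erase p, single p j (-A p j))) := by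
  set L := 1 + ∑ i ∈ Finset.univ.erase p, single i p (-A i p)
  have hLA : ∀ a b, (L * A) a b = A a b + if a ≠ p then -A a p * A p b else 0 := by
    intro a b
    simp only [L, one_add_sum_single_col_mul_apply, Finset.mem_erase, Finset.mem_univ, and_true]
  have hcol : ∀ a, (L * A) a p = (1 : Matrix ι ι R) a p := by
    intro a
    rcases eq_or_ne a p with rfl | hap
    · simp [hLA, hp]
    · simp [hLA, hap, hp]
  intro a b hab
  rw [mul_one_add_sum_single_row_apply, hcol, hLA]
  rcases eq_or_ne a p with rfl | hap
  · rcases eq_or_ne b a with rfl | hba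
    · simp [hp]
    · simp [hba, one_apply_ne hba.symm]
  rcases eq_or_ne b p with rfl | hbp
  · simp [hap, hp]
  have hab' : a ∈ s ∨ b ∈ s := by simpa [hap, hbp] using hab
  have hApb : A a p * A p b = 0 := by
    rcases hab' with ha | hb
    · rw [hA a p (Or.inl ha), one_apply_ne hap, zero_mul]
    · rw [hA p b (Or.inr hb), one_apply_ne hbp.symm, mul_zero]
  simp [hap, hbp, hA a b hab', hApb]

end EqOneOn

lemma exists_transvection_mul_apply_eq_one {A : Matrix ι ι R} (i : ι) {j l : ι}
    (hu : IsUnit (A j l)) : ∃ c, (transvection i j c * A : Matrix ι ι R) i l = 1 := by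
  obtain ⟨u, hu⟩ := hu
  refine ⟨(1 - A i l) * ↑u⁻¹, ?_⟩
  rw [transvection_mul_apply_same, ← hu, mul_assoc, Units.inv_mul, mul_one, add_sub_cancel]

lemma exists_isUnit_apply_of_isUnit_det [IsLocalRing R] {A : Matrix ι ι R} (hA : IsUnit A.det)
    (p : ι) : ∃ k, IsUnit (A k p) := by
  by_contra! h
  have hdet : A.det ∈ maximalIdeal R := by
    have : (adjugate A * A) p p = A.det := by simp [adjugate_mul]
    rw [← this, mul_apply]
    exact Ideal.sum_mem _ fun k _ => Ideal.mul_mem_left _ _ ((mem_maximalIdeal _).2 (h k))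
  exact (mem_maximalIdeal _).1 hdet hA

namespace SpecialLinearGroup

variable (ι R) in
def elementarySubgroup : Subgroup (SpecialLinearGroup ι R) :=
  Subgroup.closure {g | ∃ (i j : ι) (hij : i ≠ j) (c : R), transvection hij c = g}

lemma transvection_mem_elementarySubgroup {i j : ι} (hij : i ≠ j) (c : R) :
    transvection hij c ∈ elementarySubgroup ι R :=
  Subgroup.subset_closure ⟨i, j, hij, c, rfl⟩

lemma exists_mem_elementarySubgroup_coe_eq_one_add_sum_single_col {p : ι} (c : ι → R)
    {t : Finset ι} (hp : p ∉ t) :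
    ∃ g ∈ elementarySubgroup ι R, (g : Matrix ι ι R) = 1 + ∑ i ∈ t, single i p (c i) := by
  induction t using Finset.induction_on with
  | empty => exact ⟨1, one_mem _, by simp⟩
  | insert i t hit ih =>
    obtain ⟨hpi, hpt⟩ := not_or.1 (Finset.mem_insert.not.1 hp)
    obtain ⟨g, hg, hg_eq⟩ := ih hpt
    refine ⟨transvection (Ne.symm hpi) (c i) * g,
      mul_mem (transvection_mem_elementarySubgroup _ _) hg, ?_⟩
    rw [coe_mul, hg_eq, transvection_coe, Finset.sum_insert hit]
    have hz : ∑ x ∈ t, single i p (c i) * single x p (c x) = 0 := Finset.sum_eq_zero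
      fun x hx => single_mul_single_of_ne _ _ _ _ (ne_of_mem_of_not_mem hx hpt).symm _
    rw [add_mul, one_mul, mul_add, mul_one, Finset.mul_sum, hz]
    abel

lemma exists_mem_elementarySubgroup_coe_eq_one_add_sum_single_row {p : ι} (c : ι → R)
    {t : Finset ι} (hp : p ∉ t) :
    ∃ g ∈ elementarySubgroup ι R, (g : Matrix ι ι R) = 1 + ∑ j ∈ t, single p j (c j) := by
  induction t using Finset.induction_on with
  | empty => exact ⟨1, one_mem _, by simp⟩
  | insert j t hjt ih =>
    obtain ⟨hpj, hpt⟩ := not_or.1 (Finset.mem_insert.not.1 hp)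
    obtain ⟨g, hg, hg_eq⟩ := ih hpt
    refine ⟨g * transvection hpj (c j),
      mul_mem hg (transvection_mem_elementarySubgroup _ _), ?_⟩
    rw [coe_mul, hg_eq, transvection_coe, Finset.sum_insert hjt]
    have hz : ∑ x ∈ t, single p x (c x) * single p j (c j) = 0 := Finset.sum_eq_zero
      fun x hx => single_mul_single_of_ne _ _ _ _ (ne_of_mem_of_not_mem hx hpt) _
    rw [mul_add, mul_one, add_mul, one_mul, Finset.sum_mul, hz]
    abel

lemma commutatorElement_transvection_transvection {i j k : ι} (hij : i ≠ j) (hik : i ≠ k)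
    (hkj : k ≠ j) (a b : R) :
    ⁅transvection hik a, transvection hkj b⁆ = transvection hij (a * b) := by
  have h : transvection hik a * transvection hkj b =
      transvection hij (a * b) * transvection hkj b * transvection hik a := Subtype.ext <| by
    simp only [coe_mul, transvection_coe, mul_add, mul_one, add_mul, one_mul,
      single_mul_single_same, ne_eq, hkj.symm, hij.symm, not_false_eq_true,
      single_mul_single_of_ne, add_zero]
    abel
  rw [commutatorElement_def, h]
  group

def diagUnit {i j : ι} (hij : i ≠ j) (u : Rˣ) : SpecialLinearGroup ι R :=
  ⟨diagonal fun k => if k = i then (u : R) else if k = j then ↑u⁻¹ else 1, by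
    rw [det_diagonal, Fintype.prod_eq_mul i j hij (fun k hk => by simp [hk.1, hk.2])]
    simp [hij.symm]⟩

lemma diagUnit_coe {i j : ι} (hij : i ≠ j) (u : Rˣ) :
    (diagUnit hij u : Matrix ι ι R) =
      diagonal fun k => if k = i then (u : R) else if k = j then ↑u⁻¹ else 1 :=
  rfl

lemma diagUnit_mul_transvection {i j : ι} (hij : i ≠ j) (u : Rˣ) (b : R) :
    diagUnit hij u * transvection hij b = transvection hij (u ^ 2 * b) * diagUnit hij u := by
  refine Subtype.ext ?_
  rw [coe_mul, coe_mul, diagUnit_coe, transvection_coe, transvection_coe]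
  ext a c
  simp only [mul_add, add_mul, diagonal_mul, mul_diagonal, single_apply, add_apply]
  have hu : (u : R) ^ 2 * b * ↑u⁻¹ = u * b := by
    rw [show (u : R) ^ 2 * b = u * b * u by ring, Units.mul_inv_cancel_right]
  simp only [one_apply]
  grind

lemma commutatorElement_diagUnit_transvection {i j : ι} (hij : i ≠ j) (u : Rˣ) (b : R) :
    ⁅diagUnit hij u, transvection hij b⁆ = transvection hij (((u : R) ^ 2 - 1) * b) := by
  rw [commutatorElement_def, diagUnit_mul_transvection, mul_inv_cancel_right, transvection_inv,
    ← transvection_add]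
  congr 1
  ring

lemma transvection_mem_commutator_of_ne {i j k : ι} (hij : i ≠ j) (hik : i ≠ k) (hkj : k ≠ j)
    (c : R) : transvection hij c ∈ commutator (SpecialLinearGroup ι R) := by
  rw [← mul_one c, ← commutatorElement_transvection_transvection hij hik hkj, commutator_def]
  exact Subgroup.commutator_mem_commutator (Subgroup.mem_top _) (Subgroup.mem_top _)

lemma transvection_mem_commutator_of_isUnit_sq_sub_one {u : Rˣ} (hu : IsUnit ((u : R) ^ 2 - 1))
    {i j : ι} (hij : i ≠ j) (c : R) : transvection hij c ∈ commutator (SpecialLinearGroup ι R) := by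
  obtain ⟨v, hv⟩ := hu
  rw [show c = ((u : R) ^ 2 - 1) * (↑v⁻¹ * c) by rw [← hv, ← mul_assoc, Units.mul_inv, one_mul],
    ← commutatorElement_diagUnit_transvection, commutator_def]
  exact Subgroup.commutator_mem_commutator (Subgroup.mem_top _) (Subgroup.mem_top _)

section IsLocalRing

variable [IsLocalRing R] {s : Finset ι}

lemma exists_mem_elementarySubgroup_mul_apply_eq_one (A : SpecialLinearGroup ι R)
    (hA : EqOneOn s (A : Matrix ι ι R)) {p q : ι} (hp : p ∉ s) (hq : q ∉ s) (hpq : p ≠ q) :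
    ∃ g ∈ elementarySubgroup ι R,
      EqOneOn s (g * A : Matrix ι ι R) ∧ (g * A : Matrix ι ι R) p p = 1 := by
  have hpivot (B : SpecialLinearGroup ι R) (hB : EqOneOn s (B : Matrix ι ι R)) {k : ι}
      (hk : k ∉ s) (hkp : k ≠ p) (hu : IsUnit (B k p)) : ∃ g ∈ elementarySubgroup ι R,
        EqOneOn s (g * B : Matrix ι ι R) ∧ (g * B : Matrix ι ι R) p p = 1 := by
    obtain ⟨c, hc⟩ := exists_transvection_mul_apply_eq_one p hu
    exact ⟨transvection hkp.symm c, transvection_mem_elementarySubgroup _ _,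
      hB.transvection_mul hp hk c, hc⟩
  obtain ⟨k, hk⟩ := exists_isUnit_apply_of_isUnit_det (by rw [A.det_coe]; exact isUnit_one) p
  have hks : k ∉ s := fun hks => not_isUnit_zero <| by
    rwa [hA k p (Or.inl hks), one_apply_ne (ne_of_mem_of_not_mem hks hp)] at hk
  by_cases hkp : k = p
  -- the only unit of column `p` may be the pivot itself: first make the `(q, p)` entry `1`
  · subst hkp
    obtain ⟨c, hc⟩ := exists_transvection_mul_apply_eq_one q hk
    obtain ⟨g, hg, hgA, hgA_pp⟩ := hpivot (transvection hpq.symm c * A)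
      (hA.transvection_mul hq hp c) hq hpq.symm (by rw [coe_mul]; exact hc.symm ▸ isUnit_one)
    refine ⟨g * transvection hpq.symm c, mul_mem hg (transvection_mem_elementarySubgroup _ _), ?_⟩
    simpa only [coe_mul, mul_assoc] using And.intro hgA hgA_pp
  · exact hpivot A hA hks hkp hk

lemma exists_mem_elementarySubgroup_eqOneOn_insert (A : SpecialLinearGroup ι R)
    (hA : EqOneOn s (A : Matrix ι ι R)) {p q : ι} (hp : p ∉ s) (hq : q ∉ s) (hpq : p ≠ q) :
    ∃ g₁ ∈ elementarySubgroup ι R, ∃ g₂ ∈ elementarySubgroup ι R,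
      EqOneOn (insert p s) (g₁ * A * g₂ : Matrix ι ι R) := by
  obtain ⟨g, hg, hgA, hpp⟩ := exists_mem_elementarySubgroup_mul_apply_eq_one A hA hp hq hpq
  obtain ⟨L, hL, hL_eq⟩ := exists_mem_elementarySubgroup_coe_eq_one_add_sum_single_col
    (fun i => -(g * A : Matrix ι ι R) i p) (Finset.notMem_erase p Finset.univ)
  obtain ⟨U, hU, hU_eq⟩ := exists_mem_elementarySubgroup_coe_eq_one_add_sum_single_row
    (fun j => -(g * A : Matrix ι ι R) p j) (Finset.notMem_erase p Finset.univ)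
  refine ⟨L * g, mul_mem hL hg, U, hU, ?_⟩
  have := hgA.insert_of_apply_eq_one hpp
  rwa [← hL_eq, ← hU_eq, ← Matrix.mul_assoc] at this

lemma mem_elementarySubgroup_of_eqOneOn_compl (t : Finset ι) (A : SpecialLinearGroup ι R)
    (hA : EqOneOn tᶜ (A : Matrix ι ι R)) : A ∈ elementarySubgroup ι R := by
  induction t using Finset.strongInduction generalizing A with
  | H t ih =>
    by_cases ht : ∃ p ∈ t, ∃ q ∈ t, p ≠ q
    · obtain ⟨p, hp, q, hq, hpq⟩ := ht
      obtain ⟨g₁, hg₁, g₂, hg₂, hB⟩ := exists_mem_elementarySubgroup_eqOneOn_insert A hA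
        (by simpa) (by simpa) hpq
      rw [← Finset.compl_erase, ← coe_mul, ← coe_mul] at hB
      have hA_eq : A = g₁⁻¹ * (g₁ * A * g₂) * g₂⁻¹ := by group
      rw [hA_eq]
      exact mul_mem (mul_mem (inv_mem hg₁) (ih _ (Finset.erase_ssubset hp) _ hB)) (inv_mem hg₂)
    · push Not at ht
      rw [show A = 1 from Subtype.ext (hA.eq_one (by simpa using ht) A.det_coe)]
      exact one_mem _

theorem elementarySubgroup_eq_top : elementarySubgroup ι R = ⊤ :=
  eq_top_iff.2 fun A _ => mem_elementarySubgroup_of_eqOneOn_compl Finset.univ A (by simp [EqOneOn])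

lemma commutator_eq_top_of_forall_transvection_mem
    (h : ∀ (i j : ι) (hij : i ≠ j) (c : R),
      transvection hij c ∈ commutator (SpecialLinearGroup ι R)) :
    commutator (SpecialLinearGroup ι R) = ⊤ := by
  rw [eq_top_iff, ← elementarySubgroup_eq_top, elementarySubgroup, Subgroup.closure_le]
  rintro _ ⟨i, j, hij, c, rfl⟩
  exact h i j hij c

theorem commutator_eq_top_of_three_le_card (h : 3 ≤ Fintype.card ι) :
    commutator (SpecialLinearGroup ι R) = ⊤ :=
  commutator_eq_top_of_forall_transvection_mem fun i j hij c => by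
    obtain ⟨k, hki, hkj⟩ := Cardinal.exists_ne_ne_of_three_le (by simpa using h) i j
    exact transvection_mem_commutator_of_ne hij hki.symm hkj c

theorem commutator_eq_top_of_isUnit_sq_sub_one {u : Rˣ} (hu : IsUnit ((u : R) ^ 2 - 1)) :
    commutator (SpecialLinearGroup ι R) = ⊤ :=
  commutator_eq_top_of_forall_transvection_mem fun _ _ hij c =>
    transvection_mem_commutator_of_isUnit_sq_sub_one hu hij c

end IsLocalRing

end SpecialLinearGroup

end Matrix

lemma exists_ne_zero_sq_ne_one {K : Type*} [Field K] (h : 3 < Nat.card K ∨ Infinite K) :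
    ∃ x : K, x ≠ 0 ∧ x ^ 2 ≠ 1 := by
  have hcard : (([0, 1, -1] : List K).length : Cardinal) < Cardinal.mk K := by
    rcases h with h | h
    · have : Finite K := Nat.finite_of_card_ne_zero (by omega)
      rw [← Nat.cast_card]
      exact_mod_cast h
    · exact Cardinal.natCast_lt_aleph0.trans_le (Cardinal.aleph0_le_mk K)
  obtain ⟨x, hx⟩ := Cardinal.exists_notMem_of_length_lt _ hcard
  simp only [List.mem_cons, List.not_mem_nil, or_false, not_or] at hx
  exact ⟨x, hx.1, sq_ne_one_iff.2 hx.2⟩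

lemma IsLocalRing.exists_isUnit_sq_sub_one {R : Type*} [CommRing R] [IsLocalRing R]
    (h : 3 < Nat.card (ResidueField R) ∨ Infinite (ResidueField R)) :
    ∃ u : Rˣ, IsUnit ((u : R) ^ 2 - 1) := by
  obtain ⟨x, hx0, hx⟩ := exists_ne_zero_sq_ne_one h
  obtain ⟨y, rfl⟩ := residue_surjective x
  refine ⟨((residue_ne_zero_iff_isUnit y).1 hx0).unit, (residue_ne_zero_iff_isUnit _).1 ?_⟩
  simpa [sub_eq_zero] using hx

theorem sln_perfect_general
    {R : Type*} [CommRing R] [IsLocalRing R] (n : ℕ)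
    (h : 3 ≤ n ∨ (n = 2 ∧
      (3 < Nat.card (IsLocalRing.ResidueField R) ∨ Infinite (IsLocalRing.ResidueField R)))) :
    commutator (SpecialLinearGroup (Fin n) R) = ⊤ := by
  rcases h with h3 | ⟨-, hk⟩
  · exact SpecialLinearGroup.commutator_eq_top_of_three_le_card (by simpa using h3)
  · obtain ⟨u, hu⟩ := exists_isUnit_sq_sub_one hk
    exact SpecialLinearGroup.commutator_eq_top_of_isUnit_sq_sub_one hu

/-- For a commutative local ring `R` with residue field `k`, if `n ≥ 3`,
or `n = 2` and `k` has more than 3 elements, then `SL_n(R)` is its own commutator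
subgroup. -/
theorem sln_perfect
    {R : Type*} [CommRing R] [IsLocalRing R] (n : ℕ) (hn : 2 ≤ n)
    (h : 3 ≤ n ∨ (n = 2 ∧
      (3 < Nat.card (IsLocalRing.ResidueField R) ∨ Infinite (IsLocalRing.ResidueField R)))) :
    commutator (SpecialLinearGroup (Fin n) R) = ⊤ :=
  sln_perfect_general n h
end

section
/- There exists a group homomorphism ρ₀ : SL_3(F₂) → GL_3(ℤ₂), where ℤ₂ denotes the ring of 2-adic integers, such that for every M ∈ SL_3(F₂) and all indices i,j, reducing the (i,j)-entry of ρ₀(M) modulo 2 (via the canonical surjection ℤ₂ → F₂) gives M(i,j). In other words, ρ₀ is a lift to ℤ₂ of the inclusion SL_3(F₂) ⊆ GL_3(F₂). -/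
open Matrix QuadraticAlgebra

/-!
`SL₃(F₂) ≅ PSL₂(F₇)` has a 3-dimensional representation over `ℤ[ω]`, `ω = (1 + √-7)/2`, i.e.
`ω² = ω - 2`. As `2 = ω(1 - ω)` splits, `ω ↦ 0` is a reduction `ℤ[ω] → F₂`, and by Hensel's lemma
`ℤ₂` contains a root of `X² - X + 2` divisible by `2`, giving `ℤ[ω] → ℤ₂` compatible with it.
Take explicit lifts to `GL₃(ℤ[ω])` of the six transvections of `F₂³`. The group `G` they generate
maps onto `SL₃(F₂) = GL₃(F₂)`, which is generated by transvections, and enumerating the orbit of `1`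
under the generators shows `|G| ≤ 168 = |GL₃(F₂)|`. So reduction is an isomorphism `G ≅ SL₃(F₂)`;
its inverse followed by `ℤ[ω] → ℤ₂` is the lift.
-/

namespace Matrix

variable {ι : Type*} [Fintype ι] [DecidableEq ι]

theorem GeneralLinearGroup.det_eq_one_of_zmod_two (u : GL ι (ZMod 2)) :
    (u : Matrix ι ι (ZMod 2)).det = 1 :=
  Fin.eq_one_of_ne_zero _ (GeneralLinearGroup.det u).ne_zero

theorem SpecialLinearGroup.eq_top_of_transvection_mem_zmod_two [Nontrivial ι]
    (H : Subgroup (SpecialLinearGroup ι (ZMod 2)))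
    (hH : ∀ i j (hij : i ≠ j), SpecialLinearGroup.transvection hij 1 ∈ H) : H = ⊤ := by
  refine eq_top_iff.2 fun M _ => ?_
  refine diagonal_transvection_induction' (· ∈ H) M (fun i j hij c hc => ?_)
    (fun i j hij a => ?_) (fun _ _ => H.mul_mem)
  · obtain rfl : c = 1 := Fin.eq_one_of_ne_zero c hc
    convert H.one_mem
    exact Subtype.ext (by simp [diag2n_coe])
  · by_cases ha : a = 0
    · rw [ha, transvection_coeff_zero]
      exact H.one_mem
    · obtain rfl : a = 1 := Fin.eq_one_of_ne_zero a ha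
      exact hH i j hij

theorem GeneralLinearGroup.eq_top_of_transvection_mem_zmod_two [Nontrivial ι]
    (H : Subgroup (GL ι (ZMod 2)))
    (hH : ∀ i j (hij : i ≠ j),
      SpecialLinearGroup.toGL (SpecialLinearGroup.transvection hij (1 : ZMod 2)) ∈ H) :
    H = ⊤ := by
  have hSL :=
    SpecialLinearGroup.eq_top_of_transvection_mem_zmod_two (H.comap SpecialLinearGroup.toGL) hH
  refine eq_top_iff.2 fun u _ => ?_
  have hu : SpecialLinearGroup.toGL ⟨u, det_eq_one_of_zmod_two u⟩ ∈ H :=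
    Subgroup.mem_comap.1 (hSL ▸ Subgroup.mem_top _)
  rwa [show SpecialLinearGroup.toGL ⟨u, det_eq_one_of_zmod_two u⟩ = u from Units.ext rfl] at hu

theorem GeneralLinearGroup.card_fin_three_zmod_two : Nat.card (GL (Fin 3) (ZMod 2)) = 168 := by
  rw [card_GL_field]
  decide

variable {α : Type*}

/-! `mulFinThree` and `decidableEqFinThree` read entries only at literal indices, so that the kernel
evaluates each entry of an iterated product once; with `Matrix.mul` and the `Fintype`-based
`DecidableEq` instance, `decide` on the orbit below takes about twice as long. -/

def mulFinThree [Mul α] [Add α] (A B : Matrix (Fin 3) (Fin 3) α) : Matrix (Fin 3) (Fin 3) α :=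
  !![A 0 0 * B 0 0 + A 0 1 * B 1 0 + A 0 2 * B 2 0,
     A 0 0 * B 0 1 + A 0 1 * B 1 1 + A 0 2 * B 2 1,
     A 0 0 * B 0 2 + A 0 1 * B 1 2 + A 0 2 * B 2 2;
     A 1 0 * B 0 0 + A 1 1 * B 1 0 + A 1 2 * B 2 0,
     A 1 0 * B 0 1 + A 1 1 * B 1 1 + A 1 2 * B 2 1,
     A 1 0 * B 0 2 + A 1 1 * B 1 2 + A 1 2 * B 2 2;
     A 2 0 * B 0 0 + A 2 1 * B 1 0 + A 2 2 * B 2 0,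
     A 2 0 * B 0 1 + A 2 1 * B 1 1 + A 2 2 * B 2 1,
     A 2 0 * B 0 2 + A 2 1 * B 1 2 + A 2 2 * B 2 2]

theorem mulFinThree_eq_mul [NonUnitalNonAssocSemiring α] (A B : Matrix (Fin 3) (Fin 3) α) :
    mulFinThree A B = A * B := by
  rw [eta_fin_three A, eta_fin_three B, mul_fin_three]
  rfl

instance decidableEqFinThree [DecidableEq α] : DecidableEq (Matrix (Fin 3) (Fin 3) α) :=
  fun A B => decidable_of_iff (A 0 0 = B 0 0 ∧ A 0 1 = B 0 1 ∧ A 0 2 = B 0 2 ∧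
    A 1 0 = B 1 0 ∧ A 1 1 = B 1 1 ∧ A 1 2 = B 1 2 ∧ A 2 0 = B 2 0 ∧ A 2 1 = B 2 1 ∧ A 2 2 = B 2 2)
    (by rw [eta_fin_three A, eta_fin_three B]; simp [and_assoc])

end Matrix

/-- Nothing is assumed about `key`, which only serves to skip duplicates: the result is checked
afterwards. -/
def closureByKey {α : Type*} (mul : α → α → α) (gens : List α) (key : α → ℕ) :
    ℕ → List α → List α → List α
  | 0, _, seen => seen
  | _, [], seen => seen
  | n + 1, x :: todo, seen =>
    let new := (gens.map (mul x)).filter fun y => !(seen.any fun s => key s == key y)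
    closureByKey mul gens key n (new ++ todo) (new ++ seen)

open Polynomial in
theorem PadicInt.exists_root_sq_sub_self_add_two :
    ∃ t : ℤ_[2], t * t = t - 2 ∧ PadicInt.toZMod t = 0 := by
  set f : ℤ_[2][X] := X ^ 2 - X + C 2
  have hf' : f.derivative.eval 0 = -1 := by simp [f]
  have hf : ‖f.eval 0‖ < ‖f.derivative.eval 0‖ ^ 2 := by
    have h2 : ‖(2 : ℤ_[2])‖ = 2⁻¹ := by exact_mod_cast PadicInt.norm_p (p := 2)
    norm_num [f, h2]
  obtain ⟨t, hroot, hnear, -⟩ := hensels_lemma hf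
  refine ⟨t, by linear_combination (by simpa [f] using hroot : t ^ 2 - t + 2 = 0), ?_⟩
  rw [← RingHom.mem_ker, PadicInt.ker_toZMod, IsLocalRing.mem_maximalIdeal,
    PadicInt.mem_nonunits]
  simpa [hf'] using hnear

abbrev ZOmega := QuadraticAlgebra ℤ (-2) 1

namespace ZOmega

def modOmega : ZOmega →ₐ[ℤ] ZMod 2 := lift ⟨0, by decide⟩

theorem exists_ringHom_padicInt_toZMod_comp_eq :
    ∃ φ : ZOmega →+* ℤ_[2], PadicInt.toZMod.comp φ = modOmega := by
  obtain ⟨t, ht, ht0⟩ := PadicInt.exists_root_sq_sub_self_add_two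
  have ht' : t * t = (-2 : ℤ) • 1 + (1 : ℤ) • t := by simp [ht, sub_eq_neg_add]
  let φ : ZOmega →ₐ[ℤ] ℤ_[2] := lift ⟨t, ht'⟩
  have hφ : PadicInt.toZMod.toIntAlgHom.comp φ = modOmega :=
    algHom_ext (by simp [φ, modOmega, ht0])
  exact ⟨φ, congrArg AlgHom.toRingHom hφ⟩

/-- The lifts of the transvections `1 + E₀₁, 1 + E₀₂, 1 + E₁₀, 1 + E₁₂, 1 + E₂₀, 1 + E₂₁`
in the 3-dimensional representation of `PSL₂(F₇)` over `ℤ[ω]`. -/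
def transvectionLifts : List (Matrix (Fin 3) (Fin 3) ZOmega) :=
  [!![-1, ω - 1, 0; 0, 1, 0; 0, -ω, -1],
   !![1, -ω, ω - 1; 0, -1, 0; 0, 0, -1],
   !![-1, 0, 0; ω - 1, 1, -ω; 0, 0, -1],
   !![-1, 0, -ω; 0, -1, ω - 1; 0, 0, 1],
   !![1, 0, 0; -ω, -1, 0; ω - 1, 0, -1],
   !![-1, 0, 0; 0, -1, 0; -ω, ω - 1, 1]]

theorem mul_self_of_mem_transvectionLifts : ∀ g ∈ transvectionLifts, g * g = 1 := by
  decide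

theorem exists_mem_transvectionLifts_map_eq :
    ∀ i j : Fin 3, i ≠ j → ∃ g ∈ transvectionLifts, g.map modOmega = transvection i j 1 := by
  decide

def parityKey (M : Matrix (Fin 3) (Fin 3) ZOmega) : ℕ :=
  Nat.ofDigits 2 ([M 0 0, M 0 1, M 0 2, M 1 0, M 1 1, M 1 2, M 2 0, M 2 1, M 2 2].map
    fun x => (x.re % 2).toNat)

def liftOrbit : List (Matrix (Fin 3) (Fin 3) ZOmega) :=
  closureByKey mulFinThree transvectionLifts parityKey 168 [1] [1]

theorem liftOrbit_spec : liftOrbit.length ≤ 168 ∧ 1 ∈ liftOrbit ∧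
    ∀ m ∈ liftOrbit, ∀ g ∈ transvectionLifts,
      liftOrbit.find? (fun s => parityKey s == parityKey (mulFinThree m g)) =
        some (mulFinThree m g) := by
  decide +kernel

theorem mul_mem_liftOrbit {m g : Matrix (Fin 3) (Fin 3) ZOmega} (hm : m ∈ liftOrbit)
    (hg : g ∈ transvectionLifts) : m * g ∈ liftOrbit :=
  mulFinThree_eq_mul m g ▸ List.mem_of_find?_eq_some (liftOrbit_spec.2.2 m hm g hg)

def liftGroup : Subgroup (GL (Fin 3) ZOmega) :=
  Subgroup.closure {u | (u : Matrix (Fin 3) (Fin 3) ZOmega) ∈ transvectionLifts}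

theorem coe_mem_liftOrbit {u : GL (Fin 3) ZOmega} (hu : u ∈ liftGroup) :
    (u : Matrix (Fin 3) (Fin 3) ZOmega) ∈ liftOrbit := by
  induction hu using Subgroup.closure_induction_right with
  | one => exact liftOrbit_spec.2.1
  | mul_right u _ g hg ih => exact mul_mem_liftOrbit ih hg
  | mul_inv_cancel u _ g hg ih =>
    have hg_inv : g⁻¹ = g :=
      inv_eq_of_mul_eq_one_right (Units.ext (mul_self_of_mem_transvectionLifts _ hg))
    rw [hg_inv]
    exact mul_mem_liftOrbit ih hg

def liftGroup.reduce : liftGroup →* GL (Fin 3) (ZMod 2) :=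
  (GeneralLinearGroup.map modOmega.toRingHom).comp liftGroup.subtype

theorem liftGroup.reduce_surjective : Function.Surjective liftGroup.reduce := by
  rw [← MonoidHom.range_eq_top]
  refine GeneralLinearGroup.eq_top_of_transvection_mem_zmod_two _ fun i j hij => ?_
  obtain ⟨g, hg, hgi⟩ := exists_mem_transvectionLifts_map_eq i j hij
  have hgg := mul_self_of_mem_transvectionLifts g hg
  exact ⟨⟨⟨g, g, hgg, hgg⟩, Subgroup.subset_closure hg⟩, Units.ext hgi⟩

theorem liftGroup.reduce_bijective : Function.Bijective liftGroup.reduce := by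
  let toOrbit : liftGroup → liftOrbit.toFinset := fun u =>
    ⟨((u : GL (Fin 3) ZOmega) : Matrix (Fin 3) (Fin 3) ZOmega),
      List.mem_toFinset.2 (coe_mem_liftOrbit u.2)⟩
  have h_inj : Function.Injective toOrbit := fun u v h =>
    Subtype.ext (Units.ext (congrArg Subtype.val h))
  have : Finite liftGroup := Finite.of_injective toOrbit h_inj
  refine liftGroup.reduce_surjective.bijective_of_nat_card_le ?_
  calc Nat.card liftGroup ≤ Nat.card liftOrbit.toFinset := Nat.card_le_card_of_injective _ h_inj
    _ ≤ liftOrbit.length := by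
      rw [Nat.card_eq_fintype_card, Fintype.card_coe]
      exact List.toFinset_card_le _
    _ ≤ 168 := liftOrbit_spec.1
    _ = Nat.card (GL (Fin 3) (ZMod 2)) := GeneralLinearGroup.card_fin_three_zmod_two.symm

end ZOmega

/-- The inclusion `SL_3(F₂) ⊆ GL_3(F₂)` lifts to `ℤ₂`. -/
theorem sl3_F2_lifts_to_Z2 :
    ∃ ρ₀ : SpecialLinearGroup (Fin 3) (ZMod 2) →* GL (Fin 3) ℤ_[2],
      ∀ (M : SpecialLinearGroup (Fin 3) (ZMod 2)) (i j : Fin 3),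
        PadicInt.toZMod ((ρ₀ M : Matrix (Fin 3) (Fin 3) ℤ_[2]) i j) =
          (M : Matrix (Fin 3) (Fin 3) (ZMod 2)) i j := by
  obtain ⟨φ, hφ⟩ := ZOmega.exists_ringHom_padicInt_toZMod_comp_eq
  let e := MulEquiv.ofBijective _ ZOmega.liftGroup.reduce_bijective
  refine ⟨(GeneralLinearGroup.map φ).comp
    (ZOmega.liftGroup.subtype.comp (e.symm.toMonoidHom.comp SpecialLinearGroup.toGL)),
    fun M i j => ?_⟩
  have hM : ZOmega.liftGroup.reduce (e.symm M) = SpecialLinearGroup.toGL M := e.apply_symm_apply _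
  exact (RingHom.congr_fun hφ _).trans
    (congrArg (fun u : GL (Fin 3) (ZMod 2) => (u : Matrix (Fin 3) (Fin 3) (ZMod 2)) i j) hM)
end

section
/- There exists a group homomorphism ρ₀ : SL_2(F₃) → GL_2(ℤ₃), where ℤ₃ denotes the ring of 3-adic integers, such that for every M ∈ SL_2(F₃) and all indices i,j, reducing the (i,j)-entry of ρ₀(M) modulo 3 (via the canonical surjection ℤ₃ → F₃) gives M(i,j). In other words, ρ₀ is a lift to ℤ₃ of the inclusion SL_2(F₃) ⊆ GL_2(F₃). -/
/-!
Over `ℤ[√-2]`, where `3 = (1 + √-2)(1 - √-2)`, there is a residue map onto `F₃` with `√-2 ↦ 1`.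
The lifts `liftUpper`, `liftLower` of the generators `[[1,1],[0,1]]`, `[[1,0],[1,1]]` of
`SL₂(F₃)` generate a group of order 24 (a copy of the binary tetrahedral group) that the residue
map sends injectively, hence isomorphically, onto `SL₂(F₃)`; inverting this isomorphism lifts
`SL₂(F₃)` to `GL₂(ℤ[√-2])`. Since `-2 ≡ 1` is a nonzero square mod 3, Hensel's lemma embeds
`ℤ[√-2]` into `ℤ₃` compatibly with the residue maps.
-/

open Matrix Polynomial

theorem MonoidHom.exists_lift_of_injOn {G M N : Type*} [Monoid G] [Monoid M] [Monoid N]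
    (f : M →* N) (S : Submonoid M) (hinj : Set.InjOn f S) (g : G →* N)
    (hg : ∀ x, g x ∈ S.map f) : ∃ σ : G →* M, f.comp σ = g := by
  choose s hsS hfs using fun x => Submonoid.mem_map.1 (hg x)
  refine ⟨{ toFun := s, map_one' := ?_, map_mul' := fun x y => ?_ }, MonoidHom.ext hfs⟩
  · exact hinj (hsS 1) S.one_mem (by rw [hfs, map_one, map_one])
  · exact hinj (hsS _) (S.mul_mem (hsS x) (hsS y)) (by rw [hfs, map_mul, map_mul, hfs, hfs])

theorem Submonoid.coe_closure_subset_of_mul_mem_right {M : Type*} [Monoid M] {s T : Set M}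
    (h1 : 1 ∈ T) (hmul : ∀ x ∈ T, ∀ g ∈ s, x * g ∈ T) : (closure s : Set M) ⊆ T :=
  fun x hx => by
    induction hx using closure_induction_right with
    | one => exact h1
    | mul_right x _ g hg ih => exact hmul x ih g hg

section MulClosure

variable {M : Type*} [Monoid M] [DecidableEq M]

/-- One round of breadth-first enumeration of the submonoid generated by `gens`. -/
def mulClosureStep (gens L : List M) : List M :=
  (L ++ L.flatMap fun x => gens.map (x * ·)).dedup

theorem mem_closure_of_mem_mulClosureStep_iterate (gens : List M) (n : ℕ) :
    ∀ x ∈ (mulClosureStep gens)^[n] [1], x ∈ Submonoid.closure {g | g ∈ gens} := by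
  induction n with
  | zero => simp
  | succ n ih =>
    intro x hx
    rw [Function.iterate_succ_apply', mulClosureStep, List.mem_dedup, List.mem_append,
      List.mem_flatMap] at hx
    obtain hx | ⟨y, hy, hxy⟩ := hx
    · exact ih x hx
    · obtain ⟨g, hg, rfl⟩ := List.mem_map.1 hxy
      exact Submonoid.mul_mem _ (ih y hy) (Submonoid.subset_closure hg)

theorem one_mem_mulClosureStep_iterate (gens : List M) (n : ℕ) :
    (1 : M) ∈ (mulClosureStep gens)^[n] [1] := by
  induction n with
  | zero => exact List.mem_singleton_self 1
  | succ n ih =>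
    rw [Function.iterate_succ_apply', mulClosureStep, List.mem_dedup]
    exact List.mem_append_left _ ih

theorem coe_closure_eq_of_mul_mem_mulClosureStep_iterate {gens : List M} {n : ℕ}
    (hmul : ∀ x ∈ (mulClosureStep gens)^[n] [1], ∀ g ∈ gens,
      x * g ∈ (mulClosureStep gens)^[n] [1]) :
    (Submonoid.closure {g | g ∈ gens} : Set M) = {x | x ∈ (mulClosureStep gens)^[n] [1]} :=
  (Submonoid.coe_closure_subset_of_mul_mem_right (one_mem_mulClosureStep_iterate gens n)
    hmul).antisymm (mem_closure_of_mem_mulClosureStep_iterate gens n)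

end MulClosure

namespace PadicInt

variable {p : ℕ} [Fact p.Prime]

theorem toZMod_eq_zero_iff_norm_lt_one (x : ℤ_[p]) : toZMod x = 0 ↔ ‖x‖ < 1 := by
  rw [← RingHom.mem_ker, ker_toZMod, IsLocalRing.mem_maximalIdeal, mem_nonunits]

theorem norm_eq_one_iff_toZMod_ne_zero (x : ℤ_[p]) : ‖x‖ = 1 ↔ toZMod x ≠ 0 := by
  rw [ne_eq, toZMod_eq_zero_iff_norm_lt_one, not_lt]
  exact ⟨ge_of_eq, (norm_le_one x).antisymm⟩

theorem exists_sq_eq_of_toZMod_eq_sq (hp : p ≠ 2) {u : ℤ_[p]} {a : ZMod p} (ha : a ≠ 0)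
    (hu : toZMod u = a ^ 2) : ∃ z : ℤ_[p], z ^ 2 = u ∧ toZMod z = a := by
  set a₀ : ℤ_[p] := (a.val : ℤ_[p])
  have ha₀ : toZMod a₀ = a := by simp [a₀]
  have hF : aeval a₀ (X ^ 2 - C u) = a₀ ^ 2 - u := by simp
  have hF' : aeval a₀ (derivative (X ^ 2 - C u)) = 2 * a₀ := by simp [one_add_one_eq_two]
  have hF_lt : ‖a₀ ^ 2 - u‖ < 1 := by
    rw [← toZMod_eq_zero_iff_norm_lt_one, map_sub, map_pow, ha₀, hu, sub_self]
  have hF'_eq : ‖2 * a₀‖ = 1 := by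
    rw [norm_eq_one_iff_toZMod_ne_zero, map_mul, ha₀, map_ofNat]
    exact mul_ne_zero (Ring.two_ne_zero (by rwa [ZMod.ringChar_zmod_n])) ha
  obtain ⟨z, hz, hza, -, -⟩ :=
    hensels_lemma (F := X ^ 2 - C u) (a := a₀) (by rwa [hF, hF', hF'_eq, one_pow])
  refine ⟨z, by simpa [sub_eq_zero] using hz, ?_⟩
  rwa [hF', hF'_eq, ← toZMod_eq_zero_iff_norm_lt_one, map_sub, ha₀, sub_eq_zero] at hza

end PadicInt

def Zsqrtd.toZModThree : ℤ√(-2) →+* ZMod 3 := Zsqrtd.lift ⟨1, by decide⟩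

theorem Zsqrtd.exists_ringHom_padicInt_three :
    ∃ ι : ℤ√(-2) →+* ℤ_[3], PadicInt.toZMod.comp ι = toZModThree := by
  obtain ⟨z, hz, hz1⟩ :=
    PadicInt.exists_sq_eq_of_toZMod_eq_sq (p := 3) (u := -2) (a := 1) (by decide) one_ne_zero
      (by rw [map_neg, map_ofNat]; decide)
  refine ⟨lift ⟨z, by rw [← sq, hz]; push_cast; rfl⟩, hom_ext _ _ ?_⟩
  simp [toZModThree, hz1]

namespace SL2F3

def liftUpper : Matrix (Fin 2) (Fin 2) (ℤ√(-2)) := !![⟨0, 1⟩, ⟨1, 0⟩; ⟨1, -1⟩, ⟨-1, -1⟩]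

def liftLower : Matrix (Fin 2) (Fin 2) (ℤ√(-2)) := !![⟨1, 0⟩, ⟨1, -1⟩; ⟨-1, -1⟩, ⟨-2, 0⟩]

def binaryTetrahedral : List (Matrix (Fin 2) (Fin 2) (ℤ√(-2))) :=
  (mulClosureStep [liftUpper, liftLower])^[5] [1]

theorem mul_mem_binaryTetrahedral :
    ∀ x ∈ binaryTetrahedral, ∀ g ∈ [liftUpper, liftLower], x * g ∈ binaryTetrahedral := by
  decide

theorem nodup_map_binaryTetrahedral :
    (binaryTetrahedral.map (Zsqrtd.toZModThree.mapMatrix)).Nodup := by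
  decide

theorem exists_mem_binaryTetrahedral_map_eq (M : SpecialLinearGroup (Fin 2) (ZMod 3)) :
    ∃ x ∈ binaryTetrahedral, Zsqrtd.toZModThree.mapMatrix x = M := by
  revert M
  decide

theorem exists_lift_zsqrtd :
    ∃ σ : SpecialLinearGroup (Fin 2) (ZMod 3) →* Matrix (Fin 2) (Fin 2) (ℤ√(-2)),
      ∀ M, Zsqrtd.toZModThree.mapMatrix (σ M) = M := by
  set f : Matrix (Fin 2) (Fin 2) (ℤ√(-2)) →+* Matrix (Fin 2) (Fin 2) (ZMod 3) :=
    Zsqrtd.toZModThree.mapMatrix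
  set S := Submonoid.closure {g | g ∈ [liftUpper, liftLower]}
  have hS : (S : Set _) = {x | x ∈ binaryTetrahedral} :=
    coe_closure_eq_of_mul_mem_mulClosureStep_iterate mul_mem_binaryTetrahedral
  have hinj : Set.InjOn f S := by
    rw [hS]
    exact List.inj_on_of_nodup_map nodup_map_binaryTetrahedral
  have hsurj (M : SpecialLinearGroup (Fin 2) (ZMod 3)) : (M : Matrix _ _ _) ∈ S.map f := by
    obtain ⟨x, hx, hxM⟩ := exists_mem_binaryTetrahedral_map_eq M
    exact Submonoid.mem_map.2 ⟨x, by rw [← SetLike.mem_coe, hS]; exact hx, hxM⟩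
  obtain ⟨σ, hσ⟩ := MonoidHom.exists_lift_of_injOn f.toMonoidHom S hinj
    SpecialLinearGroup.coeMonoidHom hsurj
  exact ⟨σ, DFunLike.congr_fun hσ⟩

end SL2F3

/-- The inclusion `SL_2(F₃) ⊆ GL_2(F₃)` lifts to `ℤ₃`. -/
theorem sl2_F3_lifts_to_Z3 :
    ∃ ρ₀ : SpecialLinearGroup (Fin 2) (ZMod 3) →* GL (Fin 2) ℤ_[3],
      ∀ (M : SpecialLinearGroup (Fin 2) (ZMod 3)) (i j : Fin 2),
        PadicInt.toZMod ((ρ₀ M : Matrix (Fin 2) (Fin 2) ℤ_[3]) i j) =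
          (M : Matrix (Fin 2) (Fin 2) (ZMod 3)) i j := by
  obtain ⟨σ, hσ⟩ := SL2F3.exists_lift_zsqrtd
  obtain ⟨ι, hι⟩ := Zsqrtd.exists_ringHom_padicInt_three
  refine ⟨((ι.mapMatrix (m := Fin 2)).toMonoidHom.comp σ).toHomUnits, fun M i j => ?_⟩
  rw [← hσ M]
  exact DFunLike.congr_fun hι (σ M i j)
end

section
/- Let O := ℤ₅[X]/(X²−5) be the ring obtained by adjoining a square root of 5 to the ring ℤ₅ of 5-adic integers, and let π : O → F₅ be the ring homomorphism induced by reduction modulo 5 on ℤ₅ together with sending the class of X to 0. Then there exists a group homomorphism ρ₀ : SL_2(F₅) → GL_2(O) such that for every M ∈ SL_2(F₅) and all indices i,j one has π(ρ₀(M)(i,j)) = M(i,j). In other words, ρ₀ is a lift to O = ℤ₅[√5] of the inclusion SL_2(F₅) ⊆ GL_2(F₅). -/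
open Matrix

instance : Fact (Nat.Prime 5) := ⟨by norm_num⟩

/-- The ring `O = ℤ₅[√5] = ℤ₅[X]/(X² − 5)`. -/
noncomputable abbrev Z5sqrt5 : Type :=
  AdjoinRoot (Polynomial.X ^ 2 - 5 : Polynomial ℤ_[5])

/-- The reduction `π : ℤ₅[√5] → F₅`, induced by reduction mod 5 on `ℤ₅` and sending
the class of `X` to `0`. -/
noncomputable def Z5sqrt5.toZMod : Z5sqrt5 →+* ZMod 5 :=
  AdjoinRoot.lift PadicInt.toZMod (0 : ZMod 5) (by
    simp [Polynomial.eval₂_sub, Polynomial.eval₂_pow]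
    decide)

/-!
`SL₂(𝔽₅)` is isomorphic to the binary icosahedral group, which has a faithful two-dimensional
representation over `ℤ[i, φ]`, `φ` the golden ratio. Sending `i` to a square root of `-1` in `ℤ₅`
and `φ` to `(1 + √5)/2` embeds `ℤ[i, φ]` in `O`, and followed by `π` this is the reduction
`i ↦ 2`, `φ ↦ 3`. Two explicit matrices in `SL₂(ℤ[i, φ])` generate a monoid which a breadth-first
enumeration, run by the kernel, shows to consist of 120 elements with pairwise distinct
reductions. As `SL₂(𝔽₅)` has 120 elements, reduction is an isomorphism from that monoid onto
`SL₂(𝔽₅)`; its inverse, pushed into `GL₂(O)`, is the lift.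
-/

section KeyedInsertion

variable {α κ : Type*} [DecidableEq α] [DecidableEq κ] {key : α → κ}

variable (key) in
def keyedInsert (S : List α) (st : Bool × List α) (y : α) : Bool × List α :=
  match (st.2 ++ S).find? (fun x => key x == key y) with
  | some x => (st.1 && x == y, st.2)
  | none => (st.1, y :: st.2)

theorem keyedInsert_spec (S N : List α) (ok : Bool) (y : α) :
    let r := keyedInsert key S (ok, N) y
    (r.1 = true → ok = true ∧ y ∈ r.2 ++ S) ∧ (∀ z ∈ N, z ∈ r.2) ∧
      (∀ z ∈ r.2, z ∈ N ∨ z = y) ∧ (((N ++ S).map key).Nodup → ((r.2 ++ S).map key).Nodup) := by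
  unfold keyedInsert
  split
  · next x hx =>
    refine ⟨fun h => ?_, fun z hz => hz, fun z hz => .inl hz, id⟩
    simp only [Bool.and_eq_true, beq_iff_eq] at h
    exact ⟨h.1, h.2 ▸ List.mem_of_find?_eq_some hx⟩
  · next hnone =>
    rw [List.find?_eq_none] at hnone
    refine ⟨fun h => ⟨h, by simp⟩, fun z hz => by simp [hz],
      fun z hz => (List.mem_cons.1 hz).symm, fun h => List.nodup_cons.2 ⟨?_, h⟩⟩
    simp only [List.mem_map, not_exists, not_and]
    exact fun x hx hk => hnone x hx (by simp [hk])

theorem foldl_keyedInsert_spec (S C : List α) (ok : Bool) (N : List α) :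
    let r := C.foldl (keyedInsert key S) (ok, N)
    (r.1 = true → ok = true ∧ ∀ y ∈ C, y ∈ r.2 ++ S) ∧ (∀ z ∈ N, z ∈ r.2) ∧
      (∀ z ∈ r.2, z ∈ N ∨ z ∈ C) ∧ (((N ++ S).map key).Nodup → ((r.2 ++ S).map key).Nodup) := by
  induction C generalizing ok N with
  | nil => simp
  | cons y C ih =>
    obtain ⟨hok, hN, hnew, hnodup⟩ := keyedInsert_spec (key := key) S N ok y
    set st := keyedInsert key S (ok, N) y
    obtain ⟨hok', hN', hnew', hnodup'⟩ := ih st.1 st.2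
    simp only [List.foldl_cons]
    refine ⟨fun h => ?_, fun z hz => hN' z (hN z hz), fun z hz => ?_, hnodup' ∘ hnodup⟩
    · obtain ⟨hst, hC⟩ := hok' h
      obtain ⟨hok, hy⟩ := hok hst
      refine ⟨hok, List.forall_mem_cons.2 ⟨?_, hC⟩⟩
      rcases List.mem_append.1 hy with hy | hy
      · exact List.mem_append_left _ (hN' _ hy)
      · exact List.mem_append_right _ hy
    · rcases hnew' z hz with hz | hz
      · rcases hnew z hz with hz | rfl
        · exact .inl hz
        · simp
      · simp [hz]

end KeyedInsertion

section ClosureEnumeration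

variable {M κ : Type*} [Monoid M] [DecidableEq M] [DecidableEq κ] (key : M → κ) (gens : List M)

/-- One round of breadth-first search on states `(ok, S, F)`: `S` lists the elements found so far,
the frontier `F` those not yet multiplied by the generators, and `ok` records that every candidate
whose key was already known is the element with that key. Comparing keys first keeps the search
cheap when equality in `M` is expensive to decide. -/
def enumerationStep (st : Bool × List M × List M) : Bool × List M × List M :=
  let r := (st.2.2.flatMap fun x => gens.map (x * ·)).foldl (keyedInsert key st.2.1) (st.1, [])
  (r.1, r.2 ++ st.2.1, r.2)

def enumerateClosure (n : ℕ) : Option (List M) :=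
  match (enumerationStep key gens)^[n] (true, [1], [1]) with
  | (true, S, []) => some S
  | _ => none

structure EnumerationInvariant (S F : List M) : Prop where
  nodup_map_key : (S.map key).Nodup
  one_mem : 1 ∈ S
  frontier_subset : ∀ x ∈ F, x ∈ S
  mul_mem : ∀ x ∈ S, x ∉ F → ∀ g ∈ gens, x * g ∈ S
  mem_closure : ∀ x ∈ S, x ∈ Submonoid.closure {g | g ∈ gens}

variable {key gens}

theorem EnumerationInvariant.enumerationStep {ok : Bool} {S F : List M}
    (h : ok = true → EnumerationInvariant key gens S F) :
    let st := enumerationStep key gens (ok, S, F)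
    st.1 = true → EnumerationInvariant key gens st.2.1 st.2.2 := by
  obtain ⟨hok, -, hnew, hnodup⟩ :=
    foldl_keyedInsert_spec (key := key) S (F.flatMap fun x => gens.map (x * ·)) ok []
  intro st hst
  obtain ⟨hok, hC⟩ := hok hst
  have inv := h hok
  refine ⟨hnodup (by simpa using inv.nodup_map_key), List.mem_append_right _ inv.one_mem,
    fun x hx => List.mem_append_left _ hx, fun x hx hxF g hg => ?_, fun x hx => ?_⟩
  · have hxS : x ∈ S := (List.mem_append.1 hx).resolve_left hxF
    by_cases hF : x ∈ F
    · exact hC _ (List.mem_flatMap.2 ⟨x, hF, List.mem_map_of_mem hg⟩)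
    · exact List.mem_append_right _ (inv.mul_mem x hxS hF g hg)
  · rcases List.mem_append.1 hx with hx | hx
    · obtain ⟨y, hyF, hy⟩ := List.mem_flatMap.1 ((hnew x hx).resolve_left List.not_mem_nil)
      obtain ⟨g, hg, rfl⟩ := List.mem_map.1 hy
      exact Submonoid.mul_mem _ (inv.mem_closure y (inv.frontier_subset y hyF))
        (Submonoid.subset_closure hg)
    · exact inv.mem_closure x hx

theorem enumerationInvariant_iterate (n : ℕ) :
    let st := (enumerationStep key gens)^[n] (true, [1], [1])
    st.1 = true → EnumerationInvariant key gens st.2.1 st.2.2 := by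
  induction n with
  | zero => exact fun _ => ⟨by simp, by simp, by simp, by simp, by simp⟩
  | succ n ih => rw [Function.iterate_succ_apply']; exact EnumerationInvariant.enumerationStep ih

theorem EnumerationInvariant.of_enumerateClosure_eq_some {n : ℕ} {S : List M}
    (h : enumerateClosure key gens n = some S) : EnumerationInvariant key gens S [] := by
  unfold enumerateClosure at h
  split at h
  · next S' hS' =>
    cases h
    simpa [hS'] using enumerationInvariant_iterate (key := key) (gens := gens) n
  · cases h

theorem nodup_map_of_enumerateClosure_eq_some {n : ℕ} {S : List M}
    (h : enumerateClosure key gens n = some S) : (S.map key).Nodup :=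
  (EnumerationInvariant.of_enumerateClosure_eq_some h).nodup_map_key

theorem mem_closure_iff_of_enumerateClosure_eq_some {n : ℕ} {S : List M}
    (h : enumerateClosure key gens n = some S) {x : M} :
    x ∈ Submonoid.closure {g | g ∈ gens} ↔ x ∈ S := by
  have inv := EnumerationInvariant.of_enumerateClosure_eq_some h
  refine ⟨fun hx => ?_, inv.mem_closure x⟩
  induction hx using Submonoid.closure_induction_right with
  | one => exact inv.one_mem
  | mul_right x _ g hg ih => exact inv.mul_mem x ih List.not_mem_nil g hg

end ClosureEnumeration

namespace QuadraticAlgebra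

variable {R A : Type*} [CommRing R] [CommRing A] {a b : R}

def liftOfRingHom (f : R →+* A) (u : A) (hu : u * u = f a + f b * u) :
    QuadraticAlgebra R a b →+* A where
  toFun z := f z.re + f z.im * u
  map_one' := show f 1 + f 0 * u = 1 by simp
  map_mul' z w := by
    simp only [re_mul, im_mul, map_add, map_mul]
    linear_combination -(f z.im * f w.im) * hu
  map_zero' := show f 0 + f 0 * u = 0 by simp
  map_add' z w := by simp only [re_add, im_add, map_add]; ring

@[simp]
theorem liftOfRingHom_apply (f : R →+* A) (u : A) (hu : u * u = f a + f b * u)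
    (z : QuadraticAlgebra R a b) : liftOfRingHom f u hu z = f z.re + f z.im * u :=
  rfl

end QuadraticAlgebra

namespace PadicInt

variable {p : ℕ} [Fact p.Prime]

theorem isUnit_of_toZMod_ne_zero {x : ℤ_[p]} (hx : toZMod x ≠ 0) : IsUnit x := by
  contrapose! hx
  rw [← RingHom.mem_ker, ker_toZMod]
  exact (IsLocalRing.mem_maximalIdeal x).2 hx

theorem exists_isRoot_toZMod_eq {f : Polynomial ℤ_[p]} (hf : f.Monic) {a : ℤ_[p]}
    (ha : toZMod (f.eval a) = 0) (ha' : toZMod (f.derivative.eval a) ≠ 0) :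
    ∃ x, f.IsRoot x ∧ toZMod x = toZMod a := by
  rw [← RingHom.mem_ker, ker_toZMod] at ha
  obtain ⟨x, hx, hxa⟩ := HenselianRing.is_henselian f hf a ha
    ((isUnit_of_toZMod_ne_zero ha').map (Ideal.Quotient.mk _))
  refine ⟨x, hx, ?_⟩
  rwa [← sub_eq_zero, ← map_sub, ← RingHom.mem_ker, ker_toZMod]

theorem isUnit_two (hp : p ≠ 2) : IsUnit (2 : ℤ_[p]) := by
  refine isUnit_of_toZMod_ne_zero ?_
  rw [map_ofNat, ← Nat.cast_ofNat, Ne, ZMod.natCast_eq_zero_iff,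
    Nat.prime_dvd_prime_iff_eq Fact.out Nat.prime_two]
  exact hp

end PadicInt

open QuadraticAlgebra
open scoped MatrixGroups

/-- `ℤ[i][φ]` with `φ² = 1 + φ`. -/
abbrev GoldenGaussianInt : Type := QuadraticAlgebra GaussianInt 1 1

notation "ℤ[i,φ]" => GoldenGaussianInt

namespace GoldenGaussianInt

def I : ℤ[i,φ] := .C Zsqrtd.sqrtd

def reduction : ℤ[i,φ] →+* ZMod 5 :=
  liftOfRingHom (Zsqrtd.lift ⟨2, by decide⟩) 3 (by simp only [map_one, one_mul]; decide)

theorem reduction_apply (z : ℤ[i,φ]) :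
    reduction z = ((z.re.re + 2 * z.re.im + 3 * (z.im.re + 2 * z.im.im) : ℤ) : ZMod 5) := by
  simp only [reduction, liftOfRingHom_apply, Zsqrtd.lift_apply_apply, Int.cast_add, Int.cast_mul,
    Int.cast_ofNat]
  ring

end GoldenGaussianInt

open GoldenGaussianInt

theorem PadicInt.exists_mul_self_eq_neg_one_toZMod_eq_two :
    ∃ x : ℤ_[5], x * x = -1 ∧ PadicInt.toZMod x = 2 := by
  obtain ⟨x, hx, hx2⟩ := PadicInt.exists_isRoot_toZMod_eq (p := 5) (f := .X ^ 2 + 1)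
    (Polynomial.monic_X_pow_add_C 1 two_ne_zero) (a := 2)
    (by simp only [Polynomial.eval_add, Polynomial.eval_pow, Polynomial.eval_X,
      Polynomial.eval_one, map_add, map_pow, map_ofNat, map_one]; decide)
    (by simp only [Polynomial.derivative_X_pow_succ, Nat.cast_one, map_add, map_one, pow_one,
      Polynomial.derivative_one, add_zero, Polynomial.eval_mul, Polynomial.eval_add,
      Polynomial.eval_one, Polynomial.eval_X, map_mul, map_ofNat]; decide)
  refine ⟨x, ?_, by simpa [map_ofNat] using hx2⟩
  simpa [sq, add_eq_zero_iff_eq_neg] using hx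


namespace Z5sqrt5

noncomputable def sqrt5 : Z5sqrt5 := AdjoinRoot.root _

theorem sqrt5_mul_self : sqrt5 * sqrt5 = 5 := by
  have := AdjoinRoot.eval₂_root (Polynomial.X ^ 2 - 5 : Polynomial ℤ_[5])
  simpa [sqrt5, sq, sub_eq_zero] using this

noncomputable def goldenRatio : Z5sqrt5 :=
  (1 + sqrt5) * AdjoinRoot.of _ (Ring.inverse 2)

theorem goldenRatio_mul_self : goldenRatio * goldenRatio = 1 + goldenRatio := by
  have h : (2 : Z5sqrt5) * AdjoinRoot.of _ (Ring.inverse 2) = 1 := by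
    simpa [map_ofNat] using
      congrArg (AdjoinRoot.of _) (Ring.mul_inverse_cancel _ (PadicInt.isUnit_two (by decide)))
  unfold goldenRatio
  linear_combination (AdjoinRoot.of _ (Ring.inverse 2)) ^ 2 * sqrt5_mul_self
    + ((3 + sqrt5) * AdjoinRoot.of _ (Ring.inverse 2) + 1) * h

theorem toZMod_of (x : ℤ_[5]) : toZMod (AdjoinRoot.of _ x) = PadicInt.toZMod x :=
  AdjoinRoot.lift_of _

theorem toZMod_sqrt5 : toZMod sqrt5 = 0 :=
  AdjoinRoot.lift_root _

theorem toZMod_goldenRatio : toZMod goldenRatio = 3 := by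
  have h := congrArg PadicInt.toZMod
    (Ring.mul_inverse_cancel (2 : ℤ_[5]) (PadicInt.isUnit_two (by decide)))
  rw [map_mul, map_ofNat, map_one] at h
  have half : ∀ t : ZMod 5, 2 * t = 1 → t = 3 := by decide
  simp [goldenRatio, toZMod_sqrt5, toZMod_of, half _ h]

noncomputable def sqrtNegOne : Z5sqrt5 :=
  AdjoinRoot.of _ PadicInt.exists_mul_self_eq_neg_one_toZMod_eq_two.choose

theorem sqrtNegOne_mul_self : sqrtNegOne * sqrtNegOne = -1 := by
  simp [sqrtNegOne, ← map_mul, PadicInt.exists_mul_self_eq_neg_one_toZMod_eq_two.choose_spec.1]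

theorem toZMod_sqrtNegOne : toZMod sqrtNegOne = 2 := by
  simp [sqrtNegOne, toZMod_of, PadicInt.exists_mul_self_eq_neg_one_toZMod_eq_two.choose_spec.2]

noncomputable def ofGoldenGaussianInt : ℤ[i,φ] →+* Z5sqrt5 :=
  liftOfRingHom (Zsqrtd.lift ⟨sqrtNegOne, by simpa using sqrtNegOne_mul_self⟩) goldenRatio
    (by simpa using goldenRatio_mul_self)

theorem toZMod_ofGoldenGaussianInt (z : ℤ[i,φ]) :
    toZMod (ofGoldenGaussianInt z) = reduction z := by
  simp [ofGoldenGaussianInt, reduction, toZMod_goldenRatio, toZMod_sqrtNegOne]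

end Z5sqrt5

/-- `A` and `B` have orders 4 and 6 and `A * B` has order 5 (traces `0`, `1`, `-φ`), which makes
them generate a copy of the binary icosahedral group. -/
def icosahedralGens : List SL(2, ℤ[i,φ]) :=
  [⟨!![-I, 0; ω + I, I], by rw [det_fin_two_of]; decide⟩,
    ⟨!![0, -1; 1, 1], by rw [det_fin_two_of]; decide⟩]

def binaryIcosahedral : Submonoid SL(2, ℤ[i,φ]) :=
  Submonoid.closure {g | g ∈ icosahedralGens}

/-- The reduction of `g` written in base 5, computed with integers rather than in `ZMod 5` so that
the kernel evaluates it quickly. -/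
def reductionCode (g : SL(2, ℤ[i,φ])) : ℕ :=
  let digit (z : ℤ[i,φ]) : ℕ := ((z.re.re + 2 * z.re.im + 3 * (z.im.re + 2 * z.im.im)) % 5).toNat
  digit (g 0 0) * 125 + digit (g 0 1) * 25 + digit (g 1 0) * 5 + digit (g 1 1)

theorem nodup_map_reduction_of_nodup_map_reductionCode {S : List SL(2, ℤ[i,φ])}
    (h : (S.map reductionCode).Nodup) : (S.map (SpecialLinearGroup.map reduction)).Nodup := by
  have digit (z : ℤ[i,φ]) : (reduction z).val =
      ((z.re.re + 2 * z.re.im + 3 * (z.im.re + 2 * z.im.im)) % 5).toNat := by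
    have := ZMod.val_intCast (n := 5) (z.re.re + 2 * z.re.im + 3 * (z.im.re + 2 * z.im.im))
    rw [reduction_apply]
    omega
  have hcode : (fun M : SL(2, ZMod 5) =>
      (M 0 0).val * 125 + (M 0 1).val * 25 + (M 1 0).val * 5 + (M 1 1).val) ∘
        SpecialLinearGroup.map reduction = reductionCode :=
    funext fun g => by simp [reductionCode, digit]
  rw [← hcode, ← List.map_map] at h
  exact h.of_map _

/-- Every element of `binaryIcosahedral` is a product of at most 13 generators, so the frontier is
empty after 14 rounds. -/
theorem enumerateClosure_icosahedralGens :
    (enumerateClosure reductionCode icosahedralGens 14).map List.length = some 120 := by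
  decide +kernel

theorem card_SL_two_ZMod_five : Fintype.card SL(2, ZMod 5) = 120 := by
  decide +kernel

theorem bijective_reduction_binaryIcosahedral :
    Function.Bijective ((SpecialLinearGroup.map reduction).comp binaryIcosahedral.subtype) := by
  obtain ⟨S, hS, hlen⟩ := Option.map_eq_some_iff.1 enumerateClosure_icosahedralGens
  have hmem (g) : g ∈ binaryIcosahedral ↔ g ∈ S := mem_closure_iff_of_enumerateClosure_eq_some hS
  have hnodup :=
    nodup_map_reduction_of_nodup_map_reductionCode (nodup_map_of_enumerateClosure_eq_some hS)
  refine ⟨fun ⟨g, hg⟩ ⟨h, hh⟩ hgh =>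
    Subtype.ext (List.inj_on_of_nodup_map hnodup ((hmem g).1 hg) ((hmem h).1 hh) hgh), fun M => ?_⟩
  have huniv : (S.map (SpecialLinearGroup.map reduction)).toFinset = Finset.univ :=
    Finset.eq_univ_of_card _ (by
      rw [List.toFinset_card_of_nodup hnodup, List.length_map, hlen, card_SL_two_ZMod_five])
  obtain ⟨g, hg, rfl⟩ := List.mem_map.1 (List.mem_toFinset.1 (huniv ▸ Finset.mem_univ M))
  exact ⟨⟨g, (hmem g).2 hg⟩, rfl⟩

noncomputable def binaryIcosahedralEquiv : binaryIcosahedral ≃* SL(2, ZMod 5) :=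
  MulEquiv.ofBijective _ bijective_reduction_binaryIcosahedral

/-- The inclusion `SL_2(F₅) ⊆ GL_2(F₅)` lifts to `O = ℤ₅[√5]`. -/
theorem sl2_F5_lifts_to_Z5sqrt5 :
    ∃ ρ₀ : SpecialLinearGroup (Fin 2) (ZMod 5) →* GL (Fin 2) Z5sqrt5,
      ∀ (M : SpecialLinearGroup (Fin 2) (ZMod 5)) (i j : Fin 2),
        Z5sqrt5.toZMod ((ρ₀ M : Matrix (Fin 2) (Fin 2) Z5sqrt5) i j) =
          (M : Matrix (Fin 2) (Fin 2) (ZMod 5)) i j := by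
  refine ⟨(SpecialLinearGroup.toGL.comp (SpecialLinearGroup.map Z5sqrt5.ofGoldenGaussianInt)).comp
    (binaryIcosahedral.subtype.comp binaryIcosahedralEquiv.symm.toMonoidHom), fun M i j => ?_⟩
  rw [← congrArg (fun N : SL(2, ZMod 5) => (N : Matrix (Fin 2) (Fin 2) (ZMod 5)) i j)
    (binaryIcosahedralEquiv.apply_symm_apply M)]
  exact Z5sqrt5.toZMod_ofGoldenGaussianInt _
end

section
/- Let S be an Artinian local commutative ring with residue field F₂, with reduction π_S : S → F₂ (a surjective ring homomorphism whose kernel is the maximal ideal m_S). Let ρ₁, ρ₂ : SL_3(F₂) → GL_3(S) be two group homomorphisms such that π_S(ρ_i(M)(a,b)) = M(a,b) for i = 1,2, all M ∈ SL_3(F₂) and all indices a,b. Then there exists X ∈ GL_3(S) with X ≡ I mod m_S such that ρ₂(M) = X · ρ₁(M) · X⁻¹ for all M ∈ SL_3(F₂). -/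
/-!
Averaging `ρ₂ h * ρ₁ h⁻¹` over the Frobenius subgroup `⟨a, b⟩` of order 21 gives a matrix
`X ≡ 21 ≡ 1 (mod m_S)` that intertwines `ρ₁` and `ρ₂` on this subgroup. After conjugating `ρ₂`
by `X`, the two lifts agree on `a` and `b`, and the difference cocycle
`c g = ρ₂ g * ρ₁ g⁻¹ - 1` is shown to vanish modulo every power of `m_S` by induction.
Since `a`, `b` and the transvection `t` generate `SL₃(F₂)`, only `c t` needs work: the relation
`x * y * z = 1` with `x = t a b²`, `y = t a³ b`, `z = t b²` gives
`C + Ad(x) C + Ad(x y) C ≡ 0 (mod m_S^(k+1))` for `C = c t`, and this operator on `M₃` is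
invertible modulo `m_S`. As `m_S` is nilpotent, `c = 0`.
-/

open Matrix IsLocalRing Kronecker

namespace Ideal

variable {R n : Type*} [CommRing R] [Fintype n] [DecidableEq n]

theorem mul_mem_matrix_right {I : Ideal R} {A : Matrix n n R} (hA : A ∈ I.matrix n)
    (B : Matrix n n R) : A * B ∈ I.matrix n := fun i _ =>
  Ideal.sum_mem _ fun k _ => I.mul_mem_right _ (hA i k)

theorem mul_mem_matrix_mul {I J : Ideal R} {A B : Matrix n n R} (hA : A ∈ I.matrix n)
    (hB : B ∈ J.matrix n) : A * B ∈ (I * J).matrix n := fun i j =>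
  Ideal.sum_mem _ fun k _ => mul_mem_mul (hA i k) (hB k j)

theorem mem_matrix_of_isUnit_of_mulVec_vec_mem {I : Ideal R} {A : Matrix n n R}
    {K : Matrix (n × n) (n × n) R} (hK : IsUnit K) (h : ∀ p, (K *ᵥ vec A) p ∈ I) :
    A ∈ I.matrix n := by
  have hvec : vec A = K⁻¹ *ᵥ (K *ᵥ vec A) := by
    rw [mulVec_mulVec, nonsing_inv_mul _ ((isUnit_iff_isUnit_det K).1 hK), one_mulVec]
  intro i j
  change vec A (j, i) ∈ I
  rw [hvec]
  exact Ideal.sum_mem _ fun p _ => I.mul_mem_left _ (h p)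

end Ideal

theorem RingHom.sub_mem_matrix_ker_iff {R K n : Type*} [CommRing R] [CommRing K] [Fintype n]
    [DecidableEq n] (f : R →+* K) {A B : Matrix n n R} :
    A - B ∈ (ker f).matrix n ↔ A.map f = B.map f := by
  simp only [Ideal.mem_matrix, Matrix.sub_apply, RingHom.mem_ker, map_sub, sub_eq_zero,
    ← Matrix.ext_iff, map_apply]

namespace IsLocalRing

variable {S K : Type*} [CommRing S] [IsLocalRing S] [CommRing K] {π : S →+* K}

theorem isUnit_of_isUnit_map (hker : RingHom.ker π = maximalIdeal S) {x : S}
    (h : IsUnit (π x)) : IsUnit x := by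
  by_contra hx
  have hx0 : π x = 0 := by rw [← RingHom.mem_ker, hker]; exact hx
  have h01 : (0 : K) = 1 := isUnit_zero_iff.1 (hx0 ▸ h)
  exact (maximalIdeal.isMaximal S).ne_top
    ((Ideal.eq_top_iff_one _).2 (by rw [← hker, RingHom.mem_ker, map_one, h01]))

theorem isUnit_matrix_of_isUnit_map {n : Type*} [Fintype n] [DecidableEq n]
    (hker : RingHom.ker π = maximalIdeal S) {A : Matrix n n S} (h : IsUnit (A.map π)) :
    IsUnit A := by
  rw [isUnit_iff_isUnit_det] at h ⊢
  exact isUnit_of_isUnit_map hker (by rwa [RingHom.map_det])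

end IsLocalRing

section ConjSumKronecker

variable {R n : Type*} [CommRing R] [Fintype n] [DecidableEq n]

def conjSumKronecker (A B : GL n R) : Matrix (n × n) (n × n) R :=
  1 + ((A⁻¹ : GL n R) : Matrix n n R)ᵀ ⊗ₖ (A : Matrix n n R)
    + ((B⁻¹ : GL n R) : Matrix n n R)ᵀ ⊗ₖ (B : Matrix n n R)

theorem conjSumKronecker_mulVec_vec (A B : GL n R) (C : Matrix n n R) :
    conjSumKronecker A B *ᵥ vec C =
      vec (C + (A : Matrix n n R) * C * ((A⁻¹ : GL n R) : Matrix n n R)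
        + (B : Matrix n n R) * C * ((B⁻¹ : GL n R) : Matrix n n R)) := by
  simp only [conjSumKronecker, add_mulVec, one_mulVec, kronecker_mulVec_vec, transpose_transpose]
  rfl

theorem map_conjSumKronecker {K : Type*} [CommRing K] (f : R →+* K) (A B : GL n R) :
    (conjSumKronecker A B).map f =
      conjSumKronecker (GeneralLinearGroup.map f A) (GeneralLinearGroup.map f B) := by
  ext ⟨i, j⟩ ⟨k, l⟩
  simp [conjSumKronecker, one_apply, apply_ite f, ← map_inv]

end ConjSumKronecker

section Averaging

variable {G S n : Type*} [Group G] [CommRing S] [Fintype n] [DecidableEq n]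
  (ρ₁ ρ₂ : G →* GL n S)

def intertwiningSum (T : Finset G) : Matrix n n S :=
  ∑ h ∈ T, (ρ₂ h : Matrix n n S) * (ρ₁ h⁻¹ : Matrix n n S)

theorem mul_intertwiningSum [DecidableEq G] {T : Finset G} {g : G} (hT : T.image (g * ·) = T) :
    (ρ₂ g : Matrix n n S) * intertwiningSum ρ₁ ρ₂ T = intertwiningSum ρ₁ ρ₂ T * ρ₁ g := by
  conv_rhs => rw [intertwiningSum, ← hT, Finset.sum_image fun _ _ _ _ => mul_left_cancel]
  rw [intertwiningSum, Finset.mul_sum, Finset.sum_mul]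
  refine Finset.sum_congr rfl fun h _ => ?_
  simp only [_root_.mul_inv_rev, map_mul, Units.val_mul, mul_assoc]
  rw [← Units.val_mul (ρ₁ g⁻¹), ← map_mul, inv_mul_cancel, map_one, Units.val_one, Matrix.mul_one]

theorem map_intertwiningSum {K : Type*} [CommRing K] (f : S →+* K)
    (hf : (GeneralLinearGroup.map f).comp ρ₁ = (GeneralLinearGroup.map f).comp ρ₂)
    (T : Finset G) :
    (intertwiningSum ρ₁ ρ₂ T).map f = (T.card : K) • (1 : Matrix n n K) := by
  have hterm : ∀ h : G, f.mapMatrix ((ρ₂ h : Matrix n n S) * (ρ₁ h⁻¹ : Matrix n n S)) = 1 := by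
    intro h
    have hinv : GeneralLinearGroup.map f (ρ₁ h⁻¹) = GeneralLinearGroup.map f (ρ₂ h⁻¹) :=
      DFunLike.congr_fun hf h⁻¹
    change ((GeneralLinearGroup.map f (ρ₂ h * ρ₁ h⁻¹) : GL n K) : Matrix n n K) = 1
    rw [map_mul, hinv, ← map_mul, ← map_mul, mul_inv_cancel, map_one, map_one, Units.val_one]
  rw [← RingHom.mapMatrix_apply, intertwiningSum, map_sum,
    Finset.sum_congr rfl fun h _ => hterm h, Finset.sum_const, Nat.cast_smul_eq_nsmul]

theorem exists_intertwiner_map_eq_one [DecidableEq G] [IsLocalRing S] {K : Type*} [CommRing K]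
    {π : S →+* K} (hker : RingHom.ker π = IsLocalRing.maximalIdeal S)
    (hπ : (GeneralLinearGroup.map π).comp ρ₁ = (GeneralLinearGroup.map π).comp ρ₂)
    {T : Finset G} (hT : (T.card : K) = 1) :
    ∃ X : GL n S, GeneralLinearGroup.map π X = 1 ∧
      ∀ g, T.image (g * ·) = T → ρ₂ g * X = X * ρ₁ g := by
  have hX : (intertwiningSum ρ₁ ρ₂ T).map π = 1 := by
    rw [map_intertwiningSum ρ₁ ρ₂ π hπ, hT, one_smul]
  obtain ⟨X, hXval⟩ := IsLocalRing.isUnit_matrix_of_isUnit_map hker (hX ▸ isUnit_one)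
  refine ⟨X, Units.ext (by rw [Units.val_one, ← hX, ← hXval]; rfl), fun g hg => ?_⟩
  exact Units.ext (by rw [Units.val_mul, Units.val_mul, hXval, mul_intertwiningSum _ _ hg])

end Averaging

section DiffCocycle

variable {G S n : Type*} [Group G] [CommRing S] [Fintype n] [DecidableEq n]

def diffCocycle (ρ ρ' : G →* GL n S) (g : G) : Matrix n n S :=
  (ρ' g : Matrix n n S) * (ρ g⁻¹ : Matrix n n S) - 1

variable (ρ ρ' : G →* GL n S)

theorem diffCocycle_mul (u v : G) :
    diffCocycle ρ ρ' (u * v) =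
      diffCocycle ρ ρ' u + (ρ' u : Matrix n n S) * diffCocycle ρ ρ' v * (ρ u⁻¹ : Matrix n n S) := by
  simp only [diffCocycle, _root_.mul_inv_rev, map_mul, Units.val_mul]
  noncomm_ring

theorem diffCocycle_eq_zero_iff {g : G} : diffCocycle ρ ρ' g = 0 ↔ ρ' g = ρ g := by
  rw [diffCocycle, sub_eq_zero, ← Units.val_mul, ← Units.val_one, Units.val_inj, map_inv,
    mul_inv_eq_one]

theorem diffCocycle_mul_of_eq {u v : G} (hv : ρ' v = ρ v) :
    diffCocycle ρ ρ' (u * v) = diffCocycle ρ ρ' u := by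
  rw [diffCocycle_mul, (diffCocycle_eq_zero_iff ρ ρ').2 hv, Matrix.mul_zero, Matrix.zero_mul,
    add_zero]

def diffCocycleSubmonoid (I : Ideal S) : Submonoid G where
  carrier := {g | diffCocycle ρ ρ' g ∈ I.matrix n}
  one_mem' := by
    show diffCocycle ρ ρ' 1 ∈ I.matrix n
    rw [(diffCocycle_eq_zero_iff ρ ρ').2 (by rw [map_one, map_one])]
    exact zero_mem _
  mul_mem' {u v} hu hv := by
    show diffCocycle ρ ρ' (u * v) ∈ I.matrix n
    rw [diffCocycle_mul]
    exact add_mem hu (Ideal.mul_mem_matrix_right ((I.matrix n).mul_mem_left _ hv) _)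

theorem diffCocycle_mem_matrix_pow_succ_of_mul_mul_eq_one {J : Ideal S} {k : ℕ} {x y z : G}
    (hxyz : x * y * z = 1) (hy : diffCocycle ρ ρ' y = diffCocycle ρ ρ' x)
    (hz : diffCocycle ρ ρ' z = diffCocycle ρ ρ' x)
    (hx : diffCocycle ρ ρ' x ∈ (J ^ k).matrix n)
    (hρ : ∀ g, (ρ' g : Matrix n n S) - ρ g ∈ J.matrix n)
    (hK : IsUnit (conjSumKronecker (ρ x) (ρ (x * y)))) :
    diffCocycle ρ ρ' x ∈ (J ^ (k + 1)).matrix n := by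
  set C := diffCocycle ρ ρ' x
  have hrel : C + (ρ' x : Matrix n n S) * C * (ρ x⁻¹ : Matrix n n S)
      + (ρ' (x * y) : Matrix n n S) * C * (ρ (x * y)⁻¹ : Matrix n n S) = 0 := by
    have h := diffCocycle_mul ρ ρ' (x * y) z
    rw [diffCocycle_mul ρ ρ' x y, hxyz, hy, hz, (diffCocycle_eq_zero_iff ρ ρ').2
      (by rw [map_one, map_one])] at h
    exact h.symm
  have happrox : ∀ g, (ρ' g : Matrix n n S) * C * (ρ g⁻¹ : Matrix n n S)
      - (ρ g : Matrix n n S) * C * (ρ g⁻¹ : Matrix n n S) ∈ (J ^ (k + 1)).matrix n := by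
    intro g
    rw [← Matrix.sub_mul, ← Matrix.sub_mul, pow_succ']
    exact Ideal.mul_mem_matrix_right (Ideal.mul_mem_matrix_mul (hρ g) hx) _
  have hL : C + (ρ x : Matrix n n S) * C * (ρ x⁻¹ : Matrix n n S)
      + (ρ (x * y) : Matrix n n S) * C * (ρ (x * y)⁻¹ : Matrix n n S)
      ∈ (J ^ (k + 1)).matrix n := by
    convert neg_mem (add_mem (happrox x) (happrox (x * y))) using 1
    rw [eq_neg_iff_add_eq_zero, ← hrel]
    abel
  refine Ideal.mem_matrix_of_isUnit_of_mulVec_vec_mem hK fun p => ?_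
  rw [conjSumKronecker_mulVec_vec, ← map_inv, ← map_inv]
  exact hL _ _

theorem eq_of_diffCocycle_mem_matrix_pow_succ {s : Set G} (hs : Submonoid.closure s = ⊤)
    {J : Ideal S} (hJ : IsNilpotent J)
    (hstep : ∀ k, (∀ g, diffCocycle ρ ρ' g ∈ (J ^ k).matrix n) →
      ∀ g ∈ s, diffCocycle ρ ρ' g ∈ (J ^ (k + 1)).matrix n) :
    ρ' = ρ := by
  have hmem : ∀ k g, diffCocycle ρ ρ' g ∈ (J ^ k).matrix n := by
    intro k
    induction k with
    | zero => simp
    | succ k ih =>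
      intro g
      have hle : Submonoid.closure s ≤ diffCocycleSubmonoid ρ ρ' (J ^ (k + 1)) :=
        Submonoid.closure_le.2 (hstep k ih)
      exact hle (hs ▸ Submonoid.mem_top g)
  obtain ⟨N, hN⟩ := hJ
  ext1 g
  refine (diffCocycle_eq_zero_iff ρ ρ').1 (Matrix.ext fun i j => ?_)
  simpa [hN] using hmem N g i j

end DiffCocycle

namespace SL3F2

open SpecialLinearGroup

def a : SpecialLinearGroup (Fin 3) (ZMod 2) := ⟨!![0, 0, 1; 0, 1, 1; 1, 1, 0], by decide⟩
def b : SpecialLinearGroup (Fin 3) (ZMod 2) := ⟨!![0, 0, 1; 1, 1, 1; 1, 0, 1], by decide⟩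
def t : SpecialLinearGroup (Fin 3) (ZMod 2) := ⟨!![1, 1, 0; 0, 1, 0; 0, 0, 1], by decide⟩

theorem transvection_one_mem_words {i j : Fin 3} (hij : i ≠ j) :
    transvection hij (1 : ZMod 2) ∈ ({t, a * t * b, a * b * b * t * b * t, a * b * t * a,
      b * t * b * t * a, a * b * a * b * t * a * b} : Finset _) := by
  revert i j; decide

theorem closure_a_b_t : Submonoid.closure {a, b, t} = ⊤ := by
  have ha : a ∈ Submonoid.closure {a, b, t} := Submonoid.subset_closure (by simp)
  have hb : b ∈ Submonoid.closure {a, b, t} := Submonoid.subset_closure (by simp)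
  have ht : t ∈ Submonoid.closure {a, b, t} := Submonoid.subset_closure (by simp)
  refine eq_top_iff.2 fun g _ => diagonal_transvection_induction' (· ∈ Submonoid.closure _) g
    (fun i j hij c hc => ?_) (fun i j hij c => ?_) fun _ _ => mul_mem
  · obtain rfl : c = 1 := by revert c; decide
    convert one_mem (Submonoid.closure {a, b, t})
    ext k l
    simp [diag2n_coe, diagonal_apply, one_apply]
  · obtain rfl | rfl : c = 0 ∨ c = 1 := by revert c; decide
    · rw [transvection_coeff_zero]
      exact one_mem _
    · have hword := transvection_one_mem_words hij
      simp only [Finset.mem_insert, Finset.mem_singleton] at hword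
      rcases hword with h | h | h | h | h | h <;> rw [h] <;> apply_rules [mul_mem]

def frobenius21 : Finset (SpecialLinearGroup (Fin 3) (ZMod 2)) :=
  (Finset.range 7 ×ˢ Finset.range 3).image fun p => a ^ p.1 * b ^ p.2

set_option maxRecDepth 10000 in
theorem card_frobenius21 : frobenius21.card = 21 := by decide

theorem image_mul_a_frobenius21 : frobenius21.image (a * ·) = frobenius21 := by decide

theorem image_mul_b_frobenius21 : frobenius21.image (b * ·) = frobenius21 := by decide

theorem t_mul_mul_eq_one : t * (a * b ^ 2) * (t * (a ^ 3 * b)) * (t * b ^ 2) = 1 := by decide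

set_option maxRecDepth 100000 in
theorem isUnit_conjSumKronecker :
    IsUnit (conjSumKronecker (toGL (t * (a * b ^ 2)))
      (toGL (t * (a * b ^ 2) * (t * (a ^ 3 * b))))) :=
  IsUnit.of_pow_eq_one (n := 24) (by decide) (by norm_num)

theorem eq_of_apply_a_eq_of_apply_b_eq {S : Type*} [CommRing S] [IsLocalRing S]
    {π : S →+* ZMod 2} (hker : RingHom.ker π = maximalIdeal S)
    (hnil : IsNilpotent (maximalIdeal S))
    {ρ ρ' : SpecialLinearGroup (Fin 3) (ZMod 2) →* GL (Fin 3) S}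
    (hρ : (GeneralLinearGroup.map π).comp ρ = toGL)
    (hρ' : (GeneralLinearGroup.map π).comp ρ' = toGL)
    (ha : ρ' a = ρ a) (hb : ρ' b = ρ b) : ρ' = ρ := by
  have hcongr : ∀ g, (ρ' g : Matrix (Fin 3) (Fin 3) S) - ρ g ∈ (maximalIdeal S).matrix (Fin 3) :=
    fun g => hker ▸ (RingHom.sub_mem_matrix_ker_iff π).2
      (congrArg Units.val (DFunLike.congr_fun (hρ'.trans hρ.symm) g))
  have hK : IsUnit (conjSumKronecker (ρ (t * (a * b ^ 2)))
      (ρ (t * (a * b ^ 2) * (t * (a ^ 3 * b))))) := by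
    refine IsLocalRing.isUnit_matrix_of_isUnit_map hker ?_
    rw [map_conjSumKronecker, ← MonoidHom.comp_apply, ← MonoidHom.comp_apply, hρ]
    exact isUnit_conjSumKronecker
  have htw : ∀ w, ρ' w = ρ w → diffCocycle ρ ρ' (t * w) = diffCocycle ρ ρ' t :=
    fun w => diffCocycle_mul_of_eq ρ ρ'
  refine eq_of_diffCocycle_mem_matrix_pow_succ ρ ρ' closure_a_b_t hnil fun k hk g hg => ?_
  rcases hg with rfl | rfl | rfl
  · rw [(diffCocycle_eq_zero_iff ρ ρ').2 ha]; exact zero_mem _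
  · rw [(diffCocycle_eq_zero_iff ρ ρ').2 hb]; exact zero_mem _
  · have h := diffCocycle_mem_matrix_pow_succ_of_mul_mul_eq_one ρ ρ' t_mul_mul_eq_one
      (by rw [htw _ (by simp [ha, hb]), htw _ (by simp [ha, hb])])
      (by rw [htw _ (by simp [hb]), htw _ (by simp [ha, hb])]) (hk _) hcongr hK
    rwa [htw _ (by simp [ha, hb])] at h

end SL3F2

theorem sl3_F2_lifts_strictly_equivalent_general
    {S : Type*} [CommRing S] [IsLocalRing S] [IsArtinianRing S]
    (πS : S →+* ZMod 2)
    (hkerS : RingHom.ker πS = maximalIdeal S)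
    (ρ₁ ρ₂ : SpecialLinearGroup (Fin 3) (ZMod 2) →* GL (Fin 3) S)
    (hlift₁ : ∀ (M : SpecialLinearGroup (Fin 3) (ZMod 2)) (a b : Fin 3),
      πS ((ρ₁ M : Matrix (Fin 3) (Fin 3) S) a b) = (M : Matrix (Fin 3) (Fin 3) (ZMod 2)) a b)
    (hlift₂ : ∀ (M : SpecialLinearGroup (Fin 3) (ZMod 2)) (a b : Fin 3),
      πS ((ρ₂ M : Matrix (Fin 3) (Fin 3) S) a b) = (M : Matrix (Fin 3) (Fin 3) (ZMod 2)) a b) :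
    ∃ X : GL (Fin 3) S,
      (∀ a b, (X : Matrix (Fin 3) (Fin 3) S) a b - (1 : Matrix (Fin 3) (Fin 3) S) a b ∈
        maximalIdeal S) ∧
      ∀ M : SpecialLinearGroup (Fin 3) (ZMod 2), ρ₂ M = X * ρ₁ M * X⁻¹ := by
  have h₁ : (GeneralLinearGroup.map πS).comp ρ₁ = SpecialLinearGroup.toGL :=
    MonoidHom.ext fun M => Units.ext (Matrix.ext (hlift₁ M))
  have h₂ : (GeneralLinearGroup.map πS).comp ρ₂ = SpecialLinearGroup.toGL :=
    MonoidHom.ext fun M => Units.ext (Matrix.ext (hlift₂ M))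
  obtain ⟨X, hXπ, hX⟩ := exists_intertwiner_map_eq_one ρ₁ ρ₂ hkerS (h₁.trans h₂.symm)
    (T := SL3F2.frobenius21) (by rw [SL3F2.card_frobenius21]; decide)
  have hconj : ∀ g, ρ₂ g * X = X * ρ₁ g → X⁻¹ * ρ₂ g * X = ρ₁ g := fun g hg => by
    rw [mul_assoc, hg, inv_mul_cancel_left]
  have hρ' : (MulAut.conj X⁻¹).toMonoidHom.comp ρ₂ = ρ₁ := by
    refine SL3F2.eq_of_apply_a_eq_of_apply_b_eq hkerS
      ((isArtinianRing_iff_isNilpotent_maximalIdeal S).1 inferInstance) h₁ ?_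
      (by simpa using hconj _ (hX _ SL3F2.image_mul_a_frobenius21))
      (by simpa using hconj _ (hX _ SL3F2.image_mul_b_frobenius21))
    ext1 g
    simp [hXπ, ← h₂]
  refine ⟨X, fun i j => ?_, fun M => ?_⟩
  · rw [← Matrix.sub_apply, ← hkerS]
    refine (RingHom.sub_mem_matrix_ker_iff πS).2 ?_ i j
    rw [Matrix.map_one _ πS.map_zero πS.map_one]
    exact congrArg Units.val hXπ
  · have hM : X⁻¹ * ρ₂ M * X = ρ₁ M := by simpa using DFunLike.congr_fun hρ' M
    rw [← hM]
    group

/-- Any two lifts of the natural representation of `SL_3(F₂)` to an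
Artinian local ring `S` with residue field `F₂` are strictly equivalent, i.e. conjugate
by a matrix `≡ I mod m_S`. -/
theorem sl3_F2_lifts_strictly_equivalent
    {S : Type*} [CommRing S] [IsLocalRing S] [IsArtinianRing S]
    (πS : S →+* ZMod 2) (hπS : Function.Surjective πS)
    (hkerS : RingHom.ker πS = maximalIdeal S)
    (ρ₁ ρ₂ : SpecialLinearGroup (Fin 3) (ZMod 2) →* GL (Fin 3) S)
    (hlift₁ : ∀ (M : SpecialLinearGroup (Fin 3) (ZMod 2)) (a b : Fin 3),
      πS ((ρ₁ M : Matrix (Fin 3) (Fin 3) S) a b) = (M : Matrix (Fin 3) (Fin 3) (ZMod 2)) a b)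
    (hlift₂ : ∀ (M : SpecialLinearGroup (Fin 3) (ZMod 2)) (a b : Fin 3),
      πS ((ρ₂ M : Matrix (Fin 3) (Fin 3) S) a b) = (M : Matrix (Fin 3) (Fin 3) (ZMod 2)) a b) :
    ∃ X : GL (Fin 3) S,
      (∀ a b, (X : Matrix (Fin 3) (Fin 3) S) a b - (1 : Matrix (Fin 3) (Fin 3) S) a b ∈
        maximalIdeal S) ∧
      ∀ M : SpecialLinearGroup (Fin 3) (ZMod 2), ρ₂ M = X * ρ₁ M * X⁻¹ :=
  sl3_F2_lifts_strictly_equivalent_general πS hkerS ρ₁ ρ₂ hlift₁ hlift₂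
end

section
/- Let S be an Artinian local commutative ring with residue field F₂, with reduction π_S : S → F₂ (a surjective ring homomorphism whose kernel is the maximal ideal m_S). Let ρ₁, ρ₂ : SL_2(F₂) → GL_2(S) be two group homomorphisms such that π_S(ρ_i(M)(a,b)) = M(a,b) for i = 1,2, all M ∈ SL_2(F₂) and all indices a,b. Then there exists X ∈ GL_2(S) with X ≡ I mod m_S such that ρ₂(M) = X · ρ₁(M) · X⁻¹ for all M ∈ SL_2(F₂). -/
/-!
Averaging `E₀₀ = single 0 0 1` against the two lifts, `X = ∑_g ρ₂(g) E₀₀ ρ₁(g)⁻¹`, gives a matrix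
with `ρ₂(h) X = X ρ₁(h)` for all `h`. Its reduction is `∑_g g E₀₀ g⁻¹` over `SL₂(F₂)`: these six
conjugates are the projections of `F₂²` onto a line along another line, and they sum to the
identity. So `X ≡ 1` modulo the maximal ideal, hence `X` is invertible over the local ring `S`.
-/

open Matrix IsLocalRing

section TwistedAverage

variable {G R : Type*} [Group G] [Fintype G] [Semiring R]

def twistedAverage (ρ₁ ρ₂ : G →* Rˣ) (e : R) : R :=
  ∑ g, (ρ₂ g : R) * e * (ρ₁ g⁻¹ : R)

theorem units_mul_twistedAverage (ρ₁ ρ₂ : G →* Rˣ) (e : R) (h : G) :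
    (ρ₂ h : R) * twistedAverage ρ₁ ρ₂ e = twistedAverage ρ₁ ρ₂ e * ρ₁ h := by
  rw [twistedAverage, Finset.mul_sum, Finset.sum_mul]
  refine Fintype.sum_equiv (Equiv.mulLeft h) _ _ fun g ↦ ?_
  simp [mul_assoc]

theorem map_twistedAverage {R' : Type*} [Semiring R'] (f : R →+* R') (ρ₁ ρ₂ : G →* Rˣ) (e : R) :
    f (twistedAverage ρ₁ ρ₂ e) =
      twistedAverage ((Units.map f.toMonoidHom).comp ρ₁) ((Units.map f.toMonoidHom).comp ρ₂)
        (f e) := by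
  simp [twistedAverage]

end TwistedAverage

theorem twistedAverage_toGL_single_zero_zero :
    twistedAverage SpecialLinearGroup.toGL SpecialLinearGroup.toGL
      (single 0 0 1 : Matrix (Fin 2) (Fin 2) (ZMod 2)) = 1 := by
  unfold twistedAverage
  simp only [SpecialLinearGroup.coe_GL_coe_matrix]
  decide

theorem Matrix.isUnit_of_isUnit_mapMatrix {n S T : Type*} [Fintype n] [DecidableEq n]
    [CommRing S] [IsLocalRing S] [CommRing T] [Nontrivial T] (f : S →+* T)
    (hf : maximalIdeal S ≤ RingHom.ker f) {X : Matrix n n S} (hX : IsUnit (f.mapMatrix X)) :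
    IsUnit X := by
  rw [isUnit_iff_isUnit_det] at hX ⊢
  rw [← RingHom.map_det] at hX
  by_contra hdet
  exact hX.ne_zero (hf hdet)

theorem sl2_F2_lifts_strictly_equivalent_general
    {S : Type*} [CommRing S] [IsLocalRing S]
    (πS : S →+* ZMod 2)
    (hkerS : RingHom.ker πS = maximalIdeal S)
    (ρ₁ ρ₂ : SpecialLinearGroup (Fin 2) (ZMod 2) →* GL (Fin 2) S)
    (hlift₁ : ∀ (M : SpecialLinearGroup (Fin 2) (ZMod 2)) (a b : Fin 2),
      πS ((ρ₁ M : Matrix (Fin 2) (Fin 2) S) a b) = (M : Matrix (Fin 2) (Fin 2) (ZMod 2)) a b)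
    (hlift₂ : ∀ (M : SpecialLinearGroup (Fin 2) (ZMod 2)) (a b : Fin 2),
      πS ((ρ₂ M : Matrix (Fin 2) (Fin 2) S) a b) = (M : Matrix (Fin 2) (Fin 2) (ZMod 2)) a b) :
    ∃ X : GL (Fin 2) S,
      (∀ a b, (X : Matrix (Fin 2) (Fin 2) S) a b - (1 : Matrix (Fin 2) (Fin 2) S) a b ∈
        maximalIdeal S) ∧
      ∀ M : SpecialLinearGroup (Fin 2) (ZMod 2), ρ₂ M = X * ρ₁ M * X⁻¹ := by
  set X := twistedAverage ρ₁ ρ₂ (single 0 0 1)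
  have hred : πS.mapMatrix X = 1 := by
    have reduce (ρ : SpecialLinearGroup (Fin 2) (ZMod 2) →* GL (Fin 2) S)
        (hlift : ∀ M a b, πS ((ρ M : Matrix (Fin 2) (Fin 2) S) a b) = M a b) :
        (Units.map πS.mapMatrix.toMonoidHom).comp ρ = SpecialLinearGroup.toGL := by
      ext M a b
      exact hlift M a b
    rw [map_twistedAverage, reduce ρ₁ hlift₁, reduce ρ₂ hlift₂, RingHom.mapMatrix_apply,
      Matrix.map_single, map_one]
    exact twistedAverage_toGL_single_zero_zero
  have hX : IsUnit X := isUnit_of_isUnit_mapMatrix πS hkerS.ge (hred ▸ isUnit_one)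
  refine ⟨hX.unit, fun a b ↦ ?_, fun M ↦ ?_⟩
  · rw [← hkerS, RingHom.mem_ker, map_sub, IsUnit.unit_spec]
    have hab : πS (X a b) = (1 : Matrix (Fin 2) (Fin 2) (ZMod 2)) a b := congr_fun₂ hred a b
    rw [hab, ← map_apply (f := πS), Matrix.map_one _ πS.map_zero πS.map_one, sub_self]
  · rw [eq_mul_inv_iff_mul_eq]
    exact Units.ext (units_mul_twistedAverage ρ₁ ρ₂ _ M)

/-- Any two lifts of the natural representation of `SL_2(F₂)` to an
Artinian local ring `S` with residue field `F₂` are strictly equivalent, i.e. conjugate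
by a matrix `≡ I mod m_S`. -/
theorem sl2_F2_lifts_strictly_equivalent
    {S : Type*} [CommRing S] [IsLocalRing S] [IsArtinianRing S]
    (πS : S →+* ZMod 2) (hπS : Function.Surjective πS)
    (hkerS : RingHom.ker πS = maximalIdeal S)
    (ρ₁ ρ₂ : SpecialLinearGroup (Fin 2) (ZMod 2) →* GL (Fin 2) S)
    (hlift₁ : ∀ (M : SpecialLinearGroup (Fin 2) (ZMod 2)) (a b : Fin 2),
      πS ((ρ₁ M : Matrix (Fin 2) (Fin 2) S) a b) = (M : Matrix (Fin 2) (Fin 2) (ZMod 2)) a b)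
    (hlift₂ : ∀ (M : SpecialLinearGroup (Fin 2) (ZMod 2)) (a b : Fin 2),
      πS ((ρ₂ M : Matrix (Fin 2) (Fin 2) S) a b) = (M : Matrix (Fin 2) (Fin 2) (ZMod 2)) a b) :
    ∃ X : GL (Fin 2) S,
      (∀ a b, (X : Matrix (Fin 2) (Fin 2) S) a b - (1 : Matrix (Fin 2) (Fin 2) S) a b ∈
        maximalIdeal S) ∧
      ∀ M : SpecialLinearGroup (Fin 2) (ZMod 2), ρ₂ M = X * ρ₁ M * X⁻¹ :=
  sl2_F2_lifts_strictly_equivalent_general πS hkerS ρ₁ ρ₂ hlift₁ hlift₂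
end

section
/- Let k be a finite field with q elements, let R be a complete Noetherian local commutative ring with residue field k (reduction π_R : R → k), and let S be a complete Noetherian local commutative ring with residue field k (reduction π_S : S → k, maximal ideal m_S). Let ρ : SL_2(R) → GL_2(S) be a group homomorphism with π_S(ρ(A)(i,j)) = π_R(A(i,j)) for all A ∈ SL_2(R) and all i,j. Then there exists Y ∈ GL_2(S) with Y ≡ I mod m_S such that for every a ∈ R with a^{q−1} = 1 there exists b ∈ S with b^{q−1} = 1 and π_S(b) = π_R(a) such that Y · ρ(diag(a, a⁻¹)) · Y⁻¹ = diag(b, b⁻¹). -/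
/-!
The Teichmüller units of `R` (the `a` with `a ^ (q - 1) = 1`) inject into `kˣ`, because a unit
congruent to `1` whose order is prime to the residue characteristic equals `1`; so they form a
cyclic group, and it suffices to diagonalize `X = ρ(diag(a₀, a₀⁻¹))` for a generator `a₀`.
Since `X ^ (q - 1) = 1` and `q - 1` is invertible in `S`, Hensel's lemma lifts the eigenvalue
`π_R(a₀)` to a root of unity `b ∈ S`, and the averaging operators `(q - 1)⁻¹ ∑ᵢ (b^{∓1} X)ⁱ`
project onto the eigenlines of `X`. They reduce to the identity modulo `m_S`, so their columns
give `Z ≡ 1` with `X Z = Z diag(b, b⁻¹)`, and `Y = Z⁻¹` diagonalizes every power of `X`.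
-/

open Matrix IsLocalRing

section LocalHom

variable {S k : Type*} [CommRing S] [Field k]

theorem isLocalHom_iff_ker_eq_maximalIdeal [IsLocalRing S] (π : S →+* k) :
    IsLocalHom π ↔ RingHom.ker π = maximalIdeal S := by
  refine ⟨fun _ => ?_, fun h => ⟨fun a ha => ?_⟩⟩
  · rw [← maximalIdeal_comap π, maximalIdeal_eq_bot]
    rfl
  · by_contra hna
    exact ha.ne_zero (by rwa [← RingHom.mem_ker, h, mem_maximalIdeal])

theorem eq_one_of_pow_eq_one_of_map_eq_one (π : S →+* k) [IsLocalHom π] {m : ℕ}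
    (hm : (m : k) ≠ 0) {x : S} (hx : π x = 1) (hxm : x ^ m = 1) : x = 1 := by
  have hsum : IsUnit (∑ i ∈ Finset.range m, x ^ i) :=
    isUnit_of_map_unit π _ (by simpa [hx] using hm.isUnit)
  rw [← sub_eq_zero, ← hsum.mul_right_eq_zero, geom_sum_mul, hxm, sub_self]

theorem isCyclic_rootsOfUnity_of_isLocalHom (π : S →+* k) [IsLocalHom π] {m : ℕ}
    (hm : (m : k) ≠ 0) : IsCyclic (rootsOfUnity m S) :=
  have : NeZero m := ⟨by rintro rfl; simp at hm⟩
  isCyclic_of_injective (restrictRootsOfUnity π m) <| (injective_iff_map_eq_one _).mpr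
    fun ζ hζ => Subtype.ext <| Units.ext <| eq_one_of_pow_eq_one_of_map_eq_one π hm
      (by simpa using congr_arg (fun z : rootsOfUnity m k => ((z : kˣ) : k)) hζ)
      (by simpa using congr_arg Units.val ((mem_rootsOfUnity m _).mp ζ.2))

open Polynomial in
theorem exists_rootsOfUnity_map_eq [IsLocalRing S] [HenselianRing S (maximalIdeal S)]
    (π : S →+* k) [IsLocalHom π] {m : ℕ} (hm : (m : k) ≠ 0) {s : S} (hs : π s ^ m = 1) :
    ∃ b : rootsOfUnity m S, π (b : Sˣ) = π s := by
  have hm0 : m ≠ 0 := by rintro rfl; simp at hm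
  have hs0 : π s ≠ 0 := by rintro h; simp [h, zero_pow hm0] at hs
  have hker := (isLocalHom_iff_ker_eq_maximalIdeal π).mp inferInstance
  obtain ⟨b, hroot, hbs⟩ := HenselianRing.is_henselian (I := maximalIdeal S) (X ^ m - C 1)
    (monic_X_pow_sub_C 1 hm0) s
    (by rw [← hker, RingHom.mem_ker]; simp [hs])
    ((isUnit_of_map_unit π _ (by simp [derivative_X_pow, hm, hs0])).map _)
  have hbm : b ^ m = 1 := by simpa [sub_eq_zero] using hroot
  refine ⟨⟨Units.ofPowEqOne b m hbm hm0, (mem_rootsOfUnity _ _).mpr (Units.pow_ofPowEqOne _ _)⟩,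
    ?_⟩
  rw [← hker, RingHom.mem_ker, map_sub, sub_eq_zero] at hbs
  exact hbs

end LocalHom

theorem mul_geom_sum_eq_self_of_pow_eq_one {R : Type*} [Ring R] {y : R} {m : ℕ} (h : y ^ m = 1) :
    y * ∑ i ∈ Finset.range m, y ^ i = ∑ i ∈ Finset.range m, y ^ i := by
  rw [← sub_eq_zero, ← sub_one_mul, mul_geom_sum, h, sub_self]

section Diagonalization

variable {S k n : Type*} [CommRing S] [Field k] [Fintype n] [DecidableEq n]
  (π : S →+* k) {m : ℕ}

theorem map_geom_sum_smul_of_map_eq_diagonal {X : Matrix n n S} {α : n → k}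
    (hX : X.map π = diagonal α) (c : S) :
    (∑ i ∈ Finset.range m, (c • X) ^ i).map π =
      diagonal fun r => ∑ i ∈ Finset.range m, (π c * α r) ^ i := by
  rw [← RingHom.mapMatrix_apply, map_sum]
  simp_rw [map_pow, RingHom.mapMatrix_apply, map_smul' _ _ _ (map_mul π), hX, ← diagonal_smul,
    diagonal_pow, ← diagonalAddMonoidHom_apply, ← map_sum]
  congr 1
  ext r
  simp [Finset.sum_apply]

theorem exists_conj_eq_diagonal [IsLocalHom π] (hm : (m : k) ≠ 0) {X : Matrix n n S}
    (hX : X ^ m = 1) (d : n → Sˣ) (hd : ∀ j, d j ^ m = 1)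
    (hXd : X.map π = diagonal fun j => π (d j)) :
    ∃ Y : GL n S, (Y : Matrix n n S).map π = 1 ∧
      (Y : Matrix n n S) * X * ((Y⁻¹ : GL n S) : Matrix n n S) = diagonal fun j => (d j : S) := by
  obtain ⟨u, hu⟩ : IsUnit (m : S) := isUnit_of_map_unit π _ (by simpa using hm.isUnit)
  -- `m⁻¹ • P j` is the projector onto the `d j`-eigenspace of `X`; it gives column `j` of `Z`.
  set P : n → Matrix n n S := fun j => ∑ i ∈ Finset.range m, ((↑(d j)⁻¹ : S) • X) ^ i with hP
  have hXP : ∀ j, X * P j = (d j : S) • P j := by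
    intro j
    have h1 : ((↑(d j)⁻¹ : S) • X) ^ m = 1 := by
      rw [smul_pow, hX, ← Units.val_pow_eq_pow_val, inv_pow, hd, inv_one, Units.val_one, one_smul]
    calc X * P j = (d j : S) • (((↑(d j)⁻¹ : S) • X) * P j) := by
          rw [smul_mul_assoc, smul_smul, Units.mul_inv, one_smul]
      _ = (d j : S) • P j := by rw [mul_geom_sum_eq_self_of_pow_eq_one h1]
  have hPmap : ∀ r j, π (P j r j) = m * (1 : Matrix n n k) r j := by
    intro r j
    have := congr_fun₂ (map_geom_sum_smul_of_map_eq_diagonal π (m := m) hXd (↑(d j)⁻¹ : S)) r j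
    simp only [map_apply] at this
    rw [hP, this, diagonal_apply, one_apply]
    split_ifs with hrj
    · subst hrj; simp [inv_mul_cancel₀ ((d r).isUnit.map π).ne_zero]
    · simp
  set Z : Matrix n n S := of fun r j => (↑u⁻¹ : S) * P j r j
  have hXZ : X * Z = Z * diagonal fun j => (d j : S) := by
    ext r j
    rw [mul_diagonal, mul_apply]
    simp only [Z, of_apply, mul_left_comm _ (↑u⁻¹ : S), ← Finset.mul_sum, ← mul_apply, hXP,
      Matrix.smul_apply, smul_eq_mul]
    ring
  have hZmap : Z.map π = 1 := by
    ext r j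
    simp [Z, hPmap, map_units_inv, hu, inv_mul_cancel_left₀ hm]
  have hZ : IsUnit Z := (isUnit_iff_isUnit_det Z).mpr <| isUnit_of_map_unit π _ <| by
    rw [RingHom.map_det, RingHom.mapMatrix_apply, hZmap, det_one]
    exact isUnit_one
  refine ⟨hZ.unit⁻¹, ?_, ?_⟩
  · have := congr_arg π.mapMatrix hZ.unit.inv_mul
    rwa [map_mul, map_one, IsUnit.unit_spec, RingHom.mapMatrix_apply, RingHom.mapMatrix_apply,
      hZmap, mul_one] at this
  · rw [inv_inv, IsUnit.unit_spec, mul_assoc, hXZ, ← mul_assoc, Units.inv_mul_of_eq hZ.unit_spec,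
      one_mul]

end Diagonalization

namespace Matrix.SpecialLinearGroup

variable (R : Type*) [CommRing R]

def diagUnits : Rˣ →* SpecialLinearGroup (Fin 2) R where
  toFun a := ⟨diagonal ![(a : R), ((a⁻¹ : Rˣ) : R)], by simp⟩
  map_one' := by ext i j; fin_cases i <;> fin_cases j <;> simp
  map_mul' a b := by
    refine Subtype.ext ?_
    change diagonal _ = diagonal _ * diagonal _
    rw [diagonal_mul_diagonal]
    congr 1
    ext i
    fin_cases i <;> simp [mul_comm]

theorem coe_diagUnits (a : Rˣ) :
    (diagUnits R a : Matrix (Fin 2) (Fin 2) R) = diagonal ![(a : R), ((a⁻¹ : Rˣ) : R)] := rfl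

end Matrix.SpecialLinearGroup

open Matrix.SpecialLinearGroup

theorem Matrix.sub_one_mem_maximalIdeal_of_map_eq_one {S k n : Type*} [CommRing S]
    [IsLocalRing S] [Field k] [Fintype n] [DecidableEq n] (π : S →+* k) [IsLocalHom π]
    {M : Matrix n n S} (h : M.map π = 1) (i j : n) :
    M i j - (1 : Matrix n n S) i j ∈ maximalIdeal S := by
  rw [← (isLocalHom_iff_ker_eq_maximalIdeal π).mp inferInstance, RingHom.mem_ker, map_sub,
    ← map_apply (f := π), h, one_apply, one_apply]
  split_ifs <;> simp

theorem exists_conj_eq_diagUnits {S k : Type*} [CommRing S] [IsLocalRing S]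
    [HenselianRing S (maximalIdeal S)] [Field k] (π : S →+* k) [IsLocalHom π] {m : ℕ}
    (hm : (m : k) ≠ 0) {X : GL (Fin 2) S} (hXm : X ^ m = 1) {a : kˣ}
    (hXa : (X : Matrix (Fin 2) (Fin 2) S).map π = diagUnits k a) :
    ∃ Y : GL (Fin 2) S, (Y : Matrix (Fin 2) (Fin 2) S).map π = 1 ∧
      ∃ b : rootsOfUnity m S, Units.map π (b : Sˣ) = a ∧
        MulAut.conj Y X = toGL (diagUnits S (b : Sˣ)) := by
  have hX00 : π ((X : Matrix (Fin 2) (Fin 2) S) 0 0) = a := by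
    simpa [coe_diagUnits] using congr_fun₂ hXa 0 0
  have ham : (a : k) ^ m = 1 := by
    have h1 : π.mapMatrix ((X : Matrix (Fin 2) (Fin 2) S) ^ m) = 1 := by
      rw [← Units.val_pow_eq_pow_val, hXm, Units.val_one, map_one]
    rw [map_pow, RingHom.mapMatrix_apply, hXa, coe_diagUnits, diagonal_pow] at h1
    simpa using congr_fun₂ h1 0 0
  obtain ⟨b, hb⟩ := exists_rootsOfUnity_map_eq π hm (hX00 ▸ ham)
  rw [hX00] at hb
  obtain ⟨Y, hY1, hYX⟩ := exists_conj_eq_diagonal π hm (congr_arg Units.val hXm)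
    ![(b : Sˣ), (b : Sˣ)⁻¹] (fun j => by fin_cases j <;> simp [(mem_rootsOfUnity m _).mp b.2])
    (by rw [hXa, coe_diagUnits]; congr 1; ext j; fin_cases j <;> simp [hb, map_units_inv])
  refine ⟨Y, hY1, b, Units.ext hb, Units.ext ?_⟩
  rw [MulAut.conj_apply, Units.val_mul, Units.val_mul, hYX]
  congr 1; ext j; fin_cases j <;> rfl

theorem sl2_lift_diagonalizes_teichmuller_general
    {k : Type*} [Field k] [Fintype k]
    {R : Type*} [CommRing R] [IsLocalRing R]
    {S : Type*} [CommRing S] [IsLocalRing S]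
    [IsAdicComplete (maximalIdeal S) S]
    (πR : R →+* k)
    (hkerR : RingHom.ker πR = maximalIdeal R)
    (πS : S →+* k)
    (hkerS : RingHom.ker πS = maximalIdeal S)
    (ρ : SpecialLinearGroup (Fin 2) R →* GL (Fin 2) S)
    (hlift : ∀ (A : SpecialLinearGroup (Fin 2) R) (i j : Fin 2),
      πS ((ρ A : Matrix (Fin 2) (Fin 2) S) i j) = πR ((A : Matrix (Fin 2) (Fin 2) R) i j)) :
    ∃ Y : GL (Fin 2) S,
      (∀ i j, (Y : Matrix (Fin 2) (Fin 2) S) i j - (1 : Matrix (Fin 2) (Fin 2) S) i j ∈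
        maximalIdeal S) ∧
      ∀ a : Rˣ, (a : R) ^ (Fintype.card k - 1) = 1 →
        ∀ A : SpecialLinearGroup (Fin 2) R,
          (A : Matrix (Fin 2) (Fin 2) R) = Matrix.diagonal ![(a : R), ((a⁻¹ : Rˣ) : R)] →
          ∃ b : Sˣ, (b : S) ^ (Fintype.card k - 1) = 1 ∧ πS (b : S) = πR (a : R) ∧
            (Y : Matrix (Fin 2) (Fin 2) S) * (ρ A : Matrix (Fin 2) (Fin 2) S) *
                ((Y⁻¹ : GL (Fin 2) S) : Matrix (Fin 2) (Fin 2) S) =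
              Matrix.diagonal ![(b : S), ((b⁻¹ : Sˣ) : S)] := by
  set m := Fintype.card k - 1
  have hm : (m : k) ≠ 0 := by simp [m, Nat.cast_sub Fintype.card_pos]
  have := (isLocalHom_iff_ker_eq_maximalIdeal πR).mpr hkerR
  have := (isLocalHom_iff_ker_eq_maximalIdeal πS).mpr hkerS
  have := isCyclic_rootsOfUnity_of_isLocalHom πR hm
  obtain ⟨g, hg⟩ := IsCyclic.exists_generator (α := rootsOfUnity m R)
  have hXm : ρ (diagUnits R g) ^ m = 1 := by
    rw [← map_pow, ← map_pow, (mem_rootsOfUnity m _).mp g.2, map_one, map_one]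
  have hXa : (ρ (diagUnits R g) : Matrix (Fin 2) (Fin 2) S).map πS =
      diagUnits k (Units.map πR (g : Rˣ)) := by
    ext i j
    fin_cases i <;> fin_cases j <;> simp [hlift, coe_diagUnits, map_units_inv]
  obtain ⟨Y, hY1, b, hbg, hYX⟩ := exists_conj_eq_diagUnits πS hm hXm hXa
  refine ⟨Y, sub_one_mem_maximalIdeal_of_map_eq_one πS hY1, fun a ha A hA => ?_⟩
  obtain ⟨n, hgn⟩ : ∃ n : ℤ, (g : Rˣ) ^ n = a := by
    obtain ⟨n, hn⟩ := Subgroup.mem_zpowers_iff.mp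
      (hg ⟨a, (mem_rootsOfUnity m a).mpr (Units.ext (by simpa using ha))⟩)
    exact ⟨n, congr_arg Subtype.val hn⟩
  obtain rfl : A = diagUnits R a := Subtype.ext hA
  refine ⟨(b : Sˣ) ^ n, ?_, ?_, ?_⟩
  · simpa using congr_arg Units.val ((mem_rootsOfUnity m _).mp (b ^ n).2)
  · exact congr_arg Units.val (by rw [← hgn, map_zpow, map_zpow, hbg] :
      Units.map (πS : S →* k) ((b : Sˣ) ^ n) = Units.map (πR : R →* k) a)
  · exact congr_arg Units.val (by rw [← hgn, map_zpow, map_zpow, map_zpow, hYX, ← map_zpow,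
      ← map_zpow] : MulAut.conj Y (ρ (diagUnits R a)) = toGL (diagUnits S ((b : Sˣ) ^ n)))

/-- For a lift `ρ : SL_2(R) → GL_2(S)` of the natural representation,
there is `Y ≡ I mod m_S` such that for every Teichmüller element `a ∈ R`
(`a^{q−1} = 1`, `q = #k`), the conjugate `Y ρ(diag(a,a⁻¹)) Y⁻¹` equals `diag(b,b⁻¹)`
for the Teichmüller counterpart `b ∈ S` (`b^{q−1} = 1`, `π_S(b) = π_R(a)`). -/
theorem sl2_lift_diagonalizes_teichmuller
    {k : Type*} [Field k] [Fintype k]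
    {R : Type*} [CommRing R] [IsLocalRing R] [IsNoetherianRing R]
    [IsAdicComplete (maximalIdeal R) R]
    {S : Type*} [CommRing S] [IsLocalRing S] [IsNoetherianRing S]
    [IsAdicComplete (maximalIdeal S) S]
    (πR : R →+* k) (hπR : Function.Surjective πR)
    (hkerR : RingHom.ker πR = maximalIdeal R)
    (πS : S →+* k) (hπS : Function.Surjective πS)
    (hkerS : RingHom.ker πS = maximalIdeal S)
    (ρ : SpecialLinearGroup (Fin 2) R →* GL (Fin 2) S)
    (hlift : ∀ (A : SpecialLinearGroup (Fin 2) R) (i j : Fin 2),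
      πS ((ρ A : Matrix (Fin 2) (Fin 2) S) i j) = πR ((A : Matrix (Fin 2) (Fin 2) R) i j)) :
    ∃ Y : GL (Fin 2) S,
      (∀ i j, (Y : Matrix (Fin 2) (Fin 2) S) i j - (1 : Matrix (Fin 2) (Fin 2) S) i j ∈
        maximalIdeal S) ∧
      ∀ a : Rˣ, (a : R) ^ (Fintype.card k - 1) = 1 →
        ∀ A : SpecialLinearGroup (Fin 2) R,
          (A : Matrix (Fin 2) (Fin 2) R) = Matrix.diagonal ![(a : R), ((a⁻¹ : Rˣ) : R)] →
          ∃ b : Sˣ, (b : S) ^ (Fintype.card k - 1) = 1 ∧ πS (b : S) = πR (a : R) ∧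
            (Y : Matrix (Fin 2) (Fin 2) S) * (ρ A : Matrix (Fin 2) (Fin 2) S) *
                ((Y⁻¹ : GL (Fin 2) S) : Matrix (Fin 2) (Fin 2) S) =
              Matrix.diagonal ![(b : S), ((b⁻¹ : Sˣ) : S)] :=
  sl2_lift_diagonalizes_teichmuller_general πR hkerR πS hkerS ρ hlift
end
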